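/- arXiv:1911.08272 — 8 statements merged into one kernel-verified Lean document; each statement's English description precedes it below -/
import Mathlib

section
/- Let t = (t_0,...,t_k) ∈ [0,1]^{k+1} with Σ_j t_j = 1/k and n·t_j ∈ ℤ for all j; set p = Σ_j j·t_j, and let χ : [n] → {0,1} satisfy |χ^{-1}(1)| = p·n. Then the number of k-partitions π of [n] such that for all j the number of blocks P ∈ π with |P ∩ χ^{-1}(1)| = j equals n·t_j is exactly (pn)!·((1-p)n)! / ∏_{j=0}^{k} (j!^{t_j n} · (k-j)!^{t_j n} · (t_j n)!). -/
open Finset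

namespace Stmt2Aux

lemma double_count {α β : Type*} [Fintype α] [DecidableEq β]
    (S : Finset β) (Φ : α → β) (D : ℕ)
    (hmem : ∀ a, Φ a ∈ S)
    (hfib : ∀ b ∈ S, (Finset.univ.filter fun a => Φ a = b).card = D) :
    S.card * D = Fintype.card α := by
  classical
  rw [← Finset.card_univ, Finset.card_eq_sum_card_fiberwise (fun a _ => hmem a)]
  rw [Finset.sum_congr rfl hfib, Finset.sum_const, smul_eq_mul]

variable (n k : ℕ) (m : Fin (k+1) → ℕ) (χ : Fin n → Fin 2)

abbrev A : Finset (Fin n) := Finset.univ.filter fun v => χ v = 1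
abbrev IA := Σ j : Fin (k+1), Fin (m j) × Fin (j : ℕ)
abbrev IB := Σ j : Fin (k+1), Fin (m j) × Fin (k - (j : ℕ))
abbrev Pairs := (IA k m ↪ ↥(A n χ)) × (IB k m ↪ ↥((A n χ)ᶜ))

variable {n k m χ}

def blk (fg : Pairs n k m χ) (js : Σ j : Fin (k+1), Fin (m j)) : Finset (Fin n) :=
  (Finset.univ.image fun r : Fin (js.1 : ℕ) => ((fg.1 ⟨js.1, js.2, r⟩ : ↥(A n χ)) : Fin n)) ∪
  (Finset.univ.image fun r : Fin (k - (js.1 : ℕ)) => ((fg.2 ⟨js.1, js.2, r⟩ : ↥((A n χ)ᶜ)) : Fin n))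

def Phi (fg : Pairs n k m χ) : Finset (Finset (Fin n)) :=
  Finset.univ.image (blk fg)

lemma chi_f (fg : Pairs n k m χ) (x : IA k m) : χ (fg.1 x : Fin n) = 1 := by
  exact (Finset.mem_filter.1 (fg.1 x).2).2

lemma chi_g (fg : Pairs n k m χ) (x : IB k m) : ¬ χ (fg.2 x : Fin n) = 1 := by
  intro h
  exact (Finset.mem_compl.1 (fg.2 x).2) (Finset.mem_filter.2 ⟨Finset.mem_univ _, h⟩)

lemma blk_filter_one (fg : Pairs n k m χ) (js : Σ j : Fin (k+1), Fin (m j)) :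
    (blk fg js).filter (fun v => χ v = 1) =
      Finset.univ.image fun r : Fin (js.1 : ℕ) => ((fg.1 ⟨js.1, js.2, r⟩ : ↥(A n χ)) : Fin n) := by
  ext v
  simp only [blk, Finset.mem_filter, Finset.mem_union, Finset.mem_image, Finset.mem_univ,
    true_and]
  constructor
  · rintro ⟨h | h, hv⟩
    · exact h
    · exfalso; obtain ⟨r, rfl⟩ := h; exact chi_g fg _ hv
  · rintro ⟨r, rfl⟩
    exact ⟨Or.inl ⟨r, rfl⟩, chi_f fg _⟩

lemma blk_filter_ne (fg : Pairs n k m χ) (js : Σ j : Fin (k+1), Fin (m j)) :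
    (blk fg js).filter (fun v => ¬ χ v = 1) =
      Finset.univ.image fun r : Fin (k - (js.1 : ℕ)) => ((fg.2 ⟨js.1, js.2, r⟩ : ↥((A n χ)ᶜ)) : Fin n) := by
  ext v
  simp only [blk, Finset.mem_filter, Finset.mem_union, Finset.mem_image, Finset.mem_univ,
    true_and]
  constructor
  · rintro ⟨h | h, hv⟩
    · exfalso; obtain ⟨r, rfl⟩ := h; exact hv (chi_f fg _)
    · exact h
  · rintro ⟨r, rfl⟩
    exact ⟨Or.inr ⟨r, rfl⟩, chi_g fg _⟩

lemma inj_fpart (fg : Pairs n k m χ) (j : Fin (k+1)) (s : Fin (m j)) :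
    Function.Injective fun r : Fin (j : ℕ) => ((fg.1 ⟨j, s, r⟩ : ↥(A n χ)) : Fin n) := by
  intro a b h
  have := fg.1.injective (Subtype.ext h)
  simpa using this

lemma inj_gpart (fg : Pairs n k m χ) (j : Fin (k+1)) (s : Fin (m j)) :
    Function.Injective fun r : Fin (k - (j : ℕ)) => ((fg.2 ⟨j, s, r⟩ : ↥((A n χ)ᶜ)) : Fin n) := by
  intro a b h
  have := fg.2.injective (Subtype.ext h)
  simpa using this

lemma card_blk_filter_one (fg : Pairs n k m χ) (js : Σ j : Fin (k+1), Fin (m j)) :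
    ((blk fg js).filter (fun v => χ v = 1)).card = (js.1 : ℕ) := by
  rw [blk_filter_one, Finset.card_image_of_injective _ (inj_fpart fg js.1 js.2)]
  simp

lemma card_blk_filter_ne (fg : Pairs n k m χ) (js : Σ j : Fin (k+1), Fin (m j)) :
    ((blk fg js).filter (fun v => ¬ χ v = 1)).card = k - (js.1 : ℕ) := by
  rw [blk_filter_ne, Finset.card_image_of_injective _ (inj_gpart fg js.1 js.2)]
  simp

lemma card_blk (fg : Pairs n k m χ) (js : Σ j : Fin (k+1), Fin (m j)) :
    (blk fg js).card = k := by
  have h := Finset.card_filter_add_card_filter_not (s := blk fg js)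
    (p := fun v => χ v = 1)
  rw [card_blk_filter_one, card_blk_filter_ne] at h
  have : (js.1 : ℕ) ≤ k := Nat.lt_succ_iff.mp js.1.isLt
  omega

lemma blk_index_unique (fg : Pairs n k m χ) {js js' : Σ j : Fin (k+1), Fin (m j)}
    {v : Fin n} (h : v ∈ blk fg js) (h' : v ∈ blk fg js') : js = js' := by
  by_cases hv : χ v = 1
  · have h1 : v ∈ (blk fg js).filter (fun v => χ v = 1) := Finset.mem_filter.2 ⟨h, hv⟩
    have h2 : v ∈ (blk fg js').filter (fun v => χ v = 1) := Finset.mem_filter.2 ⟨h', hv⟩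
    rw [blk_filter_one] at h1 h2
    simp only [Finset.mem_image, Finset.mem_univ, true_and] at h1 h2
    obtain ⟨r, hr⟩ := h1
    obtain ⟨r', hr'⟩ := h2
    have := fg.1.injective (Subtype.ext (hr.trans hr'.symm))
    exact congrArg (fun x : IA k m => (⟨x.1, x.2.1⟩ : Σ j : Fin (k+1), Fin (m j))) this
  · have h1 : v ∈ (blk fg js).filter (fun v => ¬ χ v = 1) := Finset.mem_filter.2 ⟨h, hv⟩
    have h2 : v ∈ (blk fg js').filter (fun v => ¬ χ v = 1) := Finset.mem_filter.2 ⟨h', hv⟩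
    rw [blk_filter_ne] at h1 h2
    simp only [Finset.mem_image, Finset.mem_univ, true_and] at h1 h2
    obtain ⟨r, hr⟩ := h1
    obtain ⟨r', hr'⟩ := h2
    have := fg.2.injective (Subtype.ext (hr.trans hr'.symm))
    exact congrArg (fun x : IB k m => (⟨x.1, x.2.1⟩ : Σ j : Fin (k+1), Fin (m j))) this


lemma mem_blk_f (fg : Pairs n k m χ) (x : IA k m) :
    (fg.1 x : Fin n) ∈ blk fg ⟨x.1, x.2.1⟩ := by
  apply Finset.mem_union_left
  simp only [Finset.mem_image, Finset.mem_univ, true_and]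
  exact ⟨x.2.2, rfl⟩

lemma mem_blk_g (fg : Pairs n k m χ) (x : IB k m) :
    (fg.2 x : Fin n) ∈ blk fg ⟨x.1, x.2.1⟩ := by
  apply Finset.mem_union_right
  simp only [Finset.mem_image, Finset.mem_univ, true_and]
  exact ⟨x.2.2, rfl⟩

/-- cover: every vertex is in some block, assuming the cardinalities match. -/
lemma blk_cover (hIA : Fintype.card (IA k m) = (A n χ).card)
    (hIB : Fintype.card (IB k m) = ((A n χ)ᶜ).card)
    (fg : Pairs n k m χ) (v : Fin n) : ∃ js, v ∈ blk fg js := by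
  by_cases hv : χ v = 1
  · have hvA : v ∈ A n χ := Finset.mem_filter.2 ⟨Finset.mem_univ _, hv⟩
    have hbij : Function.Bijective fg.1 :=
      (Fintype.bijective_iff_injective_and_card fg.1).2
        ⟨fg.1.injective, by rw [hIA, Fintype.card_coe]⟩
    obtain ⟨x, hx⟩ := hbij.2 ⟨v, hvA⟩
    refine ⟨⟨x.1, x.2.1⟩, ?_⟩
    have hmem := mem_blk_f fg x
    rw [hx] at hmem
    exact hmem
  · have hvA : v ∈ (A n χ)ᶜ := Finset.mem_compl.2 fun hc => hv (Finset.mem_filter.1 hc).2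
    have hbij : Function.Bijective fg.2 :=
      (Fintype.bijective_iff_injective_and_card fg.2).2
        ⟨fg.2.injective, by rw [hIB, Fintype.card_coe]⟩
    obtain ⟨x, hx⟩ := hbij.2 ⟨v, hvA⟩
    refine ⟨⟨x.1, x.2.1⟩, ?_⟩
    have hmem := mem_blk_g fg x
    rw [hx] at hmem
    exact hmem

lemma blk_inj (hk : 1 ≤ k) (fg : Pairs n k m χ) : Function.Injective (blk fg) := by
  intro js js' h
  have hne : (blk fg js).Nonempty := by
    rw [← Finset.card_pos, card_blk]; omega
  obtain ⟨v, hv⟩ := hne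
  exact blk_index_unique fg hv (h ▸ hv)

lemma Phi_card (fg : Pairs n k m χ) : ∀ p ∈ Phi fg, p.card = k := by
  intro p hp
  obtain ⟨js, _, rfl⟩ := Finset.mem_image.1 hp
  exact card_blk fg js

lemma Phi_partition (hIA : Fintype.card (IA k m) = (A n χ).card)
    (hIB : Fintype.card (IB k m) = ((A n χ)ᶜ).card)
    (fg : Pairs n k m χ) (v : Fin n) : ∃! p, p ∈ Phi fg ∧ v ∈ p := by
  obtain ⟨js, hjs⟩ := blk_cover hIA hIB fg v
  refine ⟨blk fg js, ⟨Finset.mem_image.2 ⟨js, Finset.mem_univ _, rfl⟩, hjs⟩, ?_⟩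
  rintro p ⟨hp, hvp⟩
  obtain ⟨js', _, rfl⟩ := Finset.mem_image.1 hp
  rw [blk_index_unique fg hvp hjs]

lemma Phi_type (hk : 1 ≤ k) (fg : Pairs n k m χ) (j : Fin (k+1)) :
    ((Phi fg).filter fun p => (p.filter fun v => χ v = 1).card = (j : ℕ)).card = m j := by
  have heq : ((Phi fg).filter fun p => (p.filter fun v => χ v = 1).card = (j : ℕ)) =
      Finset.univ.image fun s : Fin (m j) => blk fg ⟨j, s⟩ := by
    ext p
    simp only [Finset.mem_filter, Phi, Finset.mem_image, Finset.mem_univ, true_and]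
    constructor
    · rintro ⟨⟨js, rfl⟩, hcard⟩
      have : (js.1 : ℕ) = (j : ℕ) := by rw [← card_blk_filter_one fg js]; exact hcard
      have hj : js.1 = j := Fin.val_injective this
      subst hj
      exact ⟨js.2, rfl⟩
    · rintro ⟨s, rfl⟩
      exact ⟨⟨⟨j, s⟩, rfl⟩, card_blk_filter_one fg ⟨j, s⟩⟩
  rw [heq, Finset.card_image_of_injective]
  · simp
  · intro s s' h
    have := blk_inj hk fg h
    simpa using this


lemma emb_surj {α β : Type*} [Fintype α] [Fintype β] (f : α ↪ β)
    (h : Fintype.card α = Fintype.card β) : Function.Surjective f :=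
  ((Fintype.bijective_iff_injective_and_card f).2 ⟨f.injective, h⟩).2

variable (m χ)

abbrev Bl (π : Finset (Finset (Fin n))) (j : Fin (k+1)) : Finset (Finset (Fin n)) :=
  π.filter fun p => (p.filter fun v => χ v = 1).card = (j : ℕ)

abbrev FData (π : Finset (Finset (Fin n))) : Type :=
  ∀ j : Fin (k+1),
    (Fin (m j) ↪ ↥(Bl χ π j)) ×
    (∀ P : ↥(Bl χ π j),
      (Fin (j : ℕ) ↪ ↥((P : Finset (Fin n)).filter fun v => χ v = 1)) ×
      (Fin (k - (j : ℕ)) ↪ ↥((P : Finset (Fin n)).filter fun v => ¬ χ v = 1)))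

variable {m χ}

variable {π : Finset (Finset (Fin n))}

def psiF (d : FData m χ π) (x : IA k m) : Fin n :=
  ((((d x.1).2 ((d x.1).1 x.2.1)).1 x.2.2 : ↥((((d x.1).1 x.2.1 : ↥(Bl χ π x.1)) : Finset (Fin n)).filter fun v => χ v = 1)) : Fin n)

def psiG (d : FData m χ π) (x : IB k m) : Fin n :=
  ((((d x.1).2 ((d x.1).1 x.2.1)).2 x.2.2 : ↥((((d x.1).1 x.2.1 : ↥(Bl χ π x.1)) : Finset (Fin n)).filter fun v => ¬ χ v = 1)) : Fin n)

lemma psiF_prop (d : FData m χ π) (x : IA k m) :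
    psiF d x ∈ (((d x.1).1 x.2.1 : ↥(Bl χ π x.1)) : Finset (Fin n)) ∧ χ (psiF d x) = 1 :=
  Finset.mem_filter.1 ((((d x.1).2 ((d x.1).1 x.2.1)).1 x.2.2).2)

lemma psiG_prop (d : FData m χ π) (x : IB k m) :
    psiG d x ∈ (((d x.1).1 x.2.1 : ↥(Bl χ π x.1)) : Finset (Fin n)) ∧ ¬ χ (psiG d x) = 1 :=
  Finset.mem_filter.1 ((((d x.1).2 ((d x.1).1 x.2.1)).2 x.2.2).2)

lemma psiF_mem_A (d : FData m χ π) (x : IA k m) : psiF d x ∈ A n χ :=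
  Finset.mem_filter.2 ⟨Finset.mem_univ _, (psiF_prop d x).2⟩

lemma psiG_mem_compl (d : FData m χ π) (x : IB k m) : psiG d x ∈ (A n χ)ᶜ :=
  Finset.mem_compl.2 fun hc => (psiG_prop d x).2 (Finset.mem_filter.1 hc).2

lemma Bl_mem_pi {p : Finset (Fin n)} {j : Fin (k+1)} (h : p ∈ Bl χ π j) : p ∈ π :=
  (Finset.mem_filter.1 h).1

lemma Bl_card {p : Finset (Fin n)} {j : Fin (k+1)} (h : p ∈ Bl χ π j) :
    (p.filter fun v => χ v = 1).card = (j : ℕ) :=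
  (Finset.mem_filter.1 h).2

lemma psiF_inj (h2 : ∀ v : Fin n, ∃! p, p ∈ π ∧ v ∈ p) (d : FData m χ π) :
    Function.Injective (psiF d) := by
  rintro ⟨j, s, r⟩ ⟨j', s', r'⟩ h
  have hp1 := psiF_prop d ⟨j, s, r⟩
  have hp2 := psiF_prop d ⟨j', s', r'⟩
  obtain ⟨p0, _, hu⟩ := h2 (psiF d ⟨j, s, r⟩)
  have hPP' : (((d j).1 s : ↥(Bl χ π j)) : Finset (Fin n)) =
      (((d j').1 s' : ↥(Bl χ π j')) : Finset (Fin n)) := by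
    rw [hu _ ⟨Bl_mem_pi ((d j).1 s).2, hp1.1⟩,
        hu _ ⟨Bl_mem_pi ((d j').1 s').2, by rw [h]; exact hp2.1⟩]
  have hjj : j = j' := by
    apply Fin.val_injective
    rw [← Bl_card ((d j).1 s).2, ← Bl_card ((d j').1 s').2, hPP']
  subst hjj
  have hss : s = s' := (d j).1.injective (Subtype.ext hPP')
  subst hss
  have hrr : r = r' := ((d j).2 ((d j).1 s)).1.injective (Subtype.ext h)
  subst hrr
  rfl

lemma psiG_inj (h2 : ∀ v : Fin n, ∃! p, p ∈ π ∧ v ∈ p) (d : FData m χ π) :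
    Function.Injective (psiG d) := by
  rintro ⟨j, s, r⟩ ⟨j', s', r'⟩ h
  have hp1 := psiG_prop d ⟨j, s, r⟩
  have hp2 := psiG_prop d ⟨j', s', r'⟩
  obtain ⟨p0, _, hu⟩ := h2 (psiG d ⟨j, s, r⟩)
  have hPP' : (((d j).1 s : ↥(Bl χ π j)) : Finset (Fin n)) =
      (((d j').1 s' : ↥(Bl χ π j')) : Finset (Fin n)) := by
    rw [hu _ ⟨Bl_mem_pi ((d j).1 s).2, hp1.1⟩,
        hu _ ⟨Bl_mem_pi ((d j').1 s').2, by rw [h]; exact hp2.1⟩]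
  have hjj : j = j' := by
    apply Fin.val_injective
    rw [← Bl_card ((d j).1 s).2, ← Bl_card ((d j').1 s').2, hPP']
  subst hjj
  have hss : s = s' := (d j).1.injective (Subtype.ext hPP')
  subst hss
  have hrr : r = r' := ((d j).2 ((d j).1 s)).2.injective (Subtype.ext h)
  subst hrr
  rfl

def Psi (h2 : ∀ v : Fin n, ∃! p, p ∈ π ∧ v ∈ p) (d : FData m χ π) : Pairs n k m χ :=
  (⟨fun x => ⟨psiF d x, psiF_mem_A d x⟩,
    fun x y h => psiF_inj h2 d (congrArg Subtype.val h)⟩,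
   ⟨fun x => ⟨psiG d x, psiG_mem_compl d x⟩,
    fun x y h => psiG_inj h2 d (congrArg Subtype.val h)⟩)


lemma blk_Psi (h1 : ∀ p ∈ π, p.card = k) (h2 : ∀ v : Fin n, ∃! p, p ∈ π ∧ v ∈ p)
    (d : FData m χ π) (j : Fin (k+1)) (s : Fin (m j)) :
    blk (Psi h2 d) ⟨j, s⟩ = (((d j).1 s : ↥(Bl χ π j)) : Finset (Fin n)) := by
  have hinjF : Function.Injective fun r : Fin (j : ℕ) => psiF d ⟨j, s, r⟩ := by
    intro r r' h
    have := psiF_inj h2 d h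
    simpa using this
  have hinjG : Function.Injective fun r : Fin (k - (j : ℕ)) => psiG d ⟨j, s, r⟩ := by
    intro r r' h
    have := psiG_inj h2 d h
    simpa using this
  have hP := ((d j).1 s).2
  have hcard : (((d j).1 s : ↥(Bl χ π j)) : Finset (Fin n)).card = k := h1 _ (Bl_mem_pi hP)
  have hfsum := Finset.card_filter_add_card_filter_not
    (s := (((d j).1 s : ↥(Bl χ π j)) : Finset (Fin n))) (p := fun v => χ v = 1)
  have hF : (Finset.univ.image fun r : Fin (j : ℕ) => psiF d ⟨j, s, r⟩) =
      (((d j).1 s : ↥(Bl χ π j)) : Finset (Fin n)).filter fun v => χ v = 1 := by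
    apply Finset.eq_of_subset_of_card_le
    · intro v hv
      obtain ⟨r, _, rfl⟩ := Finset.mem_image.1 hv
      exact Finset.mem_filter.2 ⟨(psiF_prop d ⟨j, s, r⟩).1, (psiF_prop d ⟨j, s, r⟩).2⟩
    · rw [Finset.card_image_of_injective _ hinjF, Bl_card hP]
      simp
  have hG : (Finset.univ.image fun r : Fin (k - (j : ℕ)) => psiG d ⟨j, s, r⟩) =
      (((d j).1 s : ↥(Bl χ π j)) : Finset (Fin n)).filter fun v => ¬ χ v = 1 := by
    apply Finset.eq_of_subset_of_card_le
    · intro v hv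
      obtain ⟨r, _, rfl⟩ := Finset.mem_image.1 hv
      exact Finset.mem_filter.2 ⟨(psiG_prop d ⟨j, s, r⟩).1, (psiG_prop d ⟨j, s, r⟩).2⟩
    · rw [Finset.card_image_of_injective _ hinjG]
      have := Bl_card hP
      simp only [Finset.card_univ, Fintype.card_fin]
      omega
  show ((Finset.univ.image fun r : Fin (j : ℕ) => psiF d ⟨j, s, r⟩) ∪
      (Finset.univ.image fun r : Fin (k - (j : ℕ)) => psiG d ⟨j, s, r⟩)) = _
  rw [hF, hG, Finset.filter_union_filter_not_eq]

lemma Phi_Psi (h1 : ∀ p ∈ π, p.card = k) (h2 : ∀ v : Fin n, ∃! p, p ∈ π ∧ v ∈ p)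
    (h3 : ∀ j : Fin (k+1), (Bl χ π j).card = m j) (d : FData m χ π) :
    Phi (Psi h2 d) = π := by
  apply Finset.Subset.antisymm
  · intro p hp
    obtain ⟨js, _, rfl⟩ := Finset.mem_image.1 hp
    obtain ⟨j, s⟩ := js
    rw [blk_Psi h1 h2 d j s]
    exact Bl_mem_pi ((d j).1 s).2
  · intro p hp
    have hjle : (p.filter fun v => χ v = 1).card ≤ k :=
      le_trans (Finset.card_filter_le _ _) (le_of_eq (h1 p hp))
    set j : Fin (k+1) := ⟨(p.filter fun v => χ v = 1).card, Nat.lt_succ_of_le hjle⟩ with hj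
    have hpB : p ∈ Bl χ π j := Finset.mem_filter.2 ⟨hp, rfl⟩
    have hsurj : Function.Surjective ((d j).1) := emb_surj _
      (by rw [Fintype.card_coe, h3 j, Fintype.card_fin])
    obtain ⟨s, hs⟩ := hsurj ⟨p, hpB⟩
    refine Finset.mem_image.2 ⟨⟨j, s⟩, Finset.mem_univ _, ?_⟩
    rw [blk_Psi h1 h2 d j s, hs]

lemma Psi_inj (h1 : ∀ p ∈ π, p.card = k) (h2 : ∀ v : Fin n, ∃! p, p ∈ π ∧ v ∈ p)
    (h3 : ∀ j : Fin (k+1), (Bl χ π j).card = m j) :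
    Function.Injective (Psi (m := m) (χ := χ) (π := π) h2) := by
  intro d d' h
  have hfst : (Psi h2 d).1 = (Psi h2 d').1 := congrArg Prod.fst h
  have hsnd : (Psi h2 d).2 = (Psi h2 d').2 := congrArg Prod.snd h
  have hpsiF : ∀ x, psiF d x = psiF d' x := fun x =>
    congrArg (fun e : IA k m ↪ ↥(A n χ) => ((e x : ↥(A n χ)) : Fin n)) hfst
  have hpsiG : ∀ x, psiG d x = psiG d' x := fun x =>
    congrArg (fun e : IB k m ↪ ↥((A n χ)ᶜ) => ((e x : ↥((A n χ)ᶜ)) : Fin n)) hsnd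
  funext j
  have hs1 : (d j).1 = (d' j).1 := by
    apply Function.Embedding.ext
    intro s
    apply Subtype.ext
    rw [← blk_Psi h1 h2 d j s, ← blk_Psi h1 h2 d' j s, h]
  refine Prod.ext hs1 ?_
  funext P
  have hsurj : Function.Surjective ((d j).1) := emb_surj _
    (by rw [Fintype.card_coe, h3 j, Fintype.card_fin])
  obtain ⟨s, rfl⟩ := hsurj P
  refine Prod.ext ?_ ?_
  · apply Function.Embedding.ext
    intro r
    apply Subtype.ext
    calc (((((d j).2 ((d j).1 s)).1 r : _) : Fin n)) = psiF d ⟨j, s, r⟩ := rfl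
      _ = psiF d' ⟨j, s, r⟩ := hpsiF _
      _ = (((((d' j).2 ((d' j).1 s)).1 r : _) : Fin n)) := rfl
      _ = (((((d' j).2 ((d j).1 s)).1 r : _) : Fin n)) := by rw [hs1]
  · apply Function.Embedding.ext
    intro r
    apply Subtype.ext
    calc (((((d j).2 ((d j).1 s)).2 r : _) : Fin n)) = psiG d ⟨j, s, r⟩ := rfl
      _ = psiG d' ⟨j, s, r⟩ := hpsiG _
      _ = (((((d' j).2 ((d' j).1 s)).2 r : _) : Fin n)) := rfl
      _ = (((((d' j).2 ((d j).1 s)).2 r : _) : Fin n)) := by rw [hs1]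

lemma Psi_surj (hk : 1 ≤ k) (h2 : ∀ v : Fin n, ∃! p, p ∈ π ∧ v ∈ p)
    (h3 : ∀ j : Fin (k+1), (Bl χ π j).card = m j)
    (fg : Pairs n k m χ) (hfg : Phi fg = π) : ∃ d : FData m χ π, Psi h2 d = fg := by
  have hblk_mem : ∀ (j : Fin (k+1)) (s : Fin (m j)), blk fg ⟨j, s⟩ ∈ Bl χ π j := fun j s =>
    Finset.mem_filter.2 ⟨hfg ▸ Finset.mem_image.2 ⟨⟨j, s⟩, Finset.mem_univ _, rfl⟩,
      card_blk_filter_one fg ⟨j, s⟩⟩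
  have hinj1 : ∀ j : Fin (k+1), Function.Injective
      (fun s : Fin (m j) => (⟨blk fg ⟨j, s⟩, hblk_mem j s⟩ : ↥(Bl χ π j))) := by
    intro j s s' h
    have := blk_inj hk fg (congrArg Subtype.val h)
    simpa using this
  let emb1 : ∀ j : Fin (k+1), Fin (m j) ↪ ↥(Bl χ π j) := fun j => ⟨_, hinj1 j⟩
  have hbij : ∀ j, Function.Bijective (emb1 j) := fun j =>
    (Fintype.bijective_iff_injective_and_card _).2 ⟨(emb1 j).injective,
      by rw [Fintype.card_coe, h3 j, Fintype.card_fin]⟩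
  let e : ∀ j, Fin (m j) ≃ ↥(Bl χ π j) := fun j => Equiv.ofBijective _ (hbij j)
  have hPval : ∀ (j : Fin (k+1)) (P : ↥(Bl χ π j)),
      (P : Finset (Fin n)) = blk fg ⟨j, (e j).symm P⟩ := by
    intro j P
    conv_lhs => rw [← (e j).apply_symm_apply P]
    rfl
  have hmemF : ∀ (j : Fin (k+1)) (P : ↥(Bl χ π j)) (r : Fin (j : ℕ)),
      (fg.1 ⟨j, (e j).symm P, r⟩ : Fin n) ∈ (P : Finset (Fin n)).filter fun v => χ v = 1 := by
    intro j P r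
    rw [hPval j P]
    exact Finset.mem_filter.2 ⟨mem_blk_f fg ⟨j, (e j).symm P, r⟩, chi_f fg _⟩
  have hmemG : ∀ (j : Fin (k+1)) (P : ↥(Bl χ π j)) (r : Fin (k - (j : ℕ))),
      (fg.2 ⟨j, (e j).symm P, r⟩ : Fin n) ∈ (P : Finset (Fin n)).filter fun v => ¬ χ v = 1 := by
    intro j P r
    rw [hPval j P]
    exact Finset.mem_filter.2 ⟨mem_blk_g fg ⟨j, (e j).symm P, r⟩, chi_g fg _⟩
  have hinjF : ∀ (j : Fin (k+1)) (P : ↥(Bl χ π j)), Function.Injective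
      (fun r : Fin (j : ℕ) => (⟨(fg.1 ⟨j, (e j).symm P, r⟩ : Fin n), hmemF j P r⟩ :
        ↥((P : Finset (Fin n)).filter fun v => χ v = 1))) := by
    intro j P r r' h
    simp only [Subtype.mk.injEq] at h
    have := fg.1.injective (Subtype.ext h)
    simpa using this
  have hinjG : ∀ (j : Fin (k+1)) (P : ↥(Bl χ π j)), Function.Injective
      (fun r : Fin (k - (j : ℕ)) => (⟨(fg.2 ⟨j, (e j).symm P, r⟩ : Fin n), hmemG j P r⟩ :
        ↥((P : Finset (Fin n)).filter fun v => ¬ χ v = 1))) := by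
    intro j P r r' h
    simp only [Subtype.mk.injEq] at h
    have := fg.2.injective (Subtype.ext h)
    simpa using this
  refine ⟨fun j => ⟨emb1 j, fun P => (⟨_, hinjF j P⟩, ⟨_, hinjG j P⟩)⟩, ?_⟩
  refine Prod.ext ?_ ?_
  · apply Function.Embedding.ext
    rintro ⟨j, s, r⟩
    apply Subtype.ext
    show (fg.1 ⟨j, (e j).symm (emb1 j s), r⟩ : Fin n) = (fg.1 ⟨j, s, r⟩ : Fin n)
    have : (e j).symm (emb1 j s) = s := (e j).symm_apply_apply s
    rw [this]
  · apply Function.Embedding.ext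
    rintro ⟨j, s, r⟩
    apply Subtype.ext
    show (fg.2 ⟨j, (e j).symm (emb1 j s), r⟩ : Fin n) = (fg.2 ⟨j, s, r⟩ : Fin n)
    have : (e j).symm (emb1 j s) = s := (e j).symm_apply_apply s
    rw [this]


lemma card_FData (h1 : ∀ p ∈ π, p.card = k) (h3 : ∀ j : Fin (k+1), (Bl χ π j).card = m j) :
    Fintype.card (FData m χ π) =
      ∏ j : Fin (k+1),
        ((j : ℕ).factorial ^ m j * (k - (j : ℕ)).factorial ^ m j * (m j).factorial) := by
  rw [Fintype.card_pi]
  apply Finset.prod_congr rfl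
  intro j _
  have hBl : Fintype.card ↥(Bl χ π j) = m j := by rw [Fintype.card_coe, h3 j]
  rw [Fintype.card_prod, Fintype.card_pi]
  have h1' : Fintype.card (Fin (m j) ↪ ↥(Bl χ π j)) = (m j).factorial := by
    rw [Fintype.card_embedding_eq, hBl, Fintype.card_fin, Nat.descFactorial_self]
  have hPterm : ∀ P : ↥(Bl χ π j),
      Fintype.card ((Fin (j : ℕ) ↪ ↥((P : Finset (Fin n)).filter fun v => χ v = 1)) ×
        (Fin (k - (j : ℕ)) ↪ ↥((P : Finset (Fin n)).filter fun v => ¬ χ v = 1))) =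
      (j : ℕ).factorial * (k - (j : ℕ)).factorial := by
    intro P
    have hc1 : ((P : Finset (Fin n)).filter fun v => χ v = 1).card = (j : ℕ) := Bl_card P.2
    have hcard : (P : Finset (Fin n)).card = k := h1 _ (Bl_mem_pi P.2)
    have hsum := Finset.card_filter_add_card_filter_not
      (s := (P : Finset (Fin n))) (p := fun v => χ v = 1)
    have hc2 : ((P : Finset (Fin n)).filter fun v => ¬ χ v = 1).card = k - (j : ℕ) := by omega
    rw [Fintype.card_prod, Fintype.card_embedding_eq, Fintype.card_embedding_eq,
      Fintype.card_coe, Fintype.card_coe, hc1, hc2, Fintype.card_fin, Fintype.card_fin,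
      Nat.descFactorial_self, Nat.descFactorial_self]
  rw [h1', Finset.prod_congr rfl (fun P _ => hPterm P), Finset.prod_const, Finset.card_univ, hBl,
    mul_pow]
  ring

lemma fiber_card (hk : 1 ≤ k) (h1 : ∀ p ∈ π, p.card = k)
    (h2 : ∀ v : Fin n, ∃! p, p ∈ π ∧ v ∈ p)
    (h3 : ∀ j : Fin (k+1), (Bl χ π j).card = m j) :
    (Finset.univ.filter fun fg : Pairs n k m χ => Phi fg = π).card =
      ∏ j : Fin (k+1),
        ((j : ℕ).factorial ^ m j * (k - (j : ℕ)).factorial ^ m j * (m j).factorial) := by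
  classical
  have himg : (Finset.univ.filter fun fg : Pairs n k m χ => Phi fg = π) =
      Finset.univ.image (Psi (m := m) (χ := χ) (π := π) h2) := by
    ext fg
    simp only [Finset.mem_filter, Finset.mem_univ, true_and, Finset.mem_image]
    constructor
    · intro h
      obtain ⟨d, hd⟩ := Psi_surj hk h2 h3 fg h
      exact ⟨d, hd⟩
    · rintro ⟨d, rfl⟩
      exact Phi_Psi h1 h2 h3 d
  rw [himg, Finset.card_image_of_injective _ (Psi_inj h1 h2 h3), Finset.card_univ,
    card_FData h1 h3]

end Stmt2Aux


open Stmt2Aux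

/-- Counting `k`-partitions of `[n]` of a given type `t` with respect to a
2-coloring `χ`.  Here `m j = n * t j` are the integer block counts,
`∑ j, j * m j = p * n` is the number of `1`-colored vertices, and the count is
`(pn)!((1-p)n)! / ∏_j (j!^(m j) (k-j)!^(m j) (m j)!)`, stated multiplicatively. -/
theorem stmt2 (n k : ℕ) (hk : 1 ≤ k) (hdvd : k ∣ n)
    (t : Fin (k + 1) → ℝ)
    (ht01 : ∀ j, t j ∈ Set.Icc (0 : ℝ) 1)
    (htsum : ∑ j, t j = 1 / (k : ℝ))
    (m : Fin (k + 1) → ℕ)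
    (hm : ∀ j, (n : ℝ) * t j = (m j : ℝ))
    (χ : Fin n → Fin 2)
    (hχ : (Finset.univ.filter fun v => χ v = 1).card = ∑ j : Fin (k + 1), (j : ℕ) * m j) :
    {π : Finset (Finset (Fin n)) |
        (∀ p ∈ π, p.card = k) ∧ (∀ v : Fin n, ∃! p, p ∈ π ∧ v ∈ p) ∧
        ∀ j : Fin (k + 1),
          (π.filter fun p => (p.filter fun v => χ v = 1).card = (j : ℕ)).card = m j}.ncard
      * ∏ j : Fin (k + 1),
          ((j : ℕ).factorial ^ m j * (k - (j : ℕ)).factorial ^ m j * (m j).factorial)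
      = (∑ j : Fin (k + 1), (j : ℕ) * m j).factorial * (n - ∑ j : Fin (k + 1), (j : ℕ) * m j).factorial := by
  classical
  set a := ∑ j : Fin (k + 1), (j : ℕ) * m j with ha
  have hk0 : (k : ℝ) ≠ 0 := Nat.cast_ne_zero.2 (by omega)
  have hsum_m : (k : ℝ) * ∑ j, (m j : ℝ) = n := by
    have h1 : ∑ j, (n : ℝ) * t j = ∑ j, (m j : ℝ) := Finset.sum_congr rfl fun j _ => hm j
    rw [← h1, ← Finset.mul_sum, htsum]
    field_simp
  have hkn : k * ∑ j : Fin (k + 1), m j = n := by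
    exact_mod_cast hsum_m
  have hA : (A n χ).card = a := hχ
  have hIA : Fintype.card (IA k m) = (A n χ).card := by
    rw [hA, ha]
    simp only [Fintype.card_sigma, Fintype.card_prod, Fintype.card_fin]
    exact Finset.sum_congr rfl fun j _ => mul_comm _ _
  have haux : ∀ j : Fin (k + 1), m j * (k - (j : ℕ)) + (j : ℕ) * m j = m j * k := by
    intro j
    have hjk : (j : ℕ) ≤ k := Nat.lt_succ_iff.mp j.isLt
    rw [mul_comm (j : ℕ) (m j), ← Nat.mul_add, Nat.sub_add_cancel hjk]
  have hsum2 : (∑ j : Fin (k + 1), m j * (k - (j : ℕ))) + a = n := by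
    rw [ha, ← Finset.sum_add_distrib, Finset.sum_congr rfl fun j _ => haux j,
      ← Finset.sum_mul, mul_comm, hkn]
  have hIB : Fintype.card (IB k m) = ((A n χ)ᶜ).card := by
    rw [Finset.card_compl, hA]
    simp only [Fintype.card_sigma, Fintype.card_prod, Fintype.card_fin]
    omega
  have hncard : {π : Finset (Finset (Fin n)) |
        (∀ p ∈ π, p.card = k) ∧ (∀ v : Fin n, ∃! p, p ∈ π ∧ v ∈ p) ∧
        ∀ j : Fin (k + 1),
          (π.filter fun p => (p.filter fun v => χ v = 1).card = (j : ℕ)).card = m j}.ncard =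
      (Finset.univ.filter fun π : Finset (Finset (Fin n)) =>
        (∀ p ∈ π, p.card = k) ∧ (∀ v : Fin n, ∃! p, p ∈ π ∧ v ∈ p) ∧
        ∀ j : Fin (k + 1),
          (π.filter fun p => (p.filter fun v => χ v = 1).card = (j : ℕ)).card = m j).card := by
    rw [← Set.ncard_coe_finset]
    congr 1
    ext π
    simp only [Set.mem_setOf_eq, Finset.coe_filter, Finset.mem_univ, true_and]
  rw [hncard]
  have hcount := double_count
    (Finset.univ.filter fun π : Finset (Finset (Fin n)) =>
      (∀ p ∈ π, p.card = k) ∧ (∀ v : Fin n, ∃! p, p ∈ π ∧ v ∈ p) ∧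
      ∀ j : Fin (k + 1),
        (π.filter fun p => (p.filter fun v => χ v = 1).card = (j : ℕ)).card = m j)
    (Phi (n := n) (k := k) (m := m) (χ := χ))
    (∏ j : Fin (k + 1),
      ((j : ℕ).factorial ^ m j * (k - (j : ℕ)).factorial ^ m j * (m j).factorial))
    (fun fg => Finset.mem_filter.2 ⟨Finset.mem_univ _, Phi_card fg,
      Phi_partition hIA hIB fg, Phi_type hk fg⟩)
    (fun π hπ => by
      obtain ⟨-, h1, h2, h3⟩ := Finset.mem_filter.1 hπ
      exact fiber_card hk h1 h2 h3)
  rw [hcount]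
  rw [Fintype.card_prod, Fintype.card_embedding_eq, Fintype.card_embedding_eq, hIA, hIB,
    Fintype.card_coe, Fintype.card_coe, hA, Finset.card_compl, hA, Fintype.card_fin,
    Nat.descFactorial_self, Nat.descFactorial_self]
end

section
/- Let A be an integer-valued q×p matrix, b ∈ ℝ^q, and K = {x ∈ ℝ^p : Ax = b, x_i ≥ 0 for all i}. If K is compact and contains a point x with all coordinates strictly positive, then there is a constant C > 0 such that for every n ∈ ℕ, if the set K_n = {x ∈ K : n·x ∈ ℤ^p} is nonempty, then K_n is C/n-dense in K in the sup norm: for every x ∈ K there exists x' ∈ K_n with ‖x - x'‖_∞ < C/n. -/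
open Submodule Matrix


lemma indep_cast {ι η : Type*} [Fintype ι] [Fintype η] {u : ι → η → ℚ}
    (hu : LinearIndependent ℚ u) :
    LinearIndependent ℝ (fun i => fun j => ((u i j : ℚ) : ℝ)) := by
  rw [Fintype.linearIndependent_iff] at hu ⊢
  intro c hc
  set V : Submodule ℚ ℝ := span ℚ (Set.range c) with hV
  haveI : FiniteDimensional ℚ V := FiniteDimensional.span_of_finite ℚ (Set.finite_range c)
  set B := Module.Basis.ofVectorSpace ℚ V with hB
  have hcV : ∀ i, c i ∈ V := fun i => subset_span (Set.mem_range_self i)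
  set cV : ι → V := fun i => ⟨c i, hcV i⟩ with hcVdef
  have key : ∀ j : η, (∑ i, (u i j) • cV i) = 0 := by
    intro j
    have := congrFun hc j
    simp only [Finset.sum_apply, Pi.smul_apply, Pi.zero_apply, smul_eq_mul] at this
    apply Subtype.ext
    push_cast
    simp only [SetLike.val_smul, Rat.smul_def]
    rw [← this]
    exact Finset.sum_congr rfl fun i _ => mul_comm _ _
  have key2 : ∀ j k, (∑ i, (u i j) * (B.repr (cV i)) k) = 0 := by
    intro j k
    have := congrArg (fun z => (B.repr z) k) (key j)
    simpa [map_sum, Finsupp.smul_apply, smul_eq_mul] using this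
  have hzero : ∀ i, B.repr (cV i) = 0 := by
    intro i
    ext k
    have := hu (fun i => (B.repr (cV i)) k) ?_ i
    · simpa using this
    · funext j
      simpa [mul_comm] using key2 j k
  intro i
  have : cV i = 0 := B.repr.injective (by simp [hzero i])
  simpa [hcVdef, Subtype.ext_iff] using this

section
variable {p q : ℕ} (A : Matrix (Fin q) (Fin p) ℤ)

private def castVec {η : Type*} (u : η → ℚ) : η → ℝ := fun j => ((u j : ℚ) : ℝ)

private lemma mulVec_castVec (u : Fin p → ℚ) :
    (A.map (fun z : ℤ => (z : ℝ))).mulVec (castVec u) =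
      castVec ((A.map (fun z : ℤ => (z : ℚ))).mulVec u) := by
  funext i
  simp only [castVec, Matrix.mulVec, dotProduct, Matrix.map_apply]
  push_cast
  rfl

lemma ker_spanned_by_int_vectors :
    ∃ (m : ℕ) (u : Fin m → Fin p → ℝ),
      (∀ i, (A.map (fun z : ℤ => (z : ℝ))).mulVec (u i) = 0) ∧
      (∀ i j, ∃ z : ℤ, u i j = (z : ℝ)) ∧
      ∀ w, (A.map (fun z : ℤ => (z : ℝ))).mulVec w = 0 → w ∈ span ℝ (Set.range u) := by
  classical
  set Aq := A.map (fun z : ℤ => (z : ℚ)) with hAq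
  set Ar := A.map (fun z : ℤ => (z : ℝ)) with hAr
  set Kq := LinearMap.ker Aq.mulVecLin with hKq
  set Kr := LinearMap.ker Ar.mulVecLin with hKr
  set d := Module.finrank ℚ Kq with hd
  set bq := Module.finBasis ℚ Kq with hbq
  set u : Fin d → Fin p → ℚ := fun i => (bq i : Fin p → ℚ) with hu
  have hu_indep : LinearIndependent ℚ u :=
    bq.linearIndependent.map' Kq.subtype (Submodule.ker_subtype _)
  set U : Fin d → Fin p → ℝ := fun i => castVec (u i) with hU
  have hU_indep : LinearIndependent ℝ U := indep_cast hu_indep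
  have hU_ker : ∀ i, U i ∈ Kr := by
    intro i
    have h0 : Aq.mulVec (u i) = 0 := (bq i).2
    simp only [hKr, LinearMap.mem_ker, Matrix.mulVecLin_apply, hU]
    rw [mulVec_castVec, h0]
    funext j; simp [castVec]
  -- rank inequality: finrank Kr ≤ d
  have hrank : Module.finrank ℝ Kr ≤ d := by
    set r := Module.finrank ℚ (LinearMap.range Aq.mulVecLin) with hr
    set cb := Module.finBasis ℚ (LinearMap.range Aq.mulVecLin) with hcb
    set v : Fin r → Fin q → ℚ := fun k => (cb k : Fin q → ℚ) with hv
    have hv_indep : LinearIndependent ℚ v :=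
      cb.linearIndependent.map' (LinearMap.range Aq.mulVecLin).subtype (Submodule.ker_subtype _)
    have hV_indep : LinearIndependent ℝ (fun k => castVec (v k)) := indep_cast hv_indep
    have hV_mem : ∀ k, castVec (v k) ∈ LinearMap.range Ar.mulVecLin := by
      intro k
      obtain ⟨y, hy⟩ := (cb k).2
      refine ⟨castVec y, ?_⟩
      rw [Matrix.mulVecLin_apply, mulVec_castVec]
      rw [Matrix.mulVecLin_apply] at hy
      exact congrArg castVec hy
    have hrle : r ≤ Module.finrank ℝ (LinearMap.range Ar.mulVecLin) := by
      have : LinearIndependent ℝ (fun k => (⟨castVec (v k), hV_mem k⟩ :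
          LinearMap.range Ar.mulVecLin)) := by
        apply LinearIndependent.of_comp (LinearMap.range Ar.mulVecLin).subtype
        exact hV_indep
      simpa using this.fintype_card_le_finrank
    have e1 : Module.finrank ℚ (LinearMap.range Aq.mulVecLin) +
        Module.finrank ℚ Kq = p := by
      rw [hKq]
      rw [LinearMap.finrank_range_add_finrank_ker]
      simp [Module.finrank_pi]
    have e2 : Module.finrank ℝ (LinearMap.range Ar.mulVecLin) +
        Module.finrank ℝ Kr = p := by
      rw [hKr]
      rw [LinearMap.finrank_range_add_finrank_ker]
      simp [Module.finrank_pi]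
    omega
  -- span equality
  have hspan : span ℝ (Set.range U) = Kr := by
    apply eq_of_le_of_finrank_le
    · rw [span_le]; rintro _ ⟨i, rfl⟩; exact hU_ker i
    · rw [finrank_span_eq_card hU_indep]; simpa using hrank
  -- rescale to integer vectors
  set N : Fin d → ℕ := fun i => Finset.univ.prod fun j => (u i j).den with hN
  have hNpos : ∀ i, 0 < N i := fun i => Finset.prod_pos fun j _ => (u i j).pos
  set u' : Fin d → Fin p → ℝ := fun i => (N i : ℝ) • U i with hu'
  refine ⟨d, u', ?_, ?_, ?_⟩
  · intro i
    have := hU_ker i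
    simp only [hKr, LinearMap.mem_ker, Matrix.mulVecLin_apply] at this
    rw [hu', Matrix.mulVec_smul, this, smul_zero]
  · intro i j
    have hdvd : ((u i j).den : ℤ) ∣ (N i : ℤ) := by
      exact_mod_cast Int.natCast_dvd_natCast.mpr (Finset.dvd_prod_of_mem _ (Finset.mem_univ j))
    obtain ⟨t, ht⟩ := hdvd
    refine ⟨t * (u i j).num, ?_⟩
    have : ((N i : ℚ)) * u i j = ((t * (u i j).num : ℤ) : ℚ) := by
      have hden : ((N i : ℚ)) = ((u i j).den : ℚ) * (t : ℚ) := by exact_mod_cast ht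
      rw [hden]
      push_cast
      rw [mul_comm ((u i j).den : ℚ) (t:ℚ), mul_assoc, mul_comm ((u i j).den : ℚ) _,
        Rat.mul_den_eq_num]
    calc u' i j = (N i : ℝ) * ((u i j : ℚ) : ℝ) := rfl
      _ = (((N i : ℚ) * u i j : ℚ) : ℝ) := by push_cast; ring
      _ = ((t * (u i j).num : ℤ) : ℝ) := by rw [this]; push_cast; ring
  · intro w hw
    have hwKr : w ∈ Kr := by simp [hKr, LinearMap.mem_ker, Matrix.mulVecLin_apply, hw]
    rw [← hspan] at hwKr
    refine Submodule.span_le.mpr ?_ hwKr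
    rintro _ ⟨i, rfl⟩
    have : U i = ((N i : ℝ))⁻¹ • u' i := by
      rw [hu', smul_smul, inv_mul_cancel₀ (by exact_mod_cast (hNpos i).ne'), one_smul]
    rw [this]
    exact Submodule.smul_mem _ _ (subset_span (Set.mem_range_self i))

lemma covering :
    ∃ μ : ℝ, 0 < μ ∧ ∀ w : Fin p → ℝ, (A.map (fun z : ℤ => (z : ℝ))).mulVec w = 0 →
      ∃ v : Fin p → ℝ, (A.map (fun z : ℤ => (z : ℝ))).mulVec v = 0 ∧
        (∀ j, ∃ z : ℤ, v j = (z : ℝ)) ∧ ‖w - v‖ ≤ μ := by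
  classical
  obtain ⟨m, u, hker, hint, hspan⟩ := ker_spanned_by_int_vectors A
  refine ⟨∑ i, ‖u i‖ + 1, by positivity, ?_⟩
  intro w hw
  obtain ⟨c, hc⟩ := (mem_span_range_iff_exists_fun ℝ).mp (hspan w hw)
  refine ⟨∑ i, (round (c i) : ℝ) • u i, ?_, ?_, ?_⟩
  · rw [show (A.map (fun z : ℤ => (z : ℝ))).mulVec (∑ i, (round (c i) : ℝ) • u i)
        = (A.map (fun z : ℤ => (z : ℝ))).mulVecLin (∑ i, (round (c i) : ℝ) • u i) from rfl]
    rw [map_sum]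
    refine Finset.sum_eq_zero fun i _ => ?_
    rw [_root_.map_smul]
    simp only [Matrix.mulVecLin_apply, hker i, smul_zero]
  · intro j
    choose f hf using fun i => hint i j
    refine ⟨∑ i, round (c i) * f i, ?_⟩
    rw [Finset.sum_apply]
    push_cast
    refine Finset.sum_congr rfl fun i _ => ?_
    simp [hf i, Pi.smul_apply]
  · have hsub : w - (∑ i, (round (c i) : ℝ) • u i) = ∑ i, (c i - round (c i)) • u i := by
      rw [← hc, ← Finset.sum_sub_distrib]
      refine Finset.sum_congr rfl fun i _ => ?_
      rw [sub_smul]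
    rw [hsub]
    calc ‖∑ i, (c i - round (c i)) • u i‖ ≤ ∑ i, ‖(c i - round (c i)) • u i‖ :=
          norm_sum_le _ _
      _ ≤ ∑ i, ‖u i‖ := by
          refine Finset.sum_le_sum fun i _ => ?_
          rw [norm_smul, Real.norm_eq_abs]
          have h1 : |c i - (round (c i) : ℝ)| ≤ 1 := (abs_sub_round _).trans (by norm_num)
          nlinarith [norm_nonneg (u i)]
      _ ≤ ∑ i, ‖u i‖ + 1 := by linarith
end


/-- Integer-polytope density lemma: if `K = {x : Ax = b, x ≥ 0}` is compact and contains a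
strictly positive point, then there is `C > 0` such that, whenever the set `K_n` of points
of `K` with coordinates in `(1/n)ℤ` is nonempty, it is `C/n`-dense in `K` (sup norm). -/
theorem stmt3 (p q : ℕ) (A : Matrix (Fin q) (Fin p) ℤ) (b : Fin q → ℝ) :
    let K : Set (Fin p → ℝ) :=
      {x | (A.map fun z : ℤ => (z : ℝ)).mulVec x = b ∧ ∀ i, 0 ≤ x i}
    IsCompact K → (∃ x ∈ K, ∀ i, 0 < x i) →
    ∃ C > 0, ∀ n : ℕ, 0 < n →
      (∃ x ∈ K, ∀ i, ∃ z : ℤ, (n : ℝ) * x i = (z : ℝ)) →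
      ∀ x ∈ K, ∃ x' ∈ K, (∀ i, ∃ z : ℤ, (n : ℝ) * x' i = (z : ℝ)) ∧ ‖x - x'‖ < C / n := by
  intro K hK hpos
  rcases Nat.eq_zero_or_pos p with hp | hp
  · -- trivial case p = 0
    refine ⟨1, one_pos, ?_⟩
    intro n hn _ x hx
    refine ⟨x, hx, fun i => absurd i.isLt (by omega), ?_⟩
    have hn' : (0:ℝ) < n := by exact_mod_cast hn
    simp only [sub_self, norm_zero]
    positivity
  obtain ⟨x0, hx0K, hx0pos⟩ := hpos
  haveI : Nonempty (Fin p) := ⟨⟨0, hp⟩⟩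
  obtain ⟨hx0A, hx0nn⟩ := hx0K
  set δ : ℝ := Finset.univ.inf' Finset.univ_nonempty (fun i => x0 i) with hδdef
  have hδpos : 0 < δ := (Finset.lt_inf'_iff _).mpr fun i _ => hx0pos i
  have hδle : ∀ i, δ ≤ x0 i := fun i => Finset.inf'_le _ (Finset.mem_univ i)
  obtain ⟨R, hR⟩ := isBounded_iff_forall_norm_le.mp hK.isBounded
  have hR0 : 0 ≤ R := le_trans (norm_nonneg x0) (hR x0 ⟨hx0A, hx0nn⟩)
  obtain ⟨μ, hμpos, hcov⟩ := covering A
  set s : ℝ := μ / δ with hsdef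
  have hspos : 0 < s := div_pos hμpos hδpos
  have hsδ : s * δ = μ := div_mul_cancel₀ _ hδpos.ne'
  refine ⟨2 * R * s + μ + 1, by nlinarith, ?_⟩
  intro n hn ⟨y, hyK, hyint⟩ x hxK
  obtain ⟨hxA, hxnn⟩ := hxK
  obtain ⟨hyA, hynn⟩ := hyK
  have hnR : (0:ℝ) < n := by exact_mod_cast hn
  rcases le_or_gt ((n:ℝ) * δ) μ with hcase | hcase
  · -- small n : take y itself
    refine ⟨y, ⟨hyA, hynn⟩, hyint, ?_⟩
    rw [lt_div_iff₀ hnR]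
    have h1 : ‖x - y‖ ≤ R + R :=
      (norm_sub_le x y).trans (add_le_add (hR x ⟨hxA, hxnn⟩) (hR y ⟨hyA, hynn⟩))
    have h2 : (n:ℝ) ≤ s := by
      rw [hsdef, le_div_iff₀ hδpos]; exact hcase
    nlinarith [norm_nonneg (x - y)]
  · -- main case
    set θ : ℝ := s / n with hθdef
    have hθpos : 0 < θ := div_pos hspos hnR
    have hθlt : θ < 1 := by
      rw [hθdef, div_lt_one hnR, hsdef, div_lt_iff₀ hδpos]
      linarith
    have hθδ : θ * δ = μ / n := by
      rw [hθdef, div_mul_eq_mul_div, hsδ]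
    set x'' : Fin p → ℝ := (1 - θ) • x + θ • x0 with hx''def
    have hx''A : (A.map fun z : ℤ => (z : ℝ)).mulVec x'' = b := by
      rw [hx''def, Matrix.mulVec_add, Matrix.mulVec_smul, Matrix.mulVec_smul, hxA, hx0A,
        ← add_smul]
      norm_num
    have hx''ge : ∀ i, μ / n ≤ x'' i := by
      intro i
      have h1 : (0:ℝ) ≤ (1 - θ) * x i := mul_nonneg (by linarith) (hxnn i)
      have h2 : θ * δ ≤ θ * x0 i := mul_le_mul_of_nonneg_left (hδle i) hθpos.le
      have : x'' i = (1 - θ) * x i + θ * x0 i := rfl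
      rw [this, ← hθδ]
      linarith
    set w : Fin p → ℝ := (n : ℝ) • (x'' - y) with hwdef
    have hwker : (A.map fun z : ℤ => (z : ℝ)).mulVec w = 0 := by
      rw [hwdef, Matrix.mulVec_smul, Matrix.mulVec_sub, hx''A, hyA, sub_self, smul_zero]
    obtain ⟨v, hvker, hvint, hvnorm⟩ := hcov w hwker
    set x' : Fin p → ℝ := y + (n : ℝ)⁻¹ • v with hx'def
    have hx'A : (A.map fun z : ℤ => (z : ℝ)).mulVec x' = b := by
      rw [hx'def, Matrix.mulVec_add, Matrix.mulVec_smul, hyA, hvker, smul_zero, add_zero]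
    have hsubeq : x' - x'' = (n:ℝ)⁻¹ • (v - w) := by
      rw [hx'def, hwdef, smul_sub, smul_smul, inv_mul_cancel₀ hnR.ne', one_smul]
      module
    have h2 : ‖x' - x''‖ ≤ μ / n := by
      rw [hsubeq, norm_smul, Real.norm_eq_abs, abs_of_pos (inv_pos.mpr hnR),
        norm_sub_rev, inv_mul_eq_div, div_le_div_iff₀ hnR hnR]
      nlinarith
    have hcoord : ∀ i, |x' i - x'' i| ≤ μ / n := by
      intro i
      have := norm_le_pi_norm (x' - x'') i
      rw [Pi.sub_apply, Real.norm_eq_abs] at this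
      exact this.trans h2
    have hx'nn : ∀ i, 0 ≤ x' i := by
      intro i
      have h3 := hx''ge i
      have h4 := (abs_le.mp (hcoord i)).1
      linarith
    refine ⟨x', ⟨hx'A, hx'nn⟩, ?_, ?_⟩
    · intro i
      obtain ⟨z1, hz1⟩ := hyint i
      obtain ⟨z2, hz2⟩ := hvint i
      refine ⟨z1 + z2, ?_⟩
      have : (n:ℝ) * x' i = (n:ℝ) * y i + v i := by
        have : x' i = y i + (n:ℝ)⁻¹ * v i := rfl
        rw [this, mul_add, ← mul_assoc, mul_inv_cancel₀ hnR.ne', one_mul]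
      rw [this, hz1, hz2]
      push_cast
      ring
    · have ht : ‖x - x'‖ ≤ ‖x - x''‖ + ‖x' - x''‖ := by
        have h5 : x - x' = (x - x'') - (x' - x'') := by ring_nf
        rw [h5]
        exact norm_sub_le _ _
      have h1 : ‖x - x''‖ ≤ θ * (R + R) := by
        have h6 : x - x'' = θ • (x - x0) := by rw [hx''def]; module
        rw [h6, norm_smul, Real.norm_eq_abs, abs_of_pos hθpos]
        refine mul_le_mul_of_nonneg_left ?_ hθpos.le
        exact (norm_sub_le x x0).trans (add_le_add (hR x ⟨hxA, hxnn⟩) (hR x0 ⟨hx0A, hx0nn⟩))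
      calc ‖x - x'‖ ≤ θ * (R + R) + μ / n := le_trans ht (add_le_add h1 h2)
        _ = (s * (R + R) + μ) / n := by
            rw [hθdef]
            field_simp
        _ < (2 * R * s + μ + 1) / n := by
            rw [div_lt_div_iff_of_pos_right hnR]
            nlinarith
end

section
/- Define F : M' → ℝ by F(t) = d·H(t) + (1-d)·H(p(t),1-p(t)) - (d/k)·log k + d·Σ_{j=1}^{k-1} t_j·log C(k,j), where M' = {t ∈ [0,1]^{k-1} : Σ_j t_j = 1/k}, p(t) = Σ_j j·t_j, and H is Shannon entropy. If d ≥ 2 and k ≥ 3, then F attains a unique global maximum on M' at the point t* given by t*_j = C(k,j)/(k·(2^k - 2)), at which p(t*) = 1/2 and F(t*) = log 2 + (d/k)·log(1 - 2^{1-k}). -/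
open Real Finset

/-- Pointwise Gibbs bound: `a - b ≤ a * log (a / b)`. -/
lemma glog_le (a b : ℝ) (ha : 0 ≤ a) (hb : 0 < b) : a - b ≤ a * Real.log (a / b) := by
  rcases ha.eq_or_lt with h | h
  · simp [← h]; linarith
  · have h1 : Real.log (b / a) ≤ b / a - 1 := Real.log_le_sub_one_of_pos (div_pos hb h)
    have h2 : Real.log (a / b) = - Real.log (b / a) := by
      rw [← Real.log_inv, inv_div]
    rw [h2]
    have h4 : a * (1 - b / a) ≤ a * (-Real.log (b / a)) :=
      mul_le_mul_of_nonneg_left (by linarith) h.le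
    have h5 : a * (1 - b / a) = a - b := by field_simp
    linarith

/-- Strict pointwise Gibbs bound. -/
lemma glog_lt (a b : ℝ) (ha : 0 ≤ a) (hb : 0 < b) (hne : a ≠ b) :
    a - b < a * Real.log (a / b) := by
  rcases ha.eq_or_lt with h | h
  · simp [← h]; linarith
  · have hba : b / a ≠ 1 := by
      intro hh; apply hne; field_simp at hh; linarith
    have h1 : Real.log (b / a) < b / a - 1 :=
      Real.log_lt_sub_one_of_pos (div_pos hb h) hba
    have h2 : Real.log (a / b) = - Real.log (b / a) := by
      rw [← Real.log_inv, inv_div]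
    rw [h2]
    have h4 : a * (1 - b / a) < a * (-Real.log (b / a)) :=
      mul_lt_mul_of_pos_left (by linarith) h
    have h5 : a * (1 - b / a) = a - b := by field_simp
    linarith

/-- Gibbs' inequality (nonnegativity of relative entropy). -/
lemma gibbs_le {n : ℕ} (a b : Fin n → ℝ) (ha : ∀ j, 0 ≤ a j) (hb : ∀ j, 0 < b j)
    (hs : ∑ j, b j = ∑ j, a j) : 0 ≤ ∑ j, a j * Real.log (a j / b j) := by
  have h := Finset.sum_le_sum (fun j (_ : j ∈ Finset.univ) => glog_le (a j) (b j) (ha j) (hb j))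
  rw [Finset.sum_sub_distrib, hs, sub_self] at h
  exact h

/-- Strict Gibbs' inequality. -/
lemma gibbs_lt {n : ℕ} (a b : Fin n → ℝ) (ha : ∀ j, 0 ≤ a j) (hb : ∀ j, 0 < b j)
    (hs : ∑ j, b j = ∑ j, a j) (hne : a ≠ b) : 0 < ∑ j, a j * Real.log (a j / b j) := by
  obtain ⟨j0, hj0⟩ : ∃ j, a j ≠ b j := by
    by_contra hc; push_neg at hc; exact hne (funext hc)
  have h := Finset.sum_lt_sum (f := fun j => a j - b j)
    (fun j (_ : j ∈ Finset.univ) => glog_le (a j) (b j) (ha j) (hb j))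
    ⟨j0, Finset.mem_univ j0, glog_lt (a j0) (b j0) (ha j0) (hb j0) hj0⟩
  rw [Finset.sum_sub_distrib, hs, sub_self] at h
  exact h

lemma sum_shift {k : ℕ} (hk : 1 ≤ k) (f : ℕ → ℝ) :
    ∑ j : Fin (k - 1), f ((j : ℕ) + 1) + f 0 + f k = ∑ i ∈ Finset.range (k + 1), f i := by
  rw [Fin.sum_univ_eq_sum_range (fun i => f (i + 1)) (k - 1)]
  rw [Finset.sum_range_succ, ← Nat.succ_pred_eq_of_pos hk, Finset.sum_range_succ']
  simp [Nat.succ_pred_eq_of_pos hk]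

lemma sum_choose_real {k : ℕ} (hk : 1 ≤ k) :
    ∑ j : Fin (k - 1), (Nat.choose k ((j : ℕ) + 1) : ℝ) = 2 ^ k - 2 := by
  have h := sum_shift hk (fun i => (Nat.choose k i : ℝ))
  have h2 : ∑ i ∈ Finset.range (k + 1), (Nat.choose k i : ℝ) = 2 ^ k := by
    rw [← Nat.cast_sum]
    rw [Nat.sum_range_choose]
    push_cast; ring
  simp only [Nat.choose_zero_right, Nat.choose_self, Nat.cast_one] at h
  linarith

lemma sum_mul_choose_real {k : ℕ} (hk : 1 ≤ k) :
    ∑ j : Fin (k - 1), (((j : ℕ) + 1 : ℕ) : ℝ) * (Nat.choose k ((j : ℕ) + 1) : ℝ)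
      = (k : ℝ) * 2 ^ (k - 1) - k := by
  have hterm : ∀ j : Fin (k - 1),
      (((j : ℕ) + 1 : ℕ) : ℝ) * (Nat.choose k ((j : ℕ) + 1) : ℝ)
        = (k : ℝ) * (Nat.choose (k - 1) (j : ℕ) : ℝ) := by
    intro j
    have hnat : k * Nat.choose (k - 1) (j : ℕ) = Nat.choose k ((j : ℕ) + 1) * ((j : ℕ) + 1) := by
      have h0 := Nat.add_one_mul_choose_eq (k - 1) (j : ℕ)
      have hk' : k - 1 + 1 = k := by omega
      simpa [Nat.succ_eq_add_one, hk'] using h0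
    have hreal : (k : ℝ) * (Nat.choose (k - 1) (j : ℕ) : ℝ)
        = (Nat.choose k ((j : ℕ) + 1) : ℝ) * (((j : ℕ) + 1 : ℕ) : ℝ) := by
      exact_mod_cast hnat
    linear_combination -hreal
  rw [Finset.sum_congr rfl (fun j _ => hterm j), ← Finset.mul_sum]
  have h1 : ∑ j : Fin (k - 1), (Nat.choose (k - 1) (j : ℕ) : ℝ) = 2 ^ (k - 1) - 1 := by
    rw [Fin.sum_univ_eq_sum_range (fun i => (Nat.choose (k - 1) i : ℝ)) (k - 1)]
    have h2 : ∑ i ∈ Finset.range ((k - 1) + 1), (Nat.choose (k - 1) i : ℝ) = 2 ^ (k - 1) := by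
      rw [← Nat.cast_sum, Nat.sum_range_choose]; push_cast; ring
    rw [Finset.sum_range_succ, Nat.choose_self, Nat.cast_one] at h2
    linarith
  rw [h1]; ring

lemma sum_binom_real {k : ℕ} (hk : 1 ≤ k) (x y : ℝ) :
    ∑ j : Fin (k - 1), (Nat.choose k ((j : ℕ) + 1) : ℝ) * x ^ ((j : ℕ) + 1) * y ^ (k - ((j : ℕ) + 1))
      = (x + y) ^ k - y ^ k - x ^ k := by
  have h := sum_shift hk (fun i => (Nat.choose k i : ℝ) * x ^ i * y ^ (k - i))
  have h2 : ∑ i ∈ Finset.range (k + 1), (Nat.choose k i : ℝ) * x ^ i * y ^ (k - i)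
      = (x + y) ^ k := by
    rw [add_pow x y k]
    exact Finset.sum_congr rfl (fun i _ => by ring)
  simp only [Nat.choose_zero_right, Nat.choose_self, Nat.cast_one, pow_zero, Nat.sub_zero,
    Nat.sub_self, one_mul, mul_one] at h
  linarith

set_option maxHeartbeats 2000000 in
/-- The function `F(t) = d·H(t) + (1-d)·H(p,1-p) - (d/k)·log k + d·Σ_j t_j·log C(k,j)`
on the simplex-slice `M' = {t ∈ [0,1]^{k-1} : Σ t_j = 1/k}` (indices `j = 1,…,k-1`
encoded as `Fin (k-1)` shifted by one) attains a unique global maximum at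
`t*_j = C(k,j)/(k(2^k-2))`; there `p(t*) = 1/2` and `F(t*) = log 2 + (d/k)·log(1-2^{1-k})`. -/
theorem stmt5 (d k : ℕ) (hd : 2 ≤ d) (hk : 3 ≤ k) :
    let M' : Set (Fin (k - 1) → ℝ) :=
      {t | (∀ j, t j ∈ Set.Icc (0 : ℝ) 1) ∧ ∑ j, t j = 1 / (k : ℝ)}
    let p : (Fin (k - 1) → ℝ) → ℝ := fun t => ∑ j : Fin (k - 1), (((j : ℕ) + 1 : ℕ) : ℝ) * t j
    let F : (Fin (k - 1) → ℝ) → ℝ := fun t =>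
      (d : ℝ) * (∑ j, -(t j) * Real.log (t j))
        + (1 - (d : ℝ)) * (-(p t) * Real.log (p t) - (1 - p t) * Real.log (1 - p t))
        - ((d : ℝ) / k) * Real.log k
        + (d : ℝ) * ∑ j, t j * Real.log (Nat.choose k ((j : ℕ) + 1))
    let tstar : Fin (k - 1) → ℝ :=
      fun j => (Nat.choose k ((j : ℕ) + 1) : ℝ) / ((k : ℝ) * (2 ^ k - 2))
    tstar ∈ M' ∧ p tstar = 1 / 2 ∧
      F tstar = Real.log 2 + ((d : ℝ) / k) * Real.log (1 - 2 / 2 ^ k) ∧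
      ∀ t ∈ M', t ≠ tstar → F t < F tstar := by
  intro M' p F tstar
  have hk1 : 1 ≤ k := by omega
  have hkR : (0 : ℝ) < k := by exact_mod_cast (by omega : 0 < k)
  have hS0 : (0 : ℝ) < 2 ^ k - 2 := by
    have : (2 : ℝ) ^ 3 ≤ 2 ^ k := pow_le_pow_right₀ (by norm_num) hk
    norm_num at this ⊢; linarith
  have hc : ∀ j : Fin (k - 1), (0 : ℝ) < (Nat.choose k ((j : ℕ) + 1) : ℝ) := by
    intro j
    have hj : (j : ℕ) + 1 ≤ k := by have := j.isLt; omega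
    exact_mod_cast Nat.choose_pos hj
  have hSsum : ∑ j : Fin (k - 1), (Nat.choose k ((j : ℕ) + 1) : ℝ) = 2 ^ k - 2 :=
    sum_choose_real hk1
  -- tstar ∈ M'
  have htsum : ∑ j, tstar j = 1 / (k : ℝ) := by
    simp only [tstar]
    rw [← Finset.sum_div, hSsum, mul_comm ((k : ℝ)) _, ← div_div, div_self (ne_of_gt hS0)]
  have hmem : tstar ∈ M' := by
    refine ⟨fun j => ⟨by positivity, ?_⟩, htsum⟩
    have hle : (Nat.choose k ((j : ℕ) + 1) : ℝ) ≤ 2 ^ k - 2 := by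
      rw [← hSsum]
      exact Finset.single_le_sum (fun i _ => (hc i).le) (Finset.mem_univ j)
    have hk1R : (1 : ℝ) ≤ k := by exact_mod_cast hk1
    show (Nat.choose k ((j : ℕ) + 1) : ℝ) / ((k : ℝ) * (2 ^ k - 2)) ≤ 1
    rw [div_le_one (by positivity)]
    nlinarith [hc j]
  -- p tstar = 1/2
  have hps : p tstar = 1 / 2 := by
    simp only [p, tstar]
    have : ∀ j : Fin (k - 1),
        (((j : ℕ) + 1 : ℕ) : ℝ) * ((Nat.choose k ((j : ℕ) + 1) : ℝ) / ((k : ℝ) * (2 ^ k - 2)))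
          = ((((j : ℕ) + 1 : ℕ) : ℝ) * (Nat.choose k ((j : ℕ) + 1) : ℝ)) / ((k : ℝ) * (2 ^ k - 2)) := by
      intro j; ring
    rw [Finset.sum_congr rfl (fun j _ => this j), ← Finset.sum_div, sum_mul_choose_real hk1]
    have h2k : (2 : ℝ) ^ k = 2 ^ (k - 1) * 2 := by
      rw [← pow_succ]; congr 1; omega
    rw [div_eq_div_iff (by positivity) (by norm_num)]
    rw [h2k]; ring
  -- generic representation of F
  have hFrep : ∀ t : Fin (k - 1) → ℝ, (∀ j, 0 ≤ t j) → (∑ j, t j = 1 / (k : ℝ)) →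
      F t = -(d : ℝ) * (∑ j, t j * Real.log ((k : ℝ) * t j / (Nat.choose k ((j : ℕ) + 1) : ℝ)))
        + (1 - (d : ℝ)) * (-(p t) * Real.log (p t) - (1 - p t) * Real.log (1 - p t)) := by
    intro t ht0 hts
    have hterm : ∀ j : Fin (k - 1),
        t j * Real.log ((k : ℝ) * t j / (Nat.choose k ((j : ℕ) + 1) : ℝ))
          = t j * Real.log (t j) + t j * Real.log k
            - t j * Real.log (Nat.choose k ((j : ℕ) + 1)) := by
      intro j
      rcases (ht0 j).eq_or_lt with h | h
      · simp [← h]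
      · rw [Real.log_div (by positivity) (ne_of_gt (hc j)),
          Real.log_mul (ne_of_gt hkR) (ne_of_gt h)]
        ring
    have hsum1 : ∑ j, t j * Real.log ((k : ℝ) * t j / (Nat.choose k ((j : ℕ) + 1) : ℝ))
        = (∑ j, t j * Real.log (t j)) + (1 / (k : ℝ)) * Real.log k
          - ∑ j, t j * Real.log (Nat.choose k ((j : ℕ) + 1)) := by
      rw [Finset.sum_congr rfl (fun j _ => hterm j), Finset.sum_sub_distrib,
        Finset.sum_add_distrib, ← Finset.sum_mul, hts]
    simp only [F]
    rw [hsum1]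
    have : ∑ j, -(t j) * Real.log (t j) = -∑ j, t j * Real.log (t j) := by
      rw [← Finset.sum_neg_distrib]
      exact Finset.sum_congr rfl (fun j _ => by ring)
    rw [this]
    field_simp
    ring
  -- value of the entropy-like sum at tstar
  have hLstar : ∑ j, tstar j * Real.log ((k : ℝ) * tstar j / (Nat.choose k ((j : ℕ) + 1) : ℝ))
      = -(1 / (k : ℝ)) * Real.log (2 ^ k - 2) := by
    have hterm : ∀ j : Fin (k - 1),
        tstar j * Real.log ((k : ℝ) * tstar j / (Nat.choose k ((j : ℕ) + 1) : ℝ))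
          = tstar j * (-Real.log (2 ^ k - 2)) := by
      intro j
      have harg : (k : ℝ) * tstar j / (Nat.choose k ((j : ℕ) + 1) : ℝ) = (2 ^ k - 2)⁻¹ := by
        show (k : ℝ) * ((Nat.choose k ((j : ℕ) + 1) : ℝ) / ((k : ℝ) * (2 ^ k - 2)))
            / (Nat.choose k ((j : ℕ) + 1) : ℝ) = (2 ^ k - 2)⁻¹
        field_simp [ne_of_gt (hc j)]
      rw [harg, Real.log_inv]
    rw [Finset.sum_congr rfl (fun j _ => hterm j), ← Finset.sum_mul, htsum]
    ring
  have hFstar : F tstar = ((d : ℝ) / k) * Real.log (2 ^ k - 2) + (1 - (d : ℝ)) * Real.log 2 := by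
    rw [hFrep tstar (fun j => (hmem.1 j).1) htsum, hLstar, hps]
    have hlog2 : Real.log (1 / 2 : ℝ) = -Real.log 2 := by
      rw [one_div, Real.log_inv]
    norm_num [hlog2]
    ring
  refine ⟨hmem, hps, ?_, ?_⟩
  · -- F tstar equals the stated value
    rw [hFstar]
    have h1 : (1 : ℝ) - 2 / 2 ^ k = (2 ^ k - 2) / 2 ^ k := by
      field_simp
    rw [h1, Real.log_div (ne_of_gt hS0) (by positivity), Real.log_pow]
    push_cast
    field_simp
    ring
  · -- the strict maximality
    intro t ht hne
    obtain ⟨hbd, hsum⟩ := ht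
    have ht0 : ∀ j, 0 ≤ t j := fun j => (hbd j).1
    set pt := p t with hpt
    set AA := ∑ j, t j * Real.log ((k : ℝ) * t j / (Nat.choose k ((j : ℕ) + 1) : ℝ)) with hAA
    -- bounds on pt
    have hptsum : pt = ∑ j : Fin (k - 1), (((j : ℕ) + 1 : ℕ) : ℝ) * t j := rfl
    have hpt_lb : 1 / (k : ℝ) ≤ pt := by
      rw [hptsum, ← hsum]
      apply Finset.sum_le_sum
      intro j _
      have h1 : (1 : ℝ) ≤ (((j : ℕ) + 1 : ℕ) : ℝ) := by exact_mod_cast Nat.one_le_iff_ne_zero.mpr (by omega)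
      nlinarith [ht0 j]
    have hpt_ub : pt ≤ ((k : ℝ) - 1) / k := by
      have h2 : pt ≤ ∑ j : Fin (k - 1), ((k : ℝ) - 1) * t j := by
        rw [hptsum]
        apply Finset.sum_le_sum
        intro j _
        have hj : (j : ℕ) + 1 ≤ k - 1 := j.isLt
        have h1 : (((j : ℕ) + 1 : ℕ) : ℝ) ≤ (k : ℝ) - 1 := by
          have : ((j : ℕ) + 1 : ℕ) ≤ (k - 1 : ℕ) := hj
          have hcast : ((k - 1 : ℕ) : ℝ) = (k : ℝ) - 1 := by
            push_cast [Nat.cast_sub hk1]; ring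
          calc (((j : ℕ) + 1 : ℕ) : ℝ) ≤ ((k - 1 : ℕ) : ℝ) := by exact_mod_cast this
            _ = (k : ℝ) - 1 := hcast
        nlinarith [ht0 j]
      rw [← Finset.mul_sum, hsum] at h2
      calc pt ≤ ((k : ℝ) - 1) * (1 / k) := h2
        _ = ((k : ℝ) - 1) / k := by ring
    have hpt0 : 0 < pt := lt_of_lt_of_le (by positivity) hpt_lb
    have hpt1 : pt < 1 := by
      apply lt_of_le_of_lt hpt_ub
      rw [div_lt_one hkR]; linarith
    set u := 1 - pt with hu
    have hu0 : 0 < u := by simp only [hu]; linarith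
    -- strict positivity of X = AA + (1/k) log S
    have hXpos : 0 < AA + (1 / (k : ℝ)) * Real.log (2 ^ k - 2) := by
      have hgibbs := gibbs_lt (fun j => (k : ℝ) * t j)
        (fun j => (Nat.choose k ((j : ℕ) + 1) : ℝ) / (2 ^ k - 2))
        (fun j => mul_nonneg hkR.le (ht0 j))
        (fun j => div_pos (hc j) hS0)
        (by rw [← Finset.sum_div, hSsum, ← Finset.mul_sum, hsum,
              div_self (ne_of_gt hS0), mul_one_div, div_self (ne_of_gt hkR)])
        (by
          intro heq
          apply hne
          funext j
          have hthis : (k : ℝ) * t j = (Nat.choose k ((j : ℕ) + 1) : ℝ) / (2 ^ k - 2) :=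
            congrFun heq j
          show t j = (Nat.choose k ((j : ℕ) + 1) : ℝ) / ((k : ℝ) * (2 ^ k - 2))
          rw [eq_div_iff (ne_of_gt (mul_pos hkR hS0))]
          have := hS0
          nlinarith [hthis, (div_eq_iff (ne_of_gt hS0)).mp hthis.symm])
      have hterm : ∀ j : Fin (k - 1),
          ((k : ℝ) * t j) * Real.log (((k : ℝ) * t j) / ((Nat.choose k ((j : ℕ) + 1) : ℝ) / (2 ^ k - 2)))
            = (k : ℝ) * (t j * Real.log ((k : ℝ) * t j / (Nat.choose k ((j : ℕ) + 1) : ℝ)))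
              + (k : ℝ) * t j * Real.log (2 ^ k - 2) := by
        intro j
        rcases (ht0 j).eq_or_lt with h | h
        · simp [← h]
        · have harg : ((k : ℝ) * t j) / ((Nat.choose k ((j : ℕ) + 1) : ℝ) / (2 ^ k - 2))
              = ((k : ℝ) * t j / (Nat.choose k ((j : ℕ) + 1) : ℝ)) * (2 ^ k - 2) := by
            field_simp
          rw [harg, Real.log_mul (ne_of_gt (div_pos (mul_pos hkR h) (hc j))) (ne_of_gt hS0)]
          ring
      rw [Finset.sum_congr rfl (fun j _ => hterm j), Finset.sum_add_distrib,
        ← Finset.mul_sum, ← hAA] at hgibbs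
      have hsum2 : ∑ j, (k : ℝ) * t j * Real.log (2 ^ k - 2)
          = Real.log (2 ^ k - 2) := by
        have : ∀ j : Fin (k - 1), (k : ℝ) * t j * Real.log (2 ^ k - 2)
            = ((k : ℝ) * Real.log (2 ^ k - 2)) * t j := fun j => by ring
        rw [Finset.sum_congr rfl (fun j _ => this j), ← Finset.mul_sum, hsum]
        field_simp
      rw [hsum2] at hgibbs
      have : 0 < (k : ℝ) * (AA + (1 / (k : ℝ)) * Real.log (2 ^ k - 2)) := by
        have hx : (k : ℝ) * (AA + (1 / (k : ℝ)) * Real.log (2 ^ k - 2))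
            = (k : ℝ) * AA + Real.log (2 ^ k - 2) := by field_simp
        rw [hx]; exact hgibbs
      nlinarith
    -- the comparison X ≥ Y via the tilted distribution
    set Z := 1 - pt ^ k - u ^ k with hZ
    have hZsum : ∑ j : Fin (k - 1),
        (Nat.choose k ((j : ℕ) + 1) : ℝ) * pt ^ ((j : ℕ) + 1) * u ^ (k - ((j : ℕ) + 1)) = Z := by
      rw [sum_binom_real hk1 pt u]
      have : pt + u = 1 := by simp only [hu]; ring
      rw [this, one_pow, hZ]
      ring
    have hZ0 : 0 < Z := by
      have h1 : pt ^ k < pt := pow_lt_self_of_lt_one₀ hpt0 hpt1 (by omega)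
      have h2 : u ^ k < u := pow_lt_self_of_lt_one₀ hu0 (by simp only [hu]; linarith) (by omega)
      simp only [hZ, hu] at *
      linarith
    have hXY : Real.log 2 - (-(pt) * Real.log pt - (1 - pt) * Real.log (1 - pt))
        ≤ AA + (1 / (k : ℝ)) * Real.log (2 ^ k - 2) := by
      -- Gibbs with the tilted distribution
      have hb : ∀ j : Fin (k - 1),
          0 < (Nat.choose k ((j : ℕ) + 1) : ℝ) * pt ^ ((j : ℕ) + 1) * u ^ (k - ((j : ℕ) + 1)) / Z := by
        intro j
        have := hc j
        positivity
      have hgibbs := gibbs_le (fun j => (k : ℝ) * t j)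
        (fun j => (Nat.choose k ((j : ℕ) + 1) : ℝ) * pt ^ ((j : ℕ) + 1) * u ^ (k - ((j : ℕ) + 1)) / Z)
        (fun j => mul_nonneg hkR.le (ht0 j))
        hb
        (by rw [← Finset.sum_div, hZsum, ← Finset.mul_sum, hsum,
              div_self (ne_of_gt hZ0), mul_one_div, div_self (ne_of_gt hkR)])
      -- expand the gibbs sum
      have hterm : ∀ j : Fin (k - 1),
          ((k : ℝ) * t j) * Real.log (((k : ℝ) * t j)
              / ((Nat.choose k ((j : ℕ) + 1) : ℝ) * pt ^ ((j : ℕ) + 1) * u ^ (k - ((j : ℕ) + 1)) / Z))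
            = (k : ℝ) * (t j * Real.log ((k : ℝ) * t j / (Nat.choose k ((j : ℕ) + 1) : ℝ)))
              - ((((j : ℕ) + 1 : ℕ) : ℝ) * t j) * ((k : ℝ) * Real.log pt)
              - ((k : ℝ) - (((j : ℕ) + 1 : ℕ) : ℝ)) * ((k : ℝ) * t j) * Real.log u
              + (k : ℝ) * t j * Real.log Z := by
        intro j
        rcases (ht0 j).eq_or_lt with h | h
        · simp [← h]
        · have hj : (j : ℕ) + 1 ≤ k := by have := j.isLt; omega
          have harg : ((k : ℝ) * t j)
              / ((Nat.choose k ((j : ℕ) + 1) : ℝ) * pt ^ ((j : ℕ) + 1) * u ^ (k - ((j : ℕ) + 1)) / Z)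
              = ((k : ℝ) * t j / (Nat.choose k ((j : ℕ) + 1) : ℝ))
                / pt ^ ((j : ℕ) + 1) / u ^ (k - ((j : ℕ) + 1)) * Z := by
            field_simp
          have hA : 0 < (k : ℝ) * t j := mul_pos hkR h
          have hC := hc j
          have hppow : 0 < pt ^ ((j : ℕ) + 1) := pow_pos hpt0 _
          have hupow : 0 < u ^ (k - ((j : ℕ) + 1)) := pow_pos hu0 _
          rw [harg, Real.log_mul (ne_of_gt (div_pos (div_pos (div_pos hA hC) hppow) hupow))
              (ne_of_gt hZ0),
            Real.log_div (ne_of_gt (div_pos (div_pos hA hC) hppow)) (ne_of_gt hupow),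
            Real.log_div (ne_of_gt (div_pos hA hC)) (ne_of_gt hppow),
            Real.log_pow, Real.log_pow]
          have hcast : ((k - ((j : ℕ) + 1) : ℕ) : ℝ) = (k : ℝ) - (((j : ℕ) + 1 : ℕ) : ℝ) := by
            push_cast [Nat.cast_sub hj]; ring
          rw [hcast]
          push_cast
          ring
      rw [Finset.sum_congr rfl (fun j _ => hterm j)] at hgibbs
      rw [Finset.sum_add_distrib, Finset.sum_sub_distrib, Finset.sum_sub_distrib] at hgibbs
      -- identify the sums
      have e1 : ∑ j : Fin (k - 1), ((((j : ℕ) + 1 : ℕ) : ℝ) * t j) * ((k : ℝ) * Real.log pt)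
          = (k : ℝ) * pt * Real.log pt := by
        rw [← Finset.sum_mul, ← hptsum]; ring
      have e2 : ∑ j : Fin (k - 1),
          ((k : ℝ) - (((j : ℕ) + 1 : ℕ) : ℝ)) * ((k : ℝ) * t j) * Real.log u
          = (k : ℝ) * u * Real.log u := by
        have expand : ∀ j : Fin (k - 1),
            ((k : ℝ) - (((j : ℕ) + 1 : ℕ) : ℝ)) * ((k : ℝ) * t j) * Real.log u
              = ((k : ℝ) * (k : ℝ) * Real.log u) * t j
                - ((k : ℝ) * Real.log u) * ((((j : ℕ) + 1 : ℕ) : ℝ) * t j) := by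
          intro j; ring
        rw [Finset.sum_congr rfl (fun j _ => expand j), Finset.sum_sub_distrib,
          ← Finset.mul_sum, ← Finset.mul_sum, hsum, ← hptsum]
        simp only [hu]
        field_simp
      have e3 : ∑ j : Fin (k - 1), (k : ℝ) * (t j * Real.log ((k : ℝ) * t j / (Nat.choose k ((j : ℕ) + 1) : ℝ)))
          = (k : ℝ) * AA := by
        rw [← Finset.mul_sum, ← hAA]
      have e4 : ∑ j : Fin (k - 1), (k : ℝ) * t j * Real.log Z = Real.log Z := by
        have : ∀ j : Fin (k - 1), (k : ℝ) * t j * Real.log Z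
            = ((k : ℝ) * Real.log Z) * t j := fun j => by ring
        rw [Finset.sum_congr rfl (fun j _ => this j), ← Finset.mul_sum, hsum]
        field_simp
      rw [e1, e2, e3, e4] at hgibbs
      -- hgibbs : 0 ≤ k*AA - k*pt*log pt - k*u*log u + log Z
      -- the convexity bound : log (2^k - 2) - log Z ≥ k log 2
      have hconv : (2 : ℝ) ≤ 2 ^ k * (pt ^ k + u ^ k) := by
        have hcv := (convexOn_pow (𝕜 := ℝ) k).2 (Set.mem_Ici.mpr hpt0.le) (Set.mem_Ici.mpr hu0.le)
          (by norm_num : (0:ℝ) ≤ 1/2) (by norm_num : (0:ℝ) ≤ 1/2) (by norm_num)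
        simp only [smul_eq_mul] at hcv
        have hmid : (1 / 2 : ℝ) * pt + (1 / 2 : ℝ) * u = 1 / 2 := by
          simp only [hu]; ring
        rw [hmid] at hcv
        have hhalf : ((1 / 2 : ℝ)) ^ k = 1 / 2 ^ k := by
          rw [div_pow]; norm_num
        rw [hhalf] at hcv
        have h2k : (0 : ℝ) < 2 ^ k := by positivity
        calc (2 : ℝ) = 2 ^ k * (2 * (1 / 2 ^ k)) := by field_simp
          _ ≤ 2 ^ k * (pt ^ k + u ^ k) := by
              apply mul_le_mul_of_nonneg_left _ h2k.le
              linarith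
      have hlogZ : (k : ℝ) * Real.log 2 + Real.log Z ≤ Real.log (2 ^ k - 2) := by
        have hZle : 2 ^ k * Z ≤ 2 ^ k - 2 := by
          simp only [hZ]
          nlinarith
        have hlog := Real.log_le_log (by positivity : (0:ℝ) < 2 ^ k * Z) hZle
        rw [Real.log_mul (by positivity) (ne_of_gt hZ0), Real.log_pow] at hlog
        linarith
      -- combine
      have hkinv : (0 : ℝ) < 1 / (k : ℝ) := by positivity
      simp only [hu] at hgibbs
      -- hgibbs : 0 ≤ k*AA - k*pt*log pt - k*(1-pt)*log(1-pt) + log Z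
      have step : -(pt) * Real.log pt - (1 - pt) * Real.log (1 - pt) + AA + (1 / (k : ℝ)) * Real.log Z ≥ 0 := by
        have hk' : (k : ℝ) ≠ 0 := ne_of_gt hkR
        have := mul_le_mul_of_nonneg_left hgibbs hkinv.le
        rw [mul_zero] at this
        have hexp : (1 / (k : ℝ)) * ((k : ℝ) * AA - (k : ℝ) * pt * Real.log pt
            - (k : ℝ) * (1 - pt) * Real.log (1 - pt) + Real.log Z)
            = AA - pt * Real.log pt - (1 - pt) * Real.log (1 - pt) + (1 / (k : ℝ)) * Real.log Z := by
          field_simp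
        rw [hexp] at this
        linarith
      have hlogdiv : Real.log 2 ≤ (1 / (k : ℝ)) * (Real.log (2 ^ k - 2) - Real.log Z) := by
        rw [← sub_nonneg]
        have : (1 / (k : ℝ)) * (Real.log (2 ^ k - 2) - Real.log Z) - Real.log 2
            = (1 / (k : ℝ)) * ((Real.log (2 ^ k - 2) - Real.log Z) - (k : ℝ) * Real.log 2) := by
          field_simp
        rw [this]
        apply mul_nonneg hkinv.le
        linarith
      linarith
    -- final combination
    rw [hFrep t ht0 hsum, hFstar]
    have hd2 : (2 : ℝ) ≤ (d : ℝ) := by exact_mod_cast hd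
    set X := AA + (1 / (k : ℝ)) * Real.log (2 ^ k - 2) with hX
    set Y := Real.log 2 - (-(pt) * Real.log pt - (1 - pt) * Real.log (1 - pt)) with hY
    have key : ((d : ℝ) - 1) * Y < (d : ℝ) * X := by
      rcases le_or_gt Y 0 with hY0 | hY0
      · have h1 : ((d : ℝ) - 1) * Y ≤ 0 := mul_nonpos_of_nonneg_of_nonpos (by linarith) hY0
        have h2 : 0 < (d : ℝ) * X := by positivity
        linarith
      · have h1 : (d : ℝ) * Y ≤ (d : ℝ) * X := mul_le_mul_of_nonneg_left hXY (by linarith)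
        nlinarith
    -- translate key into the goal
    have hgoal : -(d : ℝ) * AA + (1 - (d : ℝ)) * (-(pt) * Real.log pt - (1 - pt) * Real.log (1 - pt))
        < ((d : ℝ) / k) * Real.log (2 ^ k - 2) + (1 - (d : ℝ)) * Real.log 2 := by
      have hXe : (d : ℝ) * X = (d : ℝ) * AA + ((d : ℝ) / k) * Real.log (2 ^ k - 2) := by
        rw [hX]; field_simp
      have hYe : ((d : ℝ) - 1) * Y = ((d : ℝ) - 1) * Real.log 2
          - ((d : ℝ) - 1) * (-(pt) * Real.log pt - (1 - pt) * Real.log (1 - pt)) := by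
        rw [hY]; ring
      have hkey := key
      rw [hXe, hYe] at hkey
      linarith [hkey]
    exact hgoal
end

section
/- Let k ≥ 3 and d ≥ 2 be integers with k(d-1)/d > 1, and define g(x) = Σ_{j=1}^{k-1} (kx - j)·C(k,j)·((1-x)/x)^{j(1-d)/d} for x ∈ (0,1). Then for x ∈ (0,1), g(x) = 0 if and only if x = 1/2; moreover g(x) < 0 for x ∈ (0,1/2). -/
lemma key_sum (k : ℕ) (hk : 1 ≤ k) (y t : ℝ) :
    ∑ j ∈ Finset.Ioo 0 k, ((k : ℝ) * y - (j : ℝ)) * (Nat.choose k j : ℝ) * t ^ j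
      = (k : ℝ) * y * (1 + t) ^ k - (k : ℝ) * t * (1 + t) ^ (k - 1) - (k : ℝ) * y
        - ((k : ℝ) * y - (k : ℝ)) * t ^ k := by
  obtain ⟨m, rfl⟩ : ∃ m, k = m + 1 := ⟨k - 1, by omega⟩
  have h1 : ∀ n : ℕ, ∑ j ∈ Finset.range (n + 1), (Nat.choose n j : ℝ) * t ^ j = (1 + t) ^ n := by
    intro n
    rw [add_comm 1 t, add_pow]
    simp only [one_pow]
    exact Finset.sum_congr rfl fun j _ => by ring
  have h2 : ∑ j ∈ Finset.range (m + 2), (j : ℝ) * (Nat.choose (m + 1) j : ℝ) * t ^ j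
      = ((m : ℝ) + 1) * t * (1 + t) ^ m := by
    rw [Finset.sum_range_succ']
    have step : ∀ i ∈ Finset.range (m + 1),
        ((i + 1 : ℕ) : ℝ) * (Nat.choose (m + 1) (i + 1) : ℝ) * t ^ (i + 1)
          = ((m : ℝ) + 1) * t * ((Nat.choose m i : ℝ) * t ^ i) := by
      intro i _
      have hnat : (m + 1) * Nat.choose m i = Nat.choose (m + 1) (i + 1) * (i + 1) := by
        simpa using Nat.add_one_mul_choose_eq m i
      have hc : ((m : ℝ) + 1) * (Nat.choose m i : ℝ)
          = (Nat.choose (m + 1) (i + 1) : ℝ) * ((i : ℝ) + 1) := by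
        exact_mod_cast congrArg (Nat.cast : ℕ → ℝ) hnat
      push_cast
      linear_combination (-(t ^ (i + 1))) * hc
    rw [Finset.sum_congr rfl step, ← Finset.mul_sum, h1 m]
    push_cast
    ring
  have htot : ∑ j ∈ Finset.range (m + 2),
      (((m + 1 : ℕ) : ℝ) * y - (j : ℝ)) * (Nat.choose (m + 1) j : ℝ) * t ^ j
      = ((m + 1 : ℕ) : ℝ) * y * (1 + t) ^ (m + 1) - ((m : ℝ) + 1) * t * (1 + t) ^ m := by
    have : ∑ j ∈ Finset.range (m + 2),
        (((m + 1 : ℕ) : ℝ) * y - (j : ℝ)) * (Nat.choose (m + 1) j : ℝ) * t ^ j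
        = ((m + 1 : ℕ) : ℝ) * y * (∑ j ∈ Finset.range (m + 2), (Nat.choose (m + 1) j : ℝ) * t ^ j)
          - ∑ j ∈ Finset.range (m + 2), (j : ℝ) * (Nat.choose (m + 1) j : ℝ) * t ^ j := by
      rw [Finset.mul_sum, ← Finset.sum_sub_distrib]
      exact Finset.sum_congr rfl fun j _ => by ring
    rw [this, h1 (m + 1), h2]
  have hset : Finset.range (m + 2) = insert 0 (insert (m + 1) (Finset.Ioo 0 (m + 1))) := by
    ext j; simp [Finset.mem_Ioo]; omega
  have h0 : (0 : ℕ) ∉ insert (m + 1) (Finset.Ioo 0 (m + 1)) := by simp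
  have hK : (m + 1) ∉ Finset.Ioo 0 (m + 1) := by simp
  rw [hset, Finset.sum_insert h0, Finset.sum_insert hK] at htot
  simp only [Nat.cast_zero, Nat.choose_zero_right, Nat.cast_one, pow_zero, Nat.choose_self] at htot
  simp only [Nat.add_sub_cancel]
  push_cast at htot ⊢
  linarith [htot]
/-- For `g(x) = Σ_{j=1}^{k-1} (kx-j)·C(k,j)·((1-x)/x)^{j(1-d)/d}` on `(0,1)` (with `k ≥ 3`,
`d ≥ 2`, `k(d-1)/d > 1`): `g(x) = 0` iff `x = 1/2`, and `g(x) < 0` for `x ∈ (0,1/2)`. -/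
theorem stmt6 (k d : ℕ) (hk : 3 ≤ k) (hd : 2 ≤ d)
    (h : 1 < (k : ℝ) * ((d : ℝ) - 1) / d) :
    ∀ x : ℝ, x ∈ Set.Ioo (0 : ℝ) 1 →
      ((∑ j ∈ Finset.Ioo 0 k, ((k : ℝ) * x - (j : ℝ)) * (Nat.choose k j : ℝ) *
          ((1 - x) / x) ^ ((j : ℝ) * (1 - (d : ℝ)) / d) = 0) ↔ x = 1 / 2)
      ∧ (x < 1 / 2 →
        ∑ j ∈ Finset.Ioo 0 k, ((k : ℝ) * x - (j : ℝ)) * (Nat.choose k j : ℝ) *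
          ((1 - x) / x) ^ ((j : ℝ) * (1 - (d : ℝ)) / d) < 0) := by
  intro x hx
  obtain ⟨hx0, hx1⟩ := hx
  have h1x : 0 < 1 - x := by linarith
  have hd0 : (0 : ℝ) < d := by positivity
  set α : ℝ := ((d : ℝ) - 1) / d with hα
  have hα0 : 0 < α := by
    rw [hα]
    apply div_pos _ hd0
    have : (2 : ℝ) ≤ d := by exact_mod_cast hd
    linarith
  have hα1 : α < 1 := by
    rw [hα, div_lt_one hd0]; linarith
  set s : ℝ := x / (1 - x) with hs_def
  have hs : 0 < s := div_pos hx0 h1x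
  set t : ℝ := s ^ α with ht_def
  have ht : 0 < t := Real.rpow_pos_of_pos hs α
  have hterm : ∀ j ∈ Finset.Ioo 0 k,
      ((k : ℝ) * x - (j : ℝ)) * (Nat.choose k j : ℝ) *
          ((1 - x) / x) ^ ((j : ℝ) * (1 - (d : ℝ)) / d)
        = ((k : ℝ) * x - (j : ℝ)) * (Nat.choose k j : ℝ) * t ^ j := by
    intro j _
    congr 1
    have hr : 0 < (1 - x) / x := div_pos h1x hx0
    have he : (j : ℝ) * (1 - (d : ℝ)) / d = (-α) * (j : ℝ) := by
      rw [hα]; field_simp; ring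
    rw [he, Real.rpow_mul hr.le, Real.rpow_natCast]
    congr 1
    rw [Real.rpow_neg hr.le, ← Real.inv_rpow hr.le, inv_div, ht_def, hs_def]
  have hrw : (∑ j ∈ Finset.Ioo 0 k, ((k : ℝ) * x - (j : ℝ)) * (Nat.choose k j : ℝ) *
          ((1 - x) / x) ^ ((j : ℝ) * (1 - (d : ℝ)) / d))
      = (k : ℝ) * (1 - x) * ((1 + t) ^ (k - 1) * (s - t) + (t ^ k - s)) := by
    rw [Finset.sum_congr rfl hterm, key_sum k (by omega) x t]
    have hk1 : (1 + t) ^ k = (1 + t) ^ (k - 1) * (1 + t) := by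
      conv_lhs => rw [show k = (k - 1) + 1 by omega]
      rw [pow_succ]
    rw [hk1, hs_def]
    field_simp
    ring
  -- sign analysis
  have hneg : x < 1 / 2 → (1 + t) ^ (k - 1) * (s - t) + (t ^ k - s) < 0 := by
    intro hlt
    have hslt : s < 1 := by rw [hs_def, div_lt_one h1x]; linarith
    have htlt1 : t < 1 := Real.rpow_lt_one hs.le hslt hα0
    have hst : s < t := by
      have := Real.rpow_lt_rpow_of_exponent_gt hs hslt hα1
      rwa [Real.rpow_one] at this
    have htk : t ^ k < t := by
      have := pow_lt_pow_right_of_lt_one₀ ht htlt1 (show 1 < k by omega)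
      simpa using this
    have hone : (1 : ℝ) ≤ (1 + t) ^ (k - 1) := one_le_pow₀ (by linarith)
    have hfac : (1 + t) ^ (k - 1) * (s - t) ≤ 1 * (s - t) :=
      mul_le_mul_of_nonpos_right hone (by linarith)
    nlinarith
  have hpos : 1 / 2 < x → 0 < (1 + t) ^ (k - 1) * (s - t) + (t ^ k - s) := by
    intro hlt
    have hs1 : 1 < s := by rw [hs_def, lt_div_iff₀ h1x]; linarith
    have ht1 : 1 < t := Real.one_lt_rpow_iff_of_pos hs |>.mpr (Or.inl ⟨hs1, hα0⟩)
    have hts : t < s := by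
      have := Real.rpow_lt_rpow_of_exponent_lt hs1 hα1
      rwa [Real.rpow_one] at this
    have htk : s < t ^ k := by
      have h2 : t ^ k = s ^ (α * (k : ℝ)) := by
        rw [ht_def, ← Real.rpow_natCast (s ^ α) k, ← Real.rpow_mul hs.le]
      have hαk : 1 < α * (k : ℝ) := by
        have : α * (k : ℝ) = (k : ℝ) * ((d : ℝ) - 1) / d := by rw [hα]; ring
        linarith [this ▸ h]
      have := Real.rpow_lt_rpow_of_exponent_lt hs1 hαk
      rw [Real.rpow_one] at this
      rw [h2]; exact this
    have : 0 < (1 + t) ^ (k - 1) * (s - t) :=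
      mul_pos (pow_pos (by linarith) _) (by linarith)
    linarith
  have hzero : x = 1 / 2 → (1 + t) ^ (k - 1) * (s - t) + (t ^ k - s) = 0 := by
    intro heq
    have hs1 : s = 1 := by rw [hs_def, heq]; norm_num
    have ht1 : t = 1 := by rw [ht_def, hs1, Real.one_rpow]
    rw [hs1, ht1]; simp
  have hkx : 0 < (k : ℝ) * (1 - x) := by
    have : (0 : ℝ) < k := by exact_mod_cast Nat.lt_of_lt_of_le (by norm_num) hk
    positivity
  rw [hrw]
  constructor
  · constructor
    · intro h0
      rcases lt_trichotomy x (1 / 2) with hlt | heq | hgt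
      · exact absurd h0 (ne_of_lt (mul_neg_of_pos_of_neg hkx (hneg hlt)))
      · exact heq
      · exact absurd h0 (ne_of_gt (mul_pos hkx (hpos hgt)))
    · intro heq
      rw [hzero heq, mul_zero]
  · intro hlt
    exact mul_neg_of_pos_of_neg hkx (hneg hlt)
end

section
/- Let ψ(x) = H(x,1-x) + r·log(1 - (1 - x^k - (1-x)^k)/(2^{k-1} - 1)) with r = (log 2/2)·2^k - (1+log 2)/2 + η, η = O_k(1). Then ψ(2^{-k}) = 2^{-k} + O(k²·2^{-2k}) as k → ∞; in particular, for sufficiently large k, ψ(2^{-k}) > f(d,k) = log 2 + r·log(1-2^{1-k}) when η is bounded below by a positive constant. -/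
/-!
Write `x = 2⁻ᵏ`. Then `-x log x = k x log 2` exactly and `-(1 - x) log (1 - x) = x + O(x²)`.
Since `1 - xᵏ - (1 - x)ᵏ = k x + O(k² x²)` and `2ᵏ⁻¹ - 1 = (1 - 2x) / (2x)`, the argument `u` of
the second logarithm is `2 k x² + O(k² x³)`; with `r = log 2 / (2x) + O(1)` this gives
`r log (1 - u) = -k x log 2 + O(k² x²)`, cancelling the leading entropy term, so
`ψ = x + O(k² x²)`. A second-order expansion of `log (1 - 2x)` gives
`log 2 + r log (1 - 2x) = x - 2 η x + O(x²)`, which falls below `ψ` by about `2 η x`.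
-/

open Real Filter Finset

lemma abs_log_one_sub_add_sum_le {t : ℝ} (ht : |t| ≤ 1 / 2) (n : ℕ) :
    |(∑ i ∈ range n, t ^ (i + 1) / (i + 1)) + log (1 - t)| ≤ 2 * |t| ^ (n + 1) := by
  calc _ ≤ |t| ^ (n + 1) / (1 - |t|) := abs_log_sub_add_sum_range_le (by linarith) n
    _ ≤ 2 * |t| ^ (n + 1) := by
      rw [div_le_iff₀ (by linarith)]
      nlinarith [pow_nonneg (abs_nonneg t) (n + 1)]

lemma abs_log_one_sub_add_le {t : ℝ} (ht : |t| ≤ 1 / 2) :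
    |log (1 - t) + t| ≤ 2 * t ^ 2 := by
  simpa [add_comm, sq_abs] using abs_log_one_sub_add_sum_le ht 1

lemma abs_log_one_sub_add_add_le {t : ℝ} (ht : |t| ≤ 1 / 2) :
    |log (1 - t) + t + t ^ 2 / 2| ≤ 2 * |t| ^ 3 := by
  have h := abs_log_one_sub_add_sum_le ht 2
  simp only [sum_range_succ, sum_range_zero] at h
  convert h using 2
  push_cast
  ring

lemma abs_one_sub_mul_log_one_sub_add_le {x : ℝ} (hx : |x| ≤ 1 / 2) :
    |(1 - x) * log (1 - x) + x| ≤ 4 * x ^ 2 := by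
  have hlog := abs_log_one_sub_add_le hx
  have h1x : |1 - x| ≤ 3 / 2 := by
    have := abs_sub (1 : ℝ) x; rw [abs_one] at this; linarith
  calc |(1 - x) * log (1 - x) + x| = |(1 - x) * (log (1 - x) + x) + x ^ 2| := by ring_nf
    _ ≤ |1 - x| * |log (1 - x) + x| + x ^ 2 :=
      (abs_add_le _ _).trans_eq (by rw [abs_mul, abs_of_nonneg (sq_nonneg x)])
    _ ≤ 3 / 2 * (2 * x ^ 2) + x ^ 2 := by gcongr
    _ = 4 * x ^ 2 := by ring

lemma one_sub_pow_le {x : ℝ} (h0 : 0 ≤ x) (h1 : x ≤ 1) (k : ℕ) :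
    (1 - x) ^ k ≤ 1 - k * x + (k * x) ^ 2 := by
  have hkx : 0 ≤ (k : ℝ) * x := by positivity
  have hbound : (1 - x) ^ k * (1 + k * x) ≤ 1 :=
    calc (1 - x) ^ k * (1 + k * x) ≤ (1 - x) ^ k * (1 + x) ^ k := by
          exact mul_le_mul_of_nonneg_left (one_add_mul_le_pow (by linarith) k)
            (pow_nonneg (by linarith) k)
      _ = (1 - x ^ 2) ^ k := by rw [← mul_pow]; ring
      _ ≤ 1 := pow_le_one₀ (by nlinarith) (by nlinarith)
  -- `(1 - y + y ^ 2) (1 + y) = 1 + y ^ 3 ≥ 1`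
  have : (1 - x) ^ k * (1 + k * x) ≤ (1 - k * x + (k * x) ^ 2) * (1 + k * x) := by
    nlinarith [pow_nonneg hkx 3]
  exact le_of_mul_le_mul_right this (by linarith)

lemma abs_one_sub_pow_sub_one_sub_pow_sub_le {k : ℕ} {x : ℝ} (hk : 2 ≤ k) (h0 : 0 ≤ x)
    (h1 : x ≤ 1) : |1 - x ^ k - (1 - x) ^ k - k * x| ≤ (k ^ 2 + 1) * x ^ 2 := by
  have hxk : x ^ k ≤ x ^ 2 := pow_le_pow_of_le_one h0 h1 hk
  have hbernoulli : 1 - k * x ≤ (1 - x) ^ k := by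
    simpa [← sub_eq_add_neg, mul_neg] using one_add_mul_le_pow (a := -x) (by linarith) k
  have := one_sub_pow_le h0 h1 k
  rw [abs_le]
  constructor <;> nlinarith [pow_nonneg h0 k]

lemma abs_one_sub_pow_sub_one_sub_pow_div_sub_le {k : ℕ} {x : ℝ} (hk : 2 ≤ k) (hx : x = 1 / 2 ^ k) :
    |(1 - x ^ k - (1 - x) ^ k) / (2 ^ (k - 1) - 1) - 2 * k * x ^ 2| ≤ 16 * k ^ 2 * x ^ 3 := by
  have hx0 : 0 < x := by rw [hx]; positivity
  have hx4 : x ≤ 1 / 4 := by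
    rw [hx]
    gcongr
    calc (4 : ℝ) = 2 ^ 2 := by norm_num
      _ ≤ 2 ^ k := pow_le_pow_right₀ one_le_two hk
  have hk1 : (1 : ℝ) ≤ k := by exact_mod_cast (by omega : 1 ≤ k)
  have hD : (2 : ℝ) ^ (k - 1) - 1 = (1 - 2 * x) / (2 * x) := by
    have : (2 : ℝ) ^ k = 2 ^ (k - 1) * 2 := by rw [← pow_succ]; congr 1; omega
    rw [hx, this]
    field_simp
  have h12x : 0 < 1 - 2 * x := by linarith
  have hsplit : (1 - x ^ k - (1 - x) ^ k) / (2 ^ (k - 1) - 1) - 2 * k * x ^ 2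
      = (1 - x ^ k - (1 - x) ^ k - k * x + 2 * k * x ^ 2) * (2 * x / (1 - 2 * x)) := by
    rw [hD]
    generalize 1 - x ^ k - (1 - x) ^ k = N
    field_simp [h12x.ne', hx0.ne']
    ring
  have hnum : |1 - x ^ k - (1 - x) ^ k - k * x + 2 * k * x ^ 2| ≤ 4 * k ^ 2 * x ^ 2 :=
    calc _ ≤ |1 - x ^ k - (1 - x) ^ k - k * x| + |2 * k * x ^ 2| := abs_add_le _ _
      _ ≤ (k ^ 2 + 1) * x ^ 2 + 2 * k * x ^ 2 := by
        rw [abs_of_nonneg (by positivity : (0 : ℝ) ≤ 2 * k * x ^ 2)]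
        linarith [abs_one_sub_pow_sub_one_sub_pow_sub_le hk hx0.le (by linarith)]
      _ ≤ 4 * k ^ 2 * x ^ 2 := by
        nlinarith [mul_nonneg (by linarith : (0 : ℝ) ≤ k - 1) (sq_nonneg x)]
  have hfactor : 2 * x / (1 - 2 * x) ≤ 4 * x := by
    rw [div_le_iff₀ h12x]
    nlinarith
  calc _ = |1 - x ^ k - (1 - x) ^ k - k * x + 2 * k * x ^ 2| * (2 * x / (1 - 2 * x)) := by
        rw [hsplit, abs_mul, abs_of_pos (div_pos (by positivity) h12x)]
    _ ≤ (4 * k ^ 2 * x ^ 2) * (4 * x) := by gcongr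
    _ = 16 * k ^ 2 * x ^ 3 := by ring

lemma abs_mul_log_one_sub_add_le {k x r u A : ℝ} (hk : 1 ≤ k) (hx : 0 < x)
    (hkx : k * x ≤ 1 / 16) (hr : |r - log 2 / (2 * x)| ≤ A)
    (hu : |u - 2 * k * x ^ 2| ≤ 16 * k ^ 2 * x ^ 3) :
    |r * log (1 - u) + k * log 2 * x| ≤ (4 * A + 9) * k ^ 2 * x ^ 2 := by
  have hA : 0 ≤ A := (abs_nonneg _).trans hr
  have hx16 : x ≤ 1 / 16 := by nlinarith
  have hu3 : |u| ≤ 3 * k * x ^ 2 :=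
    calc |u| ≤ |u - 2 * k * x ^ 2| + |2 * k * x ^ 2| := by
          linarith [abs_sub_abs_le_abs_sub u (2 * k * x ^ 2)]
      _ ≤ 16 * k ^ 2 * x ^ 3 + 2 * k * x ^ 2 := by
        rw [abs_of_nonneg (by positivity : (0 : ℝ) ≤ 2 * k * x ^ 2)]
        linarith
      _ ≤ 3 * k * x ^ 2 := by
        nlinarith [mul_nonneg (by positivity : (0 : ℝ) ≤ k * x ^ 2)
          (by linarith : 0 ≤ 1 / 16 - k * x)]
  have hlog : |log (1 - u) + u| ≤ 18 * k ^ 2 * x ^ 4 := by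
    have hu_half : |u| ≤ 1 / 2 := by nlinarith
    calc _ ≤ 2 * u ^ 2 := abs_log_one_sub_add_le hu_half
      _ = 2 * |u| ^ 2 := by rw [sq_abs]
      _ ≤ 2 * (3 * k * x ^ 2) ^ 2 := by gcongr
      _ = 18 * k ^ 2 * x ^ 4 := by ring
  have hL : |log 2 / (2 * x)| ≤ 1 / (2 * x) := by
    rw [abs_of_pos (by positivity)]
    gcongr
    linarith [log_two_lt_d9]
  have hr_abs : |r| ≤ 1 / (2 * x) + A :=
    calc |r| ≤ |log 2 / (2 * x)| + |r - log 2 / (2 * x)| := by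
          linarith [abs_sub_abs_le_abs_sub r (log 2 / (2 * x))]
      _ ≤ 1 / (2 * x) + A := add_le_add hL hr
  have hsplit : r * log (1 - u) + k * log 2 * x = r * (log (1 - u) + u)
      + (log 2 / (2 * x) - r) * u + log 2 / (2 * x) * (2 * k * x ^ 2 - u) := by
    field_simp
    ring
  calc _ ≤ |r * (log (1 - u) + u)| + |(log 2 / (2 * x) - r) * u|
        + |log 2 / (2 * x) * (2 * k * x ^ 2 - u)| := hsplit ▸ abs_add_three _ _ _
    _ ≤ (1 / (2 * x) + A) * (18 * k ^ 2 * x ^ 4) + A * (3 * k * x ^ 2)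
        + 1 / (2 * x) * (16 * k ^ 2 * x ^ 3) := by
      rw [abs_mul, abs_mul, abs_mul, abs_sub_comm _ r, abs_sub_comm _ u]
      gcongr
    _ = 9 * k ^ 2 * x ^ 3 + 18 * A * k ^ 2 * x ^ 4 + 3 * A * k * x ^ 2 + 8 * k ^ 2 * x ^ 2 := by
      field_simp
      ring
    _ ≤ (4 * A + 9) * k ^ 2 * x ^ 2 := by
      have hk2x2 : 0 ≤ k ^ 2 * x ^ 2 := by positivity
      nlinarith [mul_le_mul_of_nonneg_left hx16 hk2x2,
        mul_le_mul_of_nonneg_left (by nlinarith : 18 * x ^ 2 ≤ 1) (mul_nonneg hA hk2x2),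
        mul_le_mul_of_nonneg_left (by nlinarith : k ≤ k ^ 2) (mul_nonneg hA (sq_nonneg x))]

lemma log_two_add_mul_log_one_sub_two_mul_le {x η B : ℝ} (hx0 : 0 < x) (hx : x ≤ 1 / 16)
    (hη0 : 0 ≤ η) (hηB : η ≤ B) :
    log 2 + (log 2 / (2 * x) - (1 + log 2) / 2 + η) * log (1 - 2 * x)
      ≤ x - 2 * η * x + (11 + B) * x ^ 2 := by
  set r := log 2 / (2 * x) - (1 + log 2) / 2 + η with hr
  have hB : 0 ≤ B := hη0.trans hηB
  have hx2 : 0 < 1 / (2 * x) := by positivity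
  have hL := log_two_lt_d9
  have hL0 := log_pos one_lt_two
  have hε : |log (1 - 2 * x) + 2 * x + (2 * x) ^ 2 / 2| ≤ 16 * x ^ 3 := by
    have h2x : |2 * x| = 2 * x := abs_of_pos (by linarith)
    have := abs_log_one_sub_add_add_le (t := 2 * x) (by rw [h2x]; linarith)
    rw [h2x] at this
    linarith
  have hr_abs : |r| ≤ 1 / (2 * x) + (1 + B) := by
    rw [abs_le]
    constructor
    · have : 0 ≤ log 2 / (2 * x) := by positivity
      linarith
    · have : log 2 / (2 * x) ≤ 1 / (2 * x) := by gcongr; linarith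
      linarith
  have hexpand : log 2 + r * log (1 - 2 * x) = x - 2 * η * x + (1 + log 2) * x ^ 2
      - 2 * η * x ^ 2 + r * (log (1 - 2 * x) + 2 * x + (2 * x) ^ 2 / 2) := by
    rw [hr]
    field_simp
    ring
  have hrε : r * (log (1 - 2 * x) + 2 * x + (2 * x) ^ 2 / 2) ≤ (9 + B) * x ^ 2 :=
    calc _ ≤ |r| * |log (1 - 2 * x) + 2 * x + (2 * x) ^ 2 / 2| := by
          rw [← abs_mul]; exact le_abs_self _
      _ ≤ (1 / (2 * x) + (1 + B)) * (16 * x ^ 3) := by gcongr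
      _ = 8 * x ^ 2 + 16 * (1 + B) * x ^ 3 := by field_simp; ring
      _ ≤ (9 + B) * x ^ 2 := by
        nlinarith [mul_le_mul_of_nonneg_left hx (by positivity : 0 ≤ (1 + B) * x ^ 2)]
  rw [hexpand]
  nlinarith [mul_nonneg hη0 (sq_nonneg x)]

lemma abs_entropy_add_mul_log_sub_le {k : ℕ} {x r A : ℝ} (hk : 2 ≤ k) (hx : x = 1 / 2 ^ k)
    (hkx : k * x ≤ 1 / 16) (hr : |r - log 2 / (2 * x)| ≤ A) :
    |-x * log x - (1 - x) * log (1 - x)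
        + r * log (1 - (1 - x ^ k - (1 - x) ^ k) / (2 ^ (k - 1) - 1)) - x|
      ≤ (4 * A + 13) * k ^ 2 * x ^ 2 := by
  have hx0 : 0 < x := by rw [hx]; positivity
  have hk1 : (1 : ℝ) ≤ k := by exact_mod_cast (by omega : 1 ≤ k)
  have hlogx : log x = -(k * log 2) := by rw [hx, one_div, log_inv, log_pow]
  have hcross := abs_mul_log_one_sub_add_le hk1 hx0 hkx hr (abs_one_sub_pow_sub_one_sub_pow_div_sub_le hk hx)
  have hent := abs_one_sub_mul_log_one_sub_add_le (x := x)
    (by rw [abs_of_pos hx0]; nlinarith)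
  set u := (1 - x ^ k - (1 - x) ^ k) / (2 ^ (k - 1) - 1)
  calc _ = |(r * log (1 - u) + k * log 2 * x) - ((1 - x) * log (1 - x) + x)| := by
        rw [hlogx]; ring_nf
    _ ≤ (4 * A + 9) * k ^ 2 * x ^ 2 + 4 * x ^ 2 := (abs_sub _ _).trans (add_le_add hcross hent)
    _ ≤ (4 * A + 13) * k ^ 2 * x ^ 2 := by
      nlinarith [mul_le_mul_of_nonneg_right (one_le_pow₀ hk1 : (1 : ℝ) ≤ k ^ 2) (sq_nonneg x)]

lemma eventually_mul_sq_add_lt_mul_two_pow (a b : ℝ) {c : ℝ} (hc : 0 < c) :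
    ∀ᶠ k : ℕ in atTop, a * k ^ 2 + b < c * 2 ^ k := by
  have hlim : Tendsto (fun k : ℕ ↦ a * ((k : ℝ) ^ 2 / 2 ^ k) + b * ((k : ℝ) ^ 0 / 2 ^ k))
      atTop (nhds 0) := by
    simpa using ((tendsto_pow_const_div_const_pow_of_one_lt 2 one_lt_two).const_mul a).add
      ((tendsto_pow_const_div_const_pow_of_one_lt 0 one_lt_two).const_mul b)
  filter_upwards [hlim.eventually_lt_const hc] with k hk
  have h2k : (0 : ℝ) < 2 ^ k := by positivity
  calc a * k ^ 2 + b = (a * ((k : ℝ) ^ 2 / 2 ^ k) + b * ((k : ℝ) ^ 0 / 2 ^ k)) * 2 ^ k := by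
        field_simp
    _ < c * 2 ^ k := mul_lt_mul_of_pos_right hk h2k

/-- With `r = (log 2/2)·2^k - (1+log 2)/2 + η`, `0 ≤ η ≤ B`, the function
`ψ(x) = H(x,1-x) + r·log(1 - (1-x^k-(1-x)^k)/(2^{k-1}-1))` satisfies
`ψ(2^{-k}) = 2^{-k} + O(k²·2^{-2k})`; and for sufficiently large `k`,
if `η ≥ η₀ > 0` then `ψ(2^{-k}) > f(d,k) = log 2 + r·log(1-2^{1-k})`. -/
theorem stmt12 (B η₀ : ℝ) (hB : 0 < B) (hη₀ : 0 < η₀) :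
    ∃ C > 0, ∃ K₀ : ℕ, ∀ k : ℕ, K₀ ≤ k → ∀ η : ℝ, 0 ≤ η → η ≤ B →
      let r : ℝ := Real.log 2 / 2 * 2 ^ k - (1 + Real.log 2) / 2 + η
      let x : ℝ := 1 / 2 ^ k
      let ψ : ℝ := -x * Real.log x - (1 - x) * Real.log (1 - x)
        + r * Real.log (1 - (1 - x ^ k - (1 - x) ^ k) / (2 ^ (k - 1) - 1))
      |ψ - 1 / 2 ^ k| ≤ C * k ^ 2 / 4 ^ k ∧
        (η₀ ≤ η → Real.log 2 + r * Real.log (1 - 2 / 2 ^ k) < ψ) := by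
  obtain ⟨K₀, hK₀⟩ := eventually_atTop.mp ((eventually_ge_atTop 2).and
    ((eventually_mul_sq_add_lt_mul_two_pow 16 0 one_pos).and
      (eventually_mul_sq_add_lt_mul_two_pow (4 * (1 + B) + 13) (11 + B)
        (by linarith : 0 < 2 * η₀))))
  refine ⟨4 * (1 + B) + 13, by linarith, K₀, fun k hk η hη0 hηB ↦ ?_⟩
  obtain ⟨hk2, hk16, hgap⟩ := hK₀ k hk
  intro r x ψ
  have hx : x = 1 / 2 ^ k := rfl
  have hx0 : 0 < x := by positivity
  have hPx : (2 : ℝ) ^ k * x = 1 := by rw [hx]; field_simp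
  have hk1 : (1 : ℝ) ≤ k := by exact_mod_cast (by omega : 1 ≤ k)
  have hkx : k * x ≤ 1 / 16 := by
    nlinarith [mul_lt_mul_of_pos_right hk16 hx0, mul_le_mul_of_nonneg_right
      (by nlinarith : (k : ℝ) ≤ k ^ 2) hx0.le]
  have hr : r = log 2 / (2 * x) - (1 + log 2) / 2 + η := by simp only [r, x]; field_simp
  have hψ : |ψ - x| ≤ (4 * (1 + B) + 13) * k ^ 2 * x ^ 2 := by
    refine abs_entropy_add_mul_log_sub_le (r := r) hk2 hx hkx ?_
    rw [hr, abs_le]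
    constructor <;> linarith [log_two_lt_d9, log_pos one_lt_two]
  have hx2 : x ^ 2 = 1 / 4 ^ k := by
    rw [hx, div_pow, one_pow, ← pow_mul, mul_comm, pow_mul]; norm_num
  refine ⟨by rw [show (4 * (1 + B) + 13) * (k : ℝ) ^ 2 / 4 ^ k
    = (4 * (1 + B) + 13) * k ^ 2 * x ^ 2 by rw [hx2]; ring]; exact hψ, fun hη ↦ ?_⟩
  have hf := log_two_add_mul_log_one_sub_two_mul_le hx0 (by nlinarith) hη0 hηB
  have hgap' : (4 * (1 + B) + 13) * k ^ 2 * x ^ 2 + (11 + B) * x ^ 2 < 2 * η₀ * x := by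
    have := mul_lt_mul_of_pos_right hgap (by positivity : (0 : ℝ) < x ^ 2)
    linear_combination this + 2 * η₀ * x * hPx
  rw [hr, show (2 : ℝ) / 2 ^ k = 2 * x by rw [hx]; ring]
  linarith [(abs_le.mp hψ).1, mul_le_mul_of_nonneg_right hη hx0.le]
end

section
/- Let Φ : X → Y be a surjective map between finite sets with uniform measures, such that all fibers Φ^{-1}(y) have the same cardinality. Suppose (Y,d_Y) with the uniform measure is (c₁,λ₁)-concentrated, each fiber Φ^{-1}(y) with its uniform measure and the metric d_X restricted to it is (c₂,λ₂)-concentrated, and for all y₁,y₂ ∈ Y there exists a coupling of the uniform measures on Φ^{-1}(y₁) and Φ^{-1}(y₂) supported on pairs (x₁,x₂) with d_X(x₁,x₂) ≤ d_Y(y₁,y₂). Then (X, d_X) with the uniform measure is (c₁+c₂, min(λ₁,λ₂)/4)-concentrated. -/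
/-!
Average `f` over each fiber to get `g : Y → ℝ`. Transporting mass along a coupling of two fibers
shows that `g` is 1-Lipschitz, and since the fibers have equal size, `g` has the same mean as `f`.
If `|f x - 𝔼 f| > ε`, then either `|f x - g (Φ x)| > ε / 2`, an event of density less than
`c₂ e^{-λ₂ ε² / 4}` in every fiber, or `|g (Φ x) - 𝔼 g| > ε / 2`, the pullback of an event of
density less than `c₁ e^{-λ₁ ε² / 4}` in `Y`.
-/

open Finset

section Coupling

variable {α : Type*} [Fintype α]

theorem sum_sum_mul_eq_average_of_row_sums {s : Finset α} {w : α → α → ℝ}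
    (hzero : ∀ a ∉ s, ∀ b, w a b = 0) (hrow : ∀ a ∈ s, ∑ b, w a b = 1 / #s) (f : α → ℝ) :
    ∑ a, ∑ b, w a b * f a = (∑ a ∈ s, f a) / #s := by
  calc ∑ a, ∑ b, w a b * f a = ∑ a ∈ s, (∑ b, w a b) * f a := by
        simp_rw [← Finset.sum_mul]
        refine (Finset.sum_subset (subset_univ s) fun a _ ha => ?_).symm
        simp [hzero a ha]
    _ = (∑ a ∈ s, f a) / #s := by
        rw [Finset.sum_div]
        exact Finset.sum_congr rfl fun a ha => by rw [hrow a ha]; ring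

theorem abs_average_sub_average_le_of_coupling {s t : Finset α} (hs : s.Nonempty)
    {f : α → ℝ} {D : ℝ} {w : α → α → ℝ} (hw : ∀ a b, 0 ≤ w a b)
    (hsupp : ∀ a b, w a b ≠ 0 → a ∈ s ∧ b ∈ t ∧ |f a - f b| ≤ D)
    (hrow : ∀ a ∈ s, ∑ b, w a b = 1 / #s) (hcol : ∀ b ∈ t, ∑ a, w a b = 1 / #t) :
    |(∑ a ∈ s, f a) / #s - (∑ b ∈ t, f b) / #t| ≤ D := by
  have hrow_zero : ∀ a ∉ s, ∀ b, w a b = 0 := fun a ha b => by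
    by_contra h; exact ha (hsupp a b h).1
  have hcol_zero : ∀ b ∉ t, ∀ a, w a b = 0 := fun b hb a => by
    by_contra h; exact hb (hsupp a b h).2.1
  have hmass : ∑ a, ∑ b, w a b = 1 := by
    simpa [hs.card_pos.ne'] using sum_sum_mul_eq_average_of_row_sums hrow_zero hrow 1
  have hleft := sum_sum_mul_eq_average_of_row_sums hrow_zero hrow f
  have hright : ∑ a, ∑ b, w a b * f b = (∑ b ∈ t, f b) / #t := by
    rw [Finset.sum_comm]
    exact sum_sum_mul_eq_average_of_row_sums (w := fun b a => w a b) hcol_zero hcol f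
  rw [← hleft, ← hright, ← Finset.sum_sub_distrib]
  calc |∑ a, (∑ b, w a b * f a - ∑ b, w a b * f b)|
      = |∑ a, ∑ b, w a b * (f a - f b)| := by simp_rw [mul_sub, Finset.sum_sub_distrib]
    _ ≤ ∑ a, ∑ b, |w a b * (f a - f b)| :=
        (abs_sum_le_sum_abs _ _).trans (sum_le_sum fun a _ => abs_sum_le_sum_abs _ _)
    _ ≤ ∑ a, ∑ b, w a b * D := by
        refine sum_le_sum fun a _ => sum_le_sum fun b _ => ?_
        rcases eq_or_ne (w a b) 0 with h | h
        · simp [h]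
        · rw [abs_mul, abs_of_nonneg (hw a b)]
          exact mul_le_mul_of_nonneg_left (hsupp a b h).2.2 (hw a b)
    _ = D := by simp_rw [← Finset.sum_mul, hmass, one_mul]

end Coupling

theorem ncard_le_add_of_abs_sub {α : Type*} [Finite α] (f g : α → ℝ) (E ε : ℝ) :
    {x | ε < |f x - E|}.ncard
      ≤ {x | ε / 2 < |f x - g x|}.ncard + {x | ε / 2 < |g x - E|}.ncard := by
  refine (Set.ncard_le_ncard fun x hx => ?_).trans (Set.ncard_union_le _ _)
  by_contra! h
  simp only [Set.mem_union, Set.mem_ofPred_eq, not_or, not_lt] at h hx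
  linarith [abs_sub_le (f x) (g x) E]

theorem mul_exp_add_mul_exp_le {c₁ c₂ : ℝ} (hc₁ : 0 ≤ c₁) (hc₂ : 0 ≤ c₂) (l₁ l₂ ε : ℝ) :
    c₂ * Real.exp (-l₂ * (ε / 2) ^ 2) + c₁ * Real.exp (-l₁ * (ε / 2) ^ 2)
      ≤ (c₁ + c₂) * Real.exp (-(min l₁ l₂) / 4 * ε ^ 2) := by
  set e := Real.exp (-(min l₁ l₂) / 4 * ε ^ 2)
  have key : ∀ l, min l₁ l₂ ≤ l → Real.exp (-l * (ε / 2) ^ 2) ≤ e :=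
    fun l hl => Real.exp_le_exp.mpr (by nlinarith [sq_nonneg ε])
  calc _ ≤ c₂ * e + c₁ * e := by
        gcongr c₂ * ?_ + c₁ * ?_
        exacts [key l₂ (min_le_right _ _), key l₁ (min_le_left _ _)]
    _ = _ := by ring

section Fibers

variable {X Y : Type*} [Fintype X] [DecidableEq Y] (Φ : X → Y)

noncomputable def fiberMean (f : X → ℝ) (y : Y) : ℝ :=
  (∑ x ∈ univ.filter fun x => Φ x = y, f x) / #(univ.filter fun x => Φ x = y)

variable {Φ}

theorem abs_fiberMean_sub_le_of_coupling [Dist X] [Dist Y] {f : X → ℝ}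
    (hf : ∀ x₁ x₂, |f x₁ - f x₂| ≤ dist x₁ x₂) {y₁ y₂ : Y}
    (hne : (univ.filter fun x => Φ x = y₁).Nonempty)
    (hcouple : ∃ w : X → X → ℝ,
      (∀ a b, 0 ≤ w a b) ∧
      (∀ a b, w a b ≠ 0 → Φ a = y₁ ∧ Φ b = y₂ ∧ dist a b ≤ dist y₁ y₂) ∧
      (∀ a, Φ a = y₁ → ∑ b, w a b = 1 / ((univ.filter fun x => Φ x = y₁).card : ℝ)) ∧
      (∀ b, Φ b = y₂ → ∑ a, w a b = 1 / ((univ.filter fun x => Φ x = y₂).card : ℝ))) :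
    |fiberMean Φ f y₁ - fiberMean Φ f y₂| ≤ dist y₁ y₂ := by
  obtain ⟨w, hw, hsupp, hrow, hcol⟩ := hcouple
  refine abs_average_sub_average_le_of_coupling hne hw (fun a b hab => ?_)
    (fun a ha => hrow a (mem_filter.mp ha).2) (fun b hb => hcol b (mem_filter.mp hb).2)
  obtain ⟨ha, hb, hdist⟩ := hsupp a b hab
  exact ⟨by simpa using ha, by simpa using hb, (hf a b).trans hdist⟩

variable [Fintype Y] {m : ℕ} (hm : ∀ y, #(univ.filter fun x => Φ x = y) = m)
include hm

theorem card_eq_card_mul_of_card_fiber_eq : Fintype.card X = Fintype.card Y * m := by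
  rw [← card_univ, card_eq_sum_card_fiberwise fun x _ => mem_univ (Φ x)]
  simp [hm, card_univ]

theorem average_fiberMean (f : X → ℝ) :
    (∑ y, fiberMean Φ f y) / Fintype.card Y = (∑ x, f x) / Fintype.card X := by
  simp only [fiberMean, hm, ← Finset.sum_div, sum_fiberwise, card_eq_card_mul_of_card_fiber_eq hm]
  rw [div_div, Nat.cast_mul, mul_comm]

theorem card_filter_comp_eq_mul (P : Y → Prop) [DecidablePred P] :
    #{x | P (Φ x)} = m * #{y | P y} := by
  rw [card_eq_sum_card_fiberwise fun x _ => mem_univ (Φ x), card_eq_sum_ones, mul_sum, sum_filter]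
  refine sum_congr rfl fun y _ => ?_
  rw [filter_filter]
  split_ifs with hy
  · rw [mul_one, ← hm y]
    congr 1; ext x; simp only [mem_filter, mem_univ, true_and]
    exact ⟨fun h => h.2, fun h => ⟨h ▸ hy, h⟩⟩
  · rw [card_eq_zero, filter_eq_empty_iff]
    rintro x - ⟨hx, rfl⟩
    exact hy hx

theorem ncard_setOf_comp_div_card (hm0 : m ≠ 0) (P : Y → Prop) :
    ({x | P (Φ x)}.ncard : ℝ) / Fintype.card X = ({y | P y}.ncard : ℝ) / Fintype.card Y := by
  classical
  simp only [← coe_filter_univ, Set.ncard_coe_finset, card_filter_comp_eq_mul hm P,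
    card_eq_card_mul_of_card_fiber_eq hm]
  push_cast
  rw [mul_comm (Fintype.card Y : ℝ), mul_div_mul_left _ _ (by exact_mod_cast hm0)]

theorem ncard_setOf_div_card_lt_of_fibers [Nonempty Y] (hm0 : m ≠ 0) (P : X → Y → Prop) {r : ℝ}
    (h : ∀ y, ({x | Φ x = y ∧ P x y}.ncard : ℝ) / #(univ.filter fun x => Φ x = y) < r) :
    ({x | P x (Φ x)}.ncard : ℝ) / Fintype.card X < r := by
  classical
  have hm_pos : (0 : ℝ) < m := by exact_mod_cast Nat.pos_of_ne_zero hm0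
  rw [div_lt_iff₀' (by rw [card_eq_card_mul_of_card_fiber_eq hm]; positivity), ← coe_filter_univ,
    Set.ncard_coe_finset, card_eq_sum_card_fiberwise fun x _ => mem_univ (Φ x),
    card_eq_card_mul_of_card_fiber_eq hm]
  push_cast
  calc ∑ y, (#{x ∈ univ.filter fun x => P x (Φ x) | Φ x = y} : ℝ)
      = ∑ y, ({x | Φ x = y ∧ P x y}.ncard : ℝ) := by
        refine sum_congr rfl fun y _ => ?_
        rw [filter_filter, ← Set.ncard_coe_finset, coe_filter_univ]
        congr 2; ext x
        exact ⟨fun ⟨h, hx⟩ => ⟨hx, hx ▸ h⟩, fun ⟨hx, h⟩ => ⟨hx ▸ h, hx⟩⟩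
    _ < ∑ _y : Y, m * r := sum_lt_sum_of_nonempty univ_nonempty fun y _ =>
        (div_lt_iff₀' hm_pos).mp (hm y ▸ h y)
    _ = Fintype.card Y * m * r := by simp [mul_assoc]

end Fibers

theorem stmt15_general {X Y : Type*} [Fintype X] [Fintype Y] [Nonempty X]
    [MetricSpace X] [MetricSpace Y] [DecidableEq Y]
    (Φ : X → Y)
    (hfib : ∀ y₁ y₂ : Y, (Finset.univ.filter fun x => Φ x = y₁).card
      = (Finset.univ.filter fun x => Φ x = y₂).card)
    (c₁ lam₁ c₂ lam₂ : ℝ) (hc₁ : 0 < c₁) (hc₂ : 0 < c₂)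
    (hY : ∀ f : Y → ℝ, (∀ y₁ y₂, |f y₁ - f y₂| ≤ dist y₁ y₂) → ∀ ε > 0,
      ({y : Y | ε < |f y - (∑ y', f y') / (Fintype.card Y : ℝ)|}.ncard : ℝ)
          / Fintype.card Y
        < c₁ * Real.exp (-lam₁ * ε ^ 2))
    (hfibconc : ∀ y : Y, ∀ f : X → ℝ,
      (∀ x₁ x₂, Φ x₁ = y → Φ x₂ = y → |f x₁ - f x₂| ≤ dist x₁ x₂) → ∀ ε > 0,
      ({x : X | Φ x = y ∧
            ε < |f x - (∑ x' ∈ Finset.univ.filter fun x' => Φ x' = y, f x')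
              / ((Finset.univ.filter fun x' => Φ x' = y).card : ℝ)|}.ncard : ℝ)
          / (Finset.univ.filter fun x' => Φ x' = y).card
        < c₂ * Real.exp (-lam₂ * ε ^ 2))
    (hcouple : ∀ y₁ y₂ : Y, ∃ w : X → X → ℝ,
      (∀ a b, 0 ≤ w a b) ∧
      (∀ a b, w a b ≠ 0 → Φ a = y₁ ∧ Φ b = y₂ ∧ dist a b ≤ dist y₁ y₂) ∧
      (∀ a, Φ a = y₁ → ∑ b, w a b
        = 1 / ((Finset.univ.filter fun x => Φ x = y₁).card : ℝ)) ∧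
      (∀ b, Φ b = y₂ → ∑ a, w a b
        = 1 / ((Finset.univ.filter fun x => Φ x = y₂).card : ℝ))) :
    ∀ f : X → ℝ, (∀ x₁ x₂, |f x₁ - f x₂| ≤ dist x₁ x₂) → ∀ ε > 0,
      ({x : X | ε < |f x - (∑ x', f x') / (Fintype.card X : ℝ)|}.ncard : ℝ)
          / Fintype.card X
        < (c₁ + c₂) * Real.exp (-(min lam₁ lam₂) / 4 * ε ^ 2) := by
  intro f hf ε hε
  obtain ⟨x₀⟩ := ‹Nonempty X›
  have : Nonempty Y := ⟨Φ x₀⟩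
  obtain ⟨m, hm⟩ : ∃ m, ∀ y, #(univ.filter fun x => Φ x = y) = m := ⟨_, fun y => hfib y (Φ x₀)⟩
  have hm0 : m ≠ 0 := hm (Φ x₀) ▸ (card_pos.mpr ⟨x₀, by simp⟩).ne'
  have hne : ∀ y, (univ.filter fun x => Φ x = y).Nonempty := fun y =>
    card_pos.mp (hm y ▸ Nat.pos_of_ne_zero hm0)
  set g := fiberMean Φ f
  set E := (∑ x, f x) / (Fintype.card X : ℝ) with hE
  have hfibers : ({x | ε / 2 < |f x - g (Φ x)|}.ncard : ℝ) / Fintype.card X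
      < c₂ * Real.exp (-lam₂ * (ε / 2) ^ 2) :=
    ncard_setOf_div_card_lt_of_fibers hm hm0 (fun x y => ε / 2 < |f x - g y|) fun y =>
      hfibconc y f (fun x₁ x₂ _ _ => hf x₁ x₂) (ε / 2) (half_pos hε)
  have hbase : ({x | ε / 2 < |g (Φ x) - E|}.ncard : ℝ) / Fintype.card X
      < c₁ * Real.exp (-lam₁ * (ε / 2) ^ 2) := by
    rw [ncard_setOf_comp_div_card hm hm0 (fun y => ε / 2 < |g y - E|), hE, ← average_fiberMean hm]
    exact hY g (fun y₁ y₂ => abs_fiberMean_sub_le_of_coupling hf (hne y₁) (hcouple y₁ y₂))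
      (ε / 2) (half_pos hε)
  calc _ ≤ (({x | ε / 2 < |f x - g (Φ x)|}.ncard : ℝ) + {x | ε / 2 < |g (Φ x) - E|}.ncard)
        / Fintype.card X := by
        gcongr
        exact_mod_cast ncard_le_add_of_abs_sub f (fun x => g (Φ x)) E ε
    _ < c₂ * Real.exp (-lam₂ * (ε / 2) ^ 2) + c₁ * Real.exp (-lam₁ * (ε / 2) ^ 2) := by
        rw [add_div]; linarith
    _ ≤ (c₁ + c₂) * Real.exp (-(min lam₁ lam₂) / 4 * ε ^ 2) :=
        mul_exp_add_mul_exp_le hc₁.le hc₂.le lam₁ lam₂ ε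

/-- Fibered concentration for finite uniform spaces: if `Φ : X → Y` is surjective with
equal-size fibers, the base `Y` is `(c₁,λ₁)`-concentrated, every fiber is
`(c₂,λ₂)`-concentrated, and uniform measures on any two fibers admit couplings supported
on pairs at distance at most the base distance, then `X` (uniform measure) is
`(c₁+c₂, min(λ₁,λ₂)/4)`-concentrated. -/
theorem stmt15 {X Y : Type*} [Fintype X] [Fintype Y] [Nonempty X]
    [MetricSpace X] [MetricSpace Y] [DecidableEq Y]
    (Φ : X → Y) (hsurj : Function.Surjective Φ)
    (hfib : ∀ y₁ y₂ : Y, (Finset.univ.filter fun x => Φ x = y₁).card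
      = (Finset.univ.filter fun x => Φ x = y₂).card)
    (c₁ lam₁ c₂ lam₂ : ℝ) (hc₁ : 0 < c₁) (hl₁ : 0 < lam₁) (hc₂ : 0 < c₂) (hl₂ : 0 < lam₂)
    (hY : ∀ f : Y → ℝ, (∀ y₁ y₂, |f y₁ - f y₂| ≤ dist y₁ y₂) → ∀ ε > 0,
      ({y : Y | ε < |f y - (∑ y', f y') / (Fintype.card Y : ℝ)|}.ncard : ℝ)
          / Fintype.card Y
        < c₁ * Real.exp (-lam₁ * ε ^ 2))
    (hfibconc : ∀ y : Y, ∀ f : X → ℝ,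
      (∀ x₁ x₂, Φ x₁ = y → Φ x₂ = y → |f x₁ - f x₂| ≤ dist x₁ x₂) → ∀ ε > 0,
      ({x : X | Φ x = y ∧
            ε < |f x - (∑ x' ∈ Finset.univ.filter fun x' => Φ x' = y, f x')
              / ((Finset.univ.filter fun x' => Φ x' = y).card : ℝ)|}.ncard : ℝ)
          / (Finset.univ.filter fun x' => Φ x' = y).card
        < c₂ * Real.exp (-lam₂ * ε ^ 2))
    (hcouple : ∀ y₁ y₂ : Y, ∃ w : X → X → ℝ,
      (∀ a b, 0 ≤ w a b) ∧
      (∀ a b, w a b ≠ 0 → Φ a = y₁ ∧ Φ b = y₂ ∧ dist a b ≤ dist y₁ y₂) ∧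
      (∀ a, Φ a = y₁ → ∑ b, w a b
        = 1 / ((Finset.univ.filter fun x => Φ x = y₁).card : ℝ)) ∧
      (∀ b, Φ b = y₂ → ∑ a, w a b
        = 1 / ((Finset.univ.filter fun x => Φ x = y₂).card : ℝ))) :
    ∀ f : X → ℝ, (∀ x₁ x₂, |f x₁ - f x₂| ≤ dist x₁ x₂) → ∀ ε > 0,
      ({x : X | ε < |f x - (∑ x', f x') / (Fintype.card X : ℝ)|}.ncard : ℝ)
          / Fintype.card X
        < (c₁ + c₂) * Real.exp (-(min lam₁ lam₂) / 4 * ε ^ 2) :=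
  stmt15_general Φ hfib c₁ lam₁ c₂ lam₂ hc₁ hc₂ hY hfibconc hcouple
end

section
/- Let χ : [n] → {0,1} be equitable (n even). The stabilizer subgroup H_χ = {g ∈ Sym(n) : χ(g·v) = χ(v) for all v}, equipped with the uniform measure and the normalized Hamming metric d(σ₁,σ₂) = (1/n)·#{i : σ₁(i) ≠ σ₂(i)}, is (4, n/16)-concentrated. -/
/-!
Maurey's martingale argument, run directly on `H_χ`. Reveal `g 0, g 1, …, g (n-1)` one value at
a time: the elements of `H_χ` agreeing with a fixed `p` on `{0, …, k-1}` split into fibres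
according to the value at `k`, and `x ↦ x * swap k (x⁻¹ b)` maps one fibre bijectively onto
another while changing `x` in at most two points. So for `K`-Lipschitz `f` (w.r.t. the
unnormalised Hamming distance) the fibre means differ by at most `2K`, Hoeffding's lemma bounds
each increment, and induction gives the sub-Gaussian bound
`∑_{g ∈ H_χ} exp (t (f g - 𝔼 f)) ≤ |H_χ| exp (n K² t² / 2)`. With `K = 1/n` the Chernoff
bound yields the tail `2 exp (-n ε² / 2)`.
-/

open Finset Real MeasureTheory ProbabilityTheory Equiv
open scoped BigOperators

theorem Finset.sum_exp_mul_le_of_sum_eq_zero {ι : Type*} {s : Finset ι} {X : ι → ℝ} {c : ℝ}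
    (hX : ∀ i ∈ s, ∀ j ∈ s, X i - X j ≤ c) (h0 : ∑ i ∈ s, X i = 0) (t : ℝ) :
    ∑ i ∈ s, exp (t * X i) ≤ #s * exp (c ^ 2 * t ^ 2 / 8) := by
  rcases s.eq_empty_or_nonempty with rfl | hs
  · simp
  obtain ⟨i₀, hi₀, hmin⟩ := s.exists_min_image X hs
  have : Nonempty s := hs.to_subtype
  let : MeasurableSpace ι := ⊤
  let μ := (PMF.uniformOfFintype s).toMeasure
  have hintegral (g : ι → ℝ) : ∫ i, g i ∂μ = (∑ i ∈ s, g i) / #s := by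
    rw [PMF.integral_eq_sum, ← Finset.sum_coe_sort s, Finset.sum_div]
    simp [div_eq_inv_mul]
  have hoeffding := (hasSubgaussianMGF_of_mem_Icc_of_integral_eq_zero (μ := μ)
    (X := fun i : s ↦ X i) (a := X i₀) (b := X i₀ + c) Measurable.of_discrete.aemeasurable
    (ae_of_all _ fun i ↦ ⟨hmin i i.2, by linarith [hX i i.2 i₀ hi₀]⟩)
    (by rw [hintegral, h0, zero_div])).mgf_le t
  rw [mgf, hintegral (fun i ↦ exp (t * X i)), div_le_iff₀ (by simpa using hs.card_pos), mul_comm]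
    at hoeffding
  refine hoeffding.trans_eq ?_
  simp only [NNReal.coe_pow, NNReal.coe_div, coe_nnnorm, add_sub_cancel_left, norm_eq_abs,
    div_pow, sq_abs, NNReal.coe_ofNat]
  ring_nf

theorem Finset.card_filter_lt_le_of_sum_exp_le {ι : Type*} {s : Finset ι} {X : ι → ℝ} {σ ε : ℝ}
    (hσ : 0 ≤ σ) (hε : 0 ≤ ε) (hX : ∀ t, ∑ i ∈ s, exp (t * X i) ≤ #s * exp (σ * t ^ 2 / 2)) :
    (#{i ∈ s | ε < X i} : ℝ) ≤ #s * exp (-(ε ^ 2 / (2 * σ))) := by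
  -- the optimal Chernoff parameter; for `σ = 0` it is `0` (as `ε / 0 = 0`) and `hexp` reads `0 = 0`
  set t := ε / σ
  have hexp : σ * t ^ 2 / 2 - t * ε = -(ε ^ 2 / (2 * σ)) := by
    rcases hσ.eq_or_lt with rfl | hσ
    · simp [t]
    · simp only [t]; field_simp; ring
  have markov : #{i ∈ s | ε < X i} * exp (t * ε) ≤ ∑ i ∈ s, exp (t * X i) :=
    calc #{i ∈ s | ε < X i} * exp (t * ε)
        = ∑ i ∈ s with ε < X i, exp (t * ε) := by rw [sum_const, nsmul_eq_mul]
      _ ≤ ∑ i ∈ s with ε < X i, exp (t * X i) := by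
          gcongr with i hi
          exact (mem_filter.1 hi).2.le
      _ ≤ ∑ i ∈ s, exp (t * X i) :=
          sum_le_sum_of_subset_of_nonneg (filter_subset _ _) fun _ _ _ ↦ (exp_pos _).le
  rw [← hexp, exp_sub, mul_div_assoc', le_div_iff₀ (exp_pos _)]
  exact markov.trans (hX t)

theorem Finset.card_filter_lt_abs_le_of_sum_exp_le {ι : Type*} {s : Finset ι} {X : ι → ℝ}
    {σ ε : ℝ} (hσ : 0 ≤ σ) (hε : 0 ≤ ε)
    (hX : ∀ t, ∑ i ∈ s, exp (t * X i) ≤ #s * exp (σ * t ^ 2 / 2)) :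
    (#{i ∈ s | ε < |X i|} : ℝ) ≤ 2 * #s * exp (-(ε ^ 2 / (2 * σ))) := by
  have hneg : ∀ t, ∑ i ∈ s, exp (t * -X i) ≤ #s * exp (σ * t ^ 2 / 2) := fun t ↦ by
    simpa [neg_mul_comm] using hX (-t)
  have hunion : #{i ∈ s | ε < |X i|} ≤ #{i ∈ s | ε < X i} + #{i ∈ s | ε < -X i} := by
    classical
    refine (card_le_card fun i hi ↦ ?_).trans (card_union_le _ _)
    simp only [mem_filter, mem_union, lt_abs] at hi ⊢
    tauto
  calc (#{i ∈ s | ε < |X i|} : ℝ)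
      ≤ #{i ∈ s | ε < X i} + #{i ∈ s | ε < -X i} := by exact_mod_cast hunion
    _ ≤ #s * exp (-(ε ^ 2 / (2 * σ))) + #s * exp (-(ε ^ 2 / (2 * σ))) :=
        add_le_add (card_filter_lt_le_of_sum_exp_le hσ hε hX)
          (card_filter_lt_le_of_sum_exp_le hσ hε hneg)
    _ = 2 * #s * exp (-(ε ^ 2 / (2 * σ))) := by ring

theorem Finset.abs_expect_sub_expect_le_of_bijOn {ι : Type*} {s t : Finset ι} {φ : ι → ι}
    (hφ : Set.BijOn φ s t) (hs : s.Nonempty) {f : ι → ℝ} {c : ℝ}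
    (hf : ∀ x ∈ s, |f (φ x) - f x| ≤ c) :
    |𝔼 x ∈ t, f x - 𝔼 x ∈ s, f x| ≤ c := by
  rw [← expect_nbij φ hφ.mapsTo (fun _ _ ↦ rfl) hφ.injOn hφ.surjOn, ← expect_sub_distrib]
  exact (abs_expect_le _ _).trans (expect_le hs hf)

theorem Finset.sum_exp_sub_expect_le_of_fiberwise {ι β : Type*} [DecidableEq β] {s : Finset ι}
    (p : ι → β) {f : ι → ℝ} {σ c t : ℝ}
    (hfib : ∀ x ∈ s, ∑ y ∈ s with p y = p x, exp (t * (f y - 𝔼 z ∈ s with p z = p x, f z))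
      ≤ #{y ∈ s | p y = p x} * exp (σ * t ^ 2 / 2))
    (hmean : ∀ x ∈ s, ∀ y ∈ s,
      (𝔼 z ∈ s with p z = p x, f z) - 𝔼 z ∈ s with p z = p y, f z ≤ c) :
    ∑ x ∈ s, exp (t * (f x - 𝔼 y ∈ s, f y)) ≤ #s * exp ((σ + c ^ 2 / 4) * t ^ 2 / 2) := by
  set M : β → ℝ := fun b ↦ 𝔼 z ∈ s with p z = b, f z
  set E := 𝔼 y ∈ s, f y
  have hmaps : ∀ x ∈ s, p x ∈ s.image p := fun x hx ↦ mem_image_of_mem p hx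
  have hM : ∑ x ∈ s, (M (p x) - E) = 0 := by
    have htotal : ∑ x ∈ s, M (p x) = ∑ x ∈ s, f x := by
      rw [← sum_fiberwise_of_maps_to' hmaps, ← sum_fiberwise_of_maps_to hmaps]
      refine sum_congr rfl fun b _ ↦ ?_
      rw [sum_const, card_smul_expect]
    rw [sum_sub_distrib, htotal, sum_const, card_smul_expect, sub_self]
  have hfib' : ∀ b ∈ s.image p, ∑ x ∈ s with p x = b, exp (t * (f x - M b))
      ≤ #{x ∈ s | p x = b} * exp (σ * t ^ 2 / 2) := by
    intro b hb
    obtain ⟨x, hx, rfl⟩ := mem_image.1 hb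
    exact hfib x hx
  calc ∑ x ∈ s, exp (t * (f x - E))
      = ∑ b ∈ s.image p, (∑ x ∈ s with p x = b, exp (t * (f x - M b))) * exp (t * (M b - E)) := by
        rw [← sum_fiberwise_of_maps_to hmaps]
        refine sum_congr rfl fun b _ ↦ ?_
        rw [sum_mul]
        refine sum_congr rfl fun x hx ↦ ?_
        rw [← exp_add]
        ring_nf
    _ ≤ ∑ b ∈ s.image p, #{x ∈ s | p x = b} * exp (σ * t ^ 2 / 2) * exp (t * (M b - E)) := by
        gcongr with b hb
        exact hfib' b hb
    _ = exp (σ * t ^ 2 / 2) * ∑ x ∈ s, exp (t * (M (p x) - E)) := by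
        rw [← sum_fiberwise_of_maps_to' hmaps fun b ↦ exp (t * (M b - E)), mul_sum]
        refine sum_congr rfl fun b _ ↦ ?_
        rw [sum_const, nsmul_eq_mul]
        ring
    _ ≤ exp (σ * t ^ 2 / 2) * (#s * exp (c ^ 2 * t ^ 2 / 8)) := by
        gcongr
        exact sum_exp_mul_le_of_sum_eq_zero
          (fun x hx y hy ↦ by linarith [hmean x hx y hy]) hM t
    _ = #s * exp ((σ + c ^ 2 / 4) * t ^ 2 / 2) := by
        rw [mul_left_comm, ← exp_add]
        ring_nf

theorem ncard_setOf_ne_eq_hammingDist {ι α : Type*} [Fintype ι] [DecidableEq α] (x y : ι → α) :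
    {i | x i ≠ y i}.ncard = hammingDist x y := by
  rw [hammingDist, ← Set.ncard_coe_finset]
  simp

namespace Equiv.Perm

variable {α : Type*} [DecidableEq α]

def redirect (a b : α) (x : Perm α) : Perm α := x * swap a (x⁻¹ b)

@[simp]
theorem redirect_apply_self (a b : α) (x : Perm α) : redirect a b x a = b := by
  simp [redirect]

theorem redirect_redirect (a b : α) (x : Perm α) : redirect a (x a) (redirect a b x) = x := by
  have : (redirect a b x)⁻¹ (x a) = x⁻¹ b := by simp [redirect, swap_apply_left]
  rw [redirect, this, redirect, mul_assoc, swap_mul_self, mul_one]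

theorem redirect_apply_of_ne {a b i : α} {x : Perm α} (hia : i ≠ a) (hib : i ≠ x⁻¹ b) :
    redirect a b x i = x i := by
  rw [redirect, mul_apply, swap_apply_of_ne_of_ne hia hib]

theorem hammingDist_redirect_le [Fintype α] (a b : α) (x : Perm α) :
    hammingDist ⇑x ⇑(redirect a b x) ≤ 2 := by
  refine (card_le_card fun i hi ↦ ?_).trans (card_le_two (a := a) (b := x⁻¹ b))
  simp only [mem_filter, mem_univ, true_and, mem_insert, mem_singleton] at hi ⊢
  by_contra! h
  exact hi (redirect_apply_of_ne h.1 h.2).symm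

end Equiv.Perm

open Equiv.Perm

section ColorStabilizer

variable {n : ℕ} {β : Type*} [DecidableEq β] (χ : Fin n → β)

def colorStabilizer : Finset (Perm (Fin n)) :=
  Finset.univ.filter fun g => ∀ v, χ (g v) = χ v

def prefixCoset (k : ℕ) (p : Perm (Fin n)) : Finset (Perm (Fin n)) :=
  {g ∈ colorStabilizer χ | ∀ i : Fin n, (i : ℕ) < k → g i = p i}

variable {χ}

@[simp]
theorem mem_colorStabilizer {g : Perm (Fin n)} : g ∈ colorStabilizer χ ↔ ∀ v, χ (g v) = χ v := by
  simp [colorStabilizer]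

theorem mul_mem_colorStabilizer {x y : Perm (Fin n)} (hx : x ∈ colorStabilizer χ)
    (hy : y ∈ colorStabilizer χ) : x * y ∈ colorStabilizer χ :=
  mem_colorStabilizer.2 fun v ↦ (mem_colorStabilizer.1 hx _).trans (mem_colorStabilizer.1 hy v)

theorem swap_mem_colorStabilizer {a b : Fin n} (h : χ a = χ b) : swap a b ∈ colorStabilizer χ := by
  refine mem_colorStabilizer.2 fun v ↦ ?_
  rcases eq_or_ne v a with rfl | hva
  · rw [swap_apply_left, h]
  rcases eq_or_ne v b with rfl | hvb
  · rw [swap_apply_right, h]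
  rw [swap_apply_of_ne_of_ne hva hvb]

theorem apply_inv_of_mem_colorStabilizer {x : Perm (Fin n)} (hx : x ∈ colorStabilizer χ)
    (v : Fin n) : χ (x⁻¹ v) = χ v := by
  simpa using (mem_colorStabilizer.1 hx (x⁻¹ v)).symm

theorem mem_prefixCoset {k : ℕ} {p g : Perm (Fin n)} :
    g ∈ prefixCoset χ k p ↔ g ∈ colorStabilizer χ ∧ ∀ i : Fin n, (i : ℕ) < k → g i = p i :=
  mem_filter

theorem prefixCoset_zero (p : Perm (Fin n)) : prefixCoset χ 0 p = colorStabilizer χ := by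
  ext g; simp [mem_prefixCoset]

theorem self_mem_prefixCoset {k : ℕ} {p : Perm (Fin n)} (hp : p ∈ colorStabilizer χ) :
    p ∈ prefixCoset χ k p :=
  mem_prefixCoset.2 ⟨hp, fun _ _ ↦ rfl⟩

theorem prefixCoset_of_le {k : ℕ} (hk : n ≤ k) {p : Perm (Fin n)} (hp : p ∈ colorStabilizer χ) :
    prefixCoset χ k p = {p} := by
  refine eq_singleton_iff_unique_mem.2 ⟨self_mem_prefixCoset hp, fun g hg ↦ ?_⟩
  exact Equiv.ext fun i ↦ (mem_prefixCoset.1 hg).2 i (i.2.trans_le hk)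

theorem filter_prefixCoset_apply_eq {k : ℕ} (hk : k < n) {p z : Perm (Fin n)}
    (hz : z ∈ prefixCoset χ k p) :
    {g ∈ prefixCoset χ k p | g ⟨k, hk⟩ = z ⟨k, hk⟩} = prefixCoset χ (k + 1) z := by
  have hzp := (mem_prefixCoset.1 hz).2
  ext g
  simp only [mem_filter, mem_prefixCoset, Nat.lt_succ_iff_lt_or_eq, or_imp, forall_and]
  constructor
  · rintro ⟨⟨hg, hgp⟩, hgk⟩
    refine ⟨hg, fun i hi ↦ (hgp i hi).trans (hzp i hi).symm, fun i hi ↦ ?_⟩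
    obtain rfl : i = ⟨k, hk⟩ := Fin.ext hi
    exact hgk
  · rintro ⟨hg, hgz, hgk⟩
    exact ⟨⟨hg, fun i hi ↦ (hgz i hi).trans (hzp i hi)⟩, hgk _ rfl⟩

theorem redirect_mem_prefixCoset {k : ℕ} (hk : k < n) {p x z : Perm (Fin n)}
    (hx : x ∈ prefixCoset χ k p) (hz : z ∈ prefixCoset χ k p) :
    redirect ⟨k, hk⟩ (z ⟨k, hk⟩) x ∈ prefixCoset χ k p := by
  obtain ⟨hxH, hxp⟩ := mem_prefixCoset.1 hx
  obtain ⟨hzH, hzp⟩ := mem_prefixCoset.1 hz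
  set κ : Fin n := ⟨k, hk⟩
  have hswap : χ κ = χ (x⁻¹ (z κ)) := by
    rw [apply_inv_of_mem_colorStabilizer hxH, mem_colorStabilizer.1 hzH]
  refine mem_prefixCoset.2 ⟨mul_mem_colorStabilizer hxH (swap_mem_colorStabilizer hswap),
    fun i hi ↦ ?_⟩
  have hiκ : i ≠ κ := fun h ↦ hi.ne (congrArg Fin.val h)
  have hix : i ≠ x⁻¹ (z κ) := by
    rintro rfl
    exact hiκ (z.injective ((hzp _ hi).trans ((hxp _ hi).symm.trans (by simp))))
  rw [redirect_apply_of_ne hiκ hix, hxp i hi]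

theorem abs_expect_prefixCoset_sub_le {k : ℕ} (hk : k < n) {p z₁ z₂ : Perm (Fin n)}
    (hz₁ : z₁ ∈ prefixCoset χ k p) (hz₂ : z₂ ∈ prefixCoset χ k p)
    {f : Perm (Fin n) → ℝ} {K : ℝ} (hK : 0 ≤ K)
    (hf : ∀ g₁ ∈ prefixCoset χ k p, ∀ g₂ ∈ prefixCoset χ k p,
      |f g₁ - f g₂| ≤ K * hammingDist ⇑g₁ ⇑g₂) :
    |(𝔼 g ∈ prefixCoset χ k p with g ⟨k, hk⟩ = z₁ ⟨k, hk⟩, f g)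
      - 𝔼 g ∈ prefixCoset χ k p with g ⟨k, hk⟩ = z₂ ⟨k, hk⟩, f g| ≤ 2 * K := by
  set κ : Fin n := ⟨k, hk⟩
  let F : Fin n → Finset (Perm (Fin n)) := fun b ↦ {g ∈ prefixCoset χ k p | g κ = b}
  have hmaps {a b : Perm (Fin n)} (ha : a ∈ prefixCoset χ k p) :
      Set.MapsTo (redirect κ (a κ)) (F (b κ)) (F (a κ)) := by
    intro x hx
    simp only [F, mem_coe, mem_filter] at hx ⊢
    exact ⟨redirect_mem_prefixCoset hk hx.1 ha, redirect_apply_self _ _ _⟩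
  have hinv {a b : Perm (Fin n)} :
      Set.LeftInvOn (redirect κ (b κ)) (redirect κ (a κ)) (F (b κ)) := by
    intro x hx
    simp only [F, mem_coe, mem_filter] at hx
    rw [← hx.2, redirect_redirect]
  refine abs_expect_sub_expect_le_of_bijOn (Set.InvOn.bijOn ⟨hinv, hinv⟩ (hmaps hz₁) (hmaps hz₂))
    (s := F (z₂ κ)) ⟨z₂, mem_filter.2 ⟨hz₂, rfl⟩⟩ fun x hx ↦ ?_
  have hxC := (mem_filter.1 hx).1
  calc |f (redirect κ (z₁ κ) x) - f x|
      ≤ K * hammingDist ⇑(redirect κ (z₁ κ) x) ⇑x :=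
        hf _ (redirect_mem_prefixCoset hk hxC hz₁) _ hxC
    _ ≤ K * 2 := by
        gcongr
        rw [hammingDist_comm]
        exact_mod_cast hammingDist_redirect_le _ _ _
    _ = 2 * K := mul_comm _ _

theorem sum_exp_sub_expect_prefixCoset_le {f : Perm (Fin n) → ℝ} {K : ℝ} (hK : 0 ≤ K) (t : ℝ)
    (d : ℕ) {k : ℕ} (hkd : k + d = n) {p : Perm (Fin n)} (hp : p ∈ colorStabilizer χ)
    (hf : ∀ g₁ ∈ prefixCoset χ k p, ∀ g₂ ∈ prefixCoset χ k p,
      |f g₁ - f g₂| ≤ K * hammingDist ⇑g₁ ⇑g₂) :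
    ∑ g ∈ prefixCoset χ k p, exp (t * (f g - 𝔼 g' ∈ prefixCoset χ k p, f g'))
      ≤ #(prefixCoset χ k p) * exp (d * K ^ 2 * t ^ 2 / 2) := by
  induction d generalizing k p with
  | zero =>
    rw [prefixCoset_of_le (by omega) hp]
    simp
  | succ d ih =>
    have hk : k < n := by omega
    have hfib : ∀ x ∈ prefixCoset χ k p,
        ∑ y ∈ prefixCoset χ k p with y ⟨k, hk⟩ = x ⟨k, hk⟩,
            exp (t * (f y - 𝔼 z ∈ prefixCoset χ k p with z ⟨k, hk⟩ = x ⟨k, hk⟩, f z))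
          ≤ #{y ∈ prefixCoset χ k p | y ⟨k, hk⟩ = x ⟨k, hk⟩} * exp (d * K ^ 2 * t ^ 2 / 2) := by
      intro x hx
      have hsub : prefixCoset χ (k + 1) x ⊆ prefixCoset χ k p :=
        filter_prefixCoset_apply_eq hk hx ▸ filter_subset _ _
      rw [filter_prefixCoset_apply_eq hk hx]
      exact ih (by omega) (mem_prefixCoset.1 hx).1
        fun g₁ h₁ g₂ h₂ ↦ hf g₁ (hsub h₁) g₂ (hsub h₂)
    have hmean : ∀ x ∈ prefixCoset χ k p, ∀ y ∈ prefixCoset χ k p,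
        (𝔼 z ∈ prefixCoset χ k p with z ⟨k, hk⟩ = x ⟨k, hk⟩, f z)
          - 𝔼 z ∈ prefixCoset χ k p with z ⟨k, hk⟩ = y ⟨k, hk⟩, f z ≤ 2 * K :=
      fun x hx y hy ↦ (abs_le.1 (abs_expect_prefixCoset_sub_le hk hx hy hK hf)).2
    refine (sum_exp_sub_expect_le_of_fiberwise (fun g ↦ g ⟨k, hk⟩) (s := prefixCoset χ k p) (f := f)
      (σ := d * K ^ 2) (c := 2 * K) (t := t) hfib hmean).trans_eq ?_
    push_cast
    ring_nf

theorem card_filter_lt_abs_sub_expect_le {f : Perm (Fin n) → ℝ} {K ε : ℝ} (hK : 0 ≤ K)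
    (hε : 0 ≤ ε) (hf : ∀ g₁ ∈ colorStabilizer χ, ∀ g₂ ∈ colorStabilizer χ,
      |f g₁ - f g₂| ≤ K * hammingDist ⇑g₁ ⇑g₂) :
    (#{g ∈ colorStabilizer χ | ε < |f g - 𝔼 g' ∈ colorStabilizer χ, f g'|} : ℝ)
      ≤ 2 * #(colorStabilizer χ) * exp (-(ε ^ 2 / (2 * (n * K ^ 2)))) := by
  refine card_filter_lt_abs_le_of_sum_exp_le (by positivity) hε fun t ↦ ?_
  have h := sum_exp_sub_expect_prefixCoset_le (χ := χ) (p := 1) hK t n (zero_add n)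
    (by simp) (by rwa [prefixCoset_zero])
  rwa [prefixCoset_zero] at h

end ColorStabilizer

theorem stmt17_general (n : ℕ) (χ : Fin n → Fin 2) :
    let H : Finset (Equiv.Perm (Fin n)) :=
      Finset.univ.filter fun g => ∀ v, χ (g v) = χ v
    let dH : Equiv.Perm (Fin n) → Equiv.Perm (Fin n) → ℝ :=
      fun g₁ g₂ => ({i : Fin n | g₁ i ≠ g₂ i}.ncard : ℝ) / n
    ∀ f : Equiv.Perm (Fin n) → ℝ,
      (∀ g₁ ∈ H, ∀ g₂ ∈ H, |f g₁ - f g₂| ≤ dH g₁ g₂) →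
      ∀ ε > 0,
        ({g ∈ (H : Set (Equiv.Perm (Fin n))) |
              ε < |f g - (∑ g' ∈ H, f g') / (H.card : ℝ)|}.ncard : ℝ) / H.card
          < 4 * Real.exp (-((n : ℝ) / 16) * ε ^ 2) := by
  intro H dH f hf ε hε
  have hLip : ∀ g₁ ∈ colorStabilizer χ, ∀ g₂ ∈ colorStabilizer χ,
      |f g₁ - f g₂| ≤ (n : ℝ)⁻¹ * hammingDist ⇑g₁ ⇑g₂ := fun g₁ h₁ g₂ h₂ ↦ by
    simpa [dH, ncard_setOf_ne_eq_hammingDist, inv_mul_eq_div] using hf g₁ h₁ g₂ h₂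
  have htail := card_filter_lt_abs_sub_expect_le (by positivity) hε.le hLip
  have hexp : -(ε ^ 2 / (2 * (n * (n : ℝ)⁻¹ ^ 2))) ≤ -((n : ℝ) / 16) * ε ^ 2 := by
    rcases eq_or_ne (n : ℝ) 0 with hn | hn
    · simp [hn]
    · have : ε ^ 2 / (2 * (n * (n : ℝ)⁻¹ ^ 2)) = n * ε ^ 2 / 2 := by field_simp
      rw [this]
      nlinarith [sq_nonneg ε, (Nat.cast_nonneg n : (0 : ℝ) ≤ n)]
  have hH : 0 < (#H : ℝ) := by exact_mod_cast card_pos.2 ⟨1, by simp [H]⟩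
  have hset : {g ∈ (H : Set (Perm (Fin n))) | ε < |f g - 𝔼 g' ∈ H, f g'|}
      = ↑({g ∈ H | ε < |f g - 𝔼 g' ∈ H, f g'|} : Finset _) := by
    ext; simp
  rw [← expect_eq_sum_div_card, hset, Set.ncard_coe_finset, div_lt_iff₀ hH]
  calc (#{g ∈ H | ε < |f g - 𝔼 g' ∈ H, f g'|} : ℝ)
      ≤ 2 * #H * exp (-(ε ^ 2 / (2 * (n * (n : ℝ)⁻¹ ^ 2)))) := htail
    _ ≤ 2 * #H * exp (-((n : ℝ) / 16) * ε ^ 2) := by gcongr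
    _ < 4 * exp (-((n : ℝ) / 16) * ε ^ 2) * #H := by nlinarith [exp_pos (-((n : ℝ) / 16) * ε ^ 2)]

/-- The stabilizer `H_χ` of an equitable 2-coloring `χ` of `[n]` (`n` even) inside
`Sym(n)`, with the uniform measure and the normalized Hamming metric, is
`(4, n/16)`-concentrated. -/
theorem stmt17 (n : ℕ) (hn : Even n) (χ : Fin n → Fin 2)
    (h0 : (Finset.univ.filter fun v => χ v = 0).card = n / 2)
    (h1 : (Finset.univ.filter fun v => χ v = 1).card = n / 2) :
    let H : Finset (Equiv.Perm (Fin n)) :=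
      Finset.univ.filter fun g => ∀ v, χ (g v) = χ v
    let dH : Equiv.Perm (Fin n) → Equiv.Perm (Fin n) → ℝ :=
      fun g₁ g₂ => ({i : Fin n | g₁ i ≠ g₂ i}.ncard : ℝ) / n
    ∀ f : Equiv.Perm (Fin n) → ℝ,
      (∀ g₁ ∈ H, ∀ g₂ ∈ H, |f g₁ - f g₂| ≤ dH g₁ g₂) →
      ∀ ε > 0,
        ({g ∈ (H : Set (Equiv.Perm (Fin n))) |
              ε < |f g - (∑ g' ∈ H, f g') / (H.card : ℝ)|}.ncard : ℝ) / H.card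
          < 4 * Real.exp (-((n : ℝ) / 16) * ε ^ 2) :=
  stmt17_general n χ
end

section
/- Let Γ be the free product of d ≥ 2 copies of ℤ/kℤ with k ≥ 3, with Cayley hyper-tree whose hyper-edges are left cosets of the generator subgroups, and let X ⊆ {0,1}^Γ be the subshift of proper 2-colorings (every hyper-edge receives both colors). Then the shift action of Γ on X is topologically mixing: for any nonempty open A, B ⊆ X there is N such that for all g ∈ Γ with word length |g| > N, gA ∩ B ≠ ∅. -/
/-!
We work with `v ↦ z v⁻¹` instead of a colouring `z`: the hyperedges then become the cosets
`G_i u`, and the reduced word of `u` read backwards (`revWord u`) is the path of hyperedges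
from `1` to `u`. Given proper colourings `x`, `y` and a far vertex `p`, colour `v` according to
the length `branchDepth p v` of the common part of its path with the path to `p`: by `y` up to
`t`, by `x` from `t + 3` on, and in between by the parity of the length of `v`, with the phase
chosen so that the first layer disagrees with `y` at the branch vertex `pathPoint p t`. In a
hyperedge all vertices but the root lie one step further out, and at most one of them continues
towards `p`; as every factor has at least three elements, each hyperedge still sees both colours.
With `p = g⁻¹` and `x` translated by `g`, the glued colouring lies in `B` and in `g A` as soon
as `g⁻¹` has more than `2t + 3` letters, where `t` bounds the radii of cylinders around the
chosen points of `A` and `B`; since a letter costs at most `k - 1` generators, this holds once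
the word length of `g` exceeds `(k - 1)(2t + 3)`.
-/

namespace List

variable {α : Type*}

lemma eq_of_append_singleton_prefix {l q : List α} {a b : α} (ha : l ++ [a] <+: q)
    (hb : l ++ [b] <+: q) : a = b := by
  simpa using (prefix_of_prefix_length_le ha hb (by simp)).eq_of_length (by simp)

variable [DecidableEq α]

def commonPrefixLength : List α → List α → ℕ
  | a :: l₁, b :: l₂ => if a = b then commonPrefixLength l₁ l₂ + 1 else 0
  | _, _ => 0

@[simp] lemma commonPrefixLength_nil_left (l : List α) : commonPrefixLength [] l = 0 := rfl

@[simp] lemma commonPrefixLength_nil_right (l : List α) : commonPrefixLength l [] = 0 := by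
  cases l <;> rfl

@[simp] lemma commonPrefixLength_cons_cons (a b : α) (l₁ l₂ : List α) :
    commonPrefixLength (a :: l₁) (b :: l₂) =
      if a = b then commonPrefixLength l₁ l₂ + 1 else 0 := rfl

lemma commonPrefixLength_le_length_left (l₁ l₂ : List α) :
    commonPrefixLength l₁ l₂ ≤ l₁.length := by
  induction l₁ generalizing l₂ with
  | nil => simp
  | cons a l₁ ih =>
    cases l₂ with
    | nil => simp
    | cons b l₂ =>
      have := ih l₂
      rw [commonPrefixLength_cons_cons, length_cons]
      split_ifs <;> omega

lemma IsPrefix.length_le_commonPrefixLength {p l₁ l₂ : List α} (h₁ : p <+: l₁)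
    (h₂ : p <+: l₂) : p.length ≤ commonPrefixLength l₁ l₂ := by
  induction p generalizing l₁ l₂ with
  | nil => simp
  | cons a p ih =>
    obtain ⟨t₁, rfl⟩ := h₁
    obtain ⟨t₂, rfl⟩ := h₂
    simpa using ih (prefix_append p t₁) (prefix_append p t₂)

lemma IsPrefix.commonPrefixLength_eq_length {l₁ l₂ : List α} (h : l₁ <+: l₂) :
    commonPrefixLength l₁ l₂ = l₁.length :=
  (commonPrefixLength_le_length_left l₁ l₂).antisymm
    ((prefix_refl l₁).length_le_commonPrefixLength h)

lemma commonPrefixLength_append_singleton (l q : List α) (a : α) :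
    commonPrefixLength (l ++ [a]) q =
      if l ++ [a] <+: q then l.length + 1 else commonPrefixLength l q := by
  induction l generalizing q with
  | nil => cases q <;> simp
  | cons b l ih =>
    cases q with
    | nil => simp
    | cons c q =>
      simp only [cons_append, commonPrefixLength_cons_cons, cons_prefix_cons, ih, length_cons]
      split_ifs <;> simp_all

lemma min_commonPrefixLength_le (l₁ l₂ l₃ : List α) :
    min (commonPrefixLength l₁ l₂) (commonPrefixLength l₂ l₃) ≤ commonPrefixLength l₁ l₃ := by
  induction l₁ generalizing l₂ l₃ with
  | nil => simp
  | cons a l₁ ih =>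
    rcases l₂ with _ | ⟨b, l₂⟩ <;> rcases l₃ with _ | ⟨c, l₃⟩
    · simp
    · simp
    · simp
    have := ih l₂ l₃
    simp only [commonPrefixLength_cons_cons]
    split_ifs <;> simp_all
end List

lemma IsOpen.exists_radius_of_mem {α X : Type*} [TopologicalSpace X] {A : Set (α → X)}
    (hA : IsOpen A) {x : α → X} (hx : x ∈ A) (ℓ : α → ℕ) :
    ∃ R, ∀ x' : α → X, (∀ a, ℓ a ≤ R → x' a = x a) → x' ∈ A := by
  obtain ⟨I, u, hu, hsub⟩ := isOpen_pi_iff.1 hA x hx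
  refine ⟨I.sup ℓ, fun x' hx' => hsub fun a ha => ?_⟩
  rw [hx' a (Finset.le_sup (Finset.mem_coe.1 ha))]
  exact (hu a ha).2

lemma Bool.surjective_of_apply_ne {α : Type*} {f : α → Bool} {a b : α} (h : f a ≠ f b) :
    Function.Surjective f := by
  intro c
  by_cases hc : f a = c
  · exact ⟨a, hc⟩
  · exact ⟨b, by revert h hc; cases f a <;> cases f b <;> cases c <;> simp⟩

open List

namespace Monoid.CoprodI

section Coloring

variable {ι : Type*} {G : ι → Type*} [∀ i, Group (G i)]

def IsProperColoring (w : CoprodI G → Bool) : Prop :=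
  ∀ (i : ι) (u : CoprodI G), Function.Surjective fun a : G i => w (of a * u)

lemma IsProperColoring.comp_mul_right {w : CoprodI G → Bool} (hw : IsProperColoring w)
    (c : CoprodI G) : IsProperColoring fun v => w (v * c) := by
  intro i u
  simpa only [mul_assoc] using hw i (u * c)

end Coloring

variable {ι : Type*} {G : ι → Type*} [∀ i, Group (G i)] [DecidableEq ι] [∀ i, DecidableEq (G i)]

def revWord (v : CoprodI G) : List (Σ i, G i) := (Word.equiv v).toList.reverse

lemma prod_revWord_reverse (v : CoprodI G) :
    ((revWord v).reverse.map fun l => of l.2).prod = v := by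
  rw [revWord, List.reverse_reverse]
  exact Word.equiv.left_inv v

lemma revWord_of_mul {i : ι} {a : G i} {u : CoprodI G} (hu : (Word.equiv u).fstIdx ≠ some i)
    (ha : a ≠ 1) : revWord (of a * u) = revWord u ++ [⟨i, a⟩] := by
  have : Word.equiv (of a * u) = of a • Word.equiv u := mul_smul (of a) u (Word.empty (M := G))
  simp [revWord, this, Word.of_smul_def, Word.equivPair_eq_of_fstIdx_ne hu, Word.rcons, ha]

lemma exists_of_mul_of_fstIdx_ne (u : CoprodI G) (i : ι) :
    ∃ (b : G i) (u' : CoprodI G), u = of b * u' ∧ (Word.equiv u').fstIdx ≠ some i := by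
  set P := Word.equivPair i (Word.equiv u)
  refine ⟨P.head, P.tail.prod, ?_, ?_⟩
  · rw [← Word.prod_rcons, ← Word.equivPair_symm, Equiv.symm_apply_apply]
    exact (Word.equiv.left_inv u).symm
  · rw [show Word.equiv P.tail.prod = P.tail from Word.equiv.right_inv P.tail]
    exact P.fstIdx_ne

lemma revWord_prefix_revWord_of_mul {i : ι} (a : G i) {u : CoprodI G}
    (hu : (Word.equiv u).fstIdx ≠ some i) :
    revWord u <+: revWord (of a * u) ∧ (revWord (of a * u)).length ≤ (revWord u).length + 1 := by
  by_cases ha : a = 1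
  · simp [ha]
  · simp [revWord_of_mul hu ha]

lemma isProperColoring_of_fstIdx_ne {w : CoprodI G → Bool}
    (h : ∀ i u, (Word.equiv u).fstIdx ≠ some i → Function.Surjective fun a : G i => w (of a * u)) :
    IsProperColoring w := by
  intro i u
  obtain ⟨b, u', rfl, hu'⟩ := exists_of_mul_of_fstIdx_ne u i
  have : (fun a : G i => w (of a * (of b * u'))) = (fun a => w (of a * u')) ∘ (· * b) := by
    funext a
    simp [mul_assoc]
  rw [this]
  exact (h i u' hu').comp (mul_right_surjective b)

def branchDepth (p v : CoprodI G) : ℕ := (revWord v).commonPrefixLength (revWord p)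

lemma branchDepth_le_length (p v : CoprodI G) : branchDepth p v ≤ (revWord v).length :=
  commonPrefixLength_le_length_left _ _

lemma branchDepth_eq_length {p u : CoprodI G} (h : revWord u <+: revWord p) :
    branchDepth p u = (revWord u).length :=
  h.commonPrefixLength_eq_length

lemma branchDepth_of_mul (p : CoprodI G) {i : ι} {a : G i} {u : CoprodI G}
    (hu : (Word.equiv u).fstIdx ≠ some i) (ha : a ≠ 1) :
    branchDepth p (of a * u) =
      if revWord u ++ [⟨i, a⟩] <+: revWord p then (revWord u).length + 1 else branchDepth p u := by
  rw [branchDepth, revWord_of_mul hu ha, commonPrefixLength_append_singleton, branchDepth]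

lemma length_revWord_le_branchDepth_of_mul {i : ι} (m : G i) (v : CoprodI G) :
    (revWord v).length ≤ branchDepth v (of m * v) + 1 := by
  obtain ⟨b, v', rfl, hv'⟩ := exists_of_mul_of_fstIdx_ne v i
  obtain ⟨h₁, hlen⟩ := revWord_prefix_revWord_of_mul b hv'
  obtain ⟨h₂, -⟩ := revWord_prefix_revWord_of_mul (m * b) hv'
  have := h₂.length_le_commonPrefixLength h₁
  rw [branchDepth, ← mul_assoc, ← map_mul]
  omega

lemma length_revWord_le_branchDepth_mul (a u : CoprodI G) :
    (revWord u).length ≤ branchDepth u (a * u) + (revWord a).length := by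
  suffices h : ∀ L : List (Σ i, G i),
      (revWord u).length ≤ branchDepth u ((L.map fun l => of l.2).prod * u) + L.length by
    have := h (revWord a).reverse
    rwa [prod_revWord_reverse, List.length_reverse] at this
  intro L
  induction L with
  | nil => simp [branchDepth_eq_length (prefix_refl _)]
  | cons x L ih =>
    simp only [List.map_cons, List.prod_cons, mul_assoc, List.length_cons]
    set v := (L.map fun l => of l.2).prod * u
    have h₁ := length_revWord_le_branchDepth_of_mul x.2 v
    have h₂ := min_commonPrefixLength_le (revWord (of x.2 * v)) (revWord v) (revWord u)
    have h₃ := branchDepth_le_length u v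
    unfold branchDepth at *
    omega

def pathPoint (p : CoprodI G) (n : ℕ) : CoprodI G :=
  (((revWord p).take n).reverse.map fun l => of l.2).prod

lemma pathPoint_length_eq {p u : CoprodI G} (h : revWord u <+: revWord p) :
    pathPoint p (revWord u).length = u := by
  rw [pathPoint, ← prefix_iff_eq_take.1 h, prod_revWord_reverse]

def glue (x y : CoprodI G → Bool) (p : CoprodI G) (t : ℕ) (v : CoprodI G) : Bool :=
  if branchDepth p v ≤ t then y v
  else if t + 3 ≤ branchDepth p v then x v
  else xor (y (pathPoint p t)) (decide (Odd ((revWord v).length + t)))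

section Glue

variable {x y : CoprodI G → Bool} {p : CoprodI G} {t : ℕ}

lemma glue_of_branchDepth_le {v : CoprodI G} (h : branchDepth p v ≤ t) : glue x y p t v = y v :=
  if_pos h

lemma glue_of_le_branchDepth {v : CoprodI G} (h : t + 3 ≤ branchDepth p v) :
    glue x y p t v = x v := by
  rw [glue, if_neg (by omega), if_pos h]

lemma glue_of_lt_branchDepth_lt {v : CoprodI G} (h₁ : t < branchDepth p v)
    (h₂ : branchDepth p v < t + 3) :
    glue x y p t v = xor (y (pathPoint p t)) (decide (Odd ((revWord v).length + t))) := by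
  rw [glue, if_neg (by omega), if_neg (by omega)]

lemma glue_of_length_le {v : CoprodI G} (h : (revWord v).length ≤ t) : glue x y p t v = y v :=
  glue_of_branchDepth_le ((branchDepth_le_length p v).trans h)

lemma glue_mul_of_length_add_le {a : CoprodI G}
    (h : (revWord a).length + t + 3 ≤ (revWord p).length) :
    glue x y p t (a * p) = x (a * p) :=
  glue_of_le_branchDepth (by have := length_revWord_le_branchDepth_mul a p; omega)

variable {i : ι} {u : CoprodI G}

lemma surjective_glue_of_forall_branchDepth_le (hy : IsProperColoring y)
    (h : ∀ a : G i, branchDepth p (of a * u) ≤ t) :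
    Function.Surjective fun a : G i => glue x y p t (of a * u) := by
  simpa only [glue_of_branchDepth_le (h _)] using hy i u

lemma surjective_glue_of_forall_le_branchDepth (hx : IsProperColoring x)
    (h : ∀ a : G i, t + 3 ≤ branchDepth p (of a * u)) :
    Function.Surjective fun a : G i => glue x y p t (of a * u) := by
  simpa only [glue_of_le_branchDepth (h _)] using hx i u

lemma surjective_glue_of_lt_branchDepth_lt (hu : (Word.equiv u).fstIdx ≠ some i) {c : G i}
    (hc : c ≠ 1) (h₁ : t < branchDepth p u) (h₁' : branchDepth p u < t + 3)
    (h₂ : t < branchDepth p (of c * u)) (h₂' : branchDepth p (of c * u) < t + 3) :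
    Function.Surjective fun a : G i => glue x y p t (of a * u) := by
  refine Bool.surjective_of_apply_ne (a := 1) (b := c) ?_
  simp only [map_one, one_mul]
  rw [glue_of_lt_branchDepth_lt h₁ h₁', glue_of_lt_branchDepth_lt h₂ h₂', revWord_of_mul hu hc,
    length_append, length_singleton, add_right_comm]
  simp [Nat.odd_add_one, ← Nat.not_even_iff_odd]

lemma surjective_glue_of_length_eq (hu : (Word.equiv u).fstIdx ≠ some i) {b : G i} (hb : b ≠ 1)
    (hpre : revWord u ++ [⟨i, b⟩] <+: revWord p) (ht : (revWord u).length = t) :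
    Function.Surjective fun a : G i => glue x y p t (of a * u) := by
  have hpre' : revWord u <+: revWord p := (prefix_append _ _).trans hpre
  have h₁ : branchDepth p u = t := (branchDepth_eq_length hpre').trans ht
  have h₂ : branchDepth p (of b * u) = t + 1 := by
    rw [branchDepth_of_mul p hu hb, if_pos hpre, ht]
  have hodd : Odd ((revWord (of b * u)).length + t) :=
    ⟨t, by rw [revWord_of_mul hu hb, length_append, length_singleton, ht]; ring⟩
  refine Bool.surjective_of_apply_ne (a := 1) (b := b) ?_
  simp only [map_one, one_mul]
  rw [glue_of_branchDepth_le h₁.le, glue_of_lt_branchDepth_lt (by omega) (by omega), ← ht,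
    pathPoint_length_eq hpre', ht]
  simp [hodd]

lemma surjective_glue_of_prefix (hx : IsProperColoring x) (hy : IsProperColoring y)
    (hG : ∀ i, 3 ≤ Cardinal.mk (G i)) (hu : (Word.equiv u).fstIdx ≠ some i) {b : G i} (hb : b ≠ 1)
    (hpre : revWord u ++ [⟨i, b⟩] <+: revWord p) :
    Function.Surjective fun a : G i => glue x y p t (of a * u) := by
  set m := (revWord u).length
  have hu_depth : branchDepth p u = m := branchDepth_eq_length ((prefix_append _ _).trans hpre)
  have hb_depth : branchDepth p (of b * u) = m + 1 := by
    rw [branchDepth_of_mul p hu hb, if_pos hpre]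
  have ha_depth : ∀ a, a ≠ b → branchDepth p (of a * u) = m := by
    intro a hab
    by_cases ha : a = 1
    · simpa [ha] using hu_depth
    · have hne : ¬ revWord u ++ [⟨i, a⟩] <+: revWord p := fun h =>
        hab (by simpa using eq_of_append_singleton_prefix h hpre)
      rw [branchDepth_of_mul p hu ha, if_neg hne, hu_depth]
  have hdepth_le : ∀ a, branchDepth p (of a * u) ≤ m + 1 := fun a => by
    by_cases hab : a = b
    · rw [hab, hb_depth]
    · rw [ha_depth a hab]; omega
  have hdepth_ge : ∀ a, m ≤ branchDepth p (of a * u) := fun a => by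
    by_cases hab : a = b
    · rw [hab, hb_depth]; omega
    · rw [ha_depth a hab]
  obtain ⟨c, hc1, hcb⟩ := Cardinal.exists_ne_ne_of_three_le (hG i) 1 b
  rcases (by omega : m + 1 ≤ t ∨ m = t ∨ (t < m ∧ m ≤ t + 1) ∨ m = t + 2 ∨ t + 3 ≤ m) with
    h | h | h | h | h
  · exact surjective_glue_of_forall_branchDepth_le hy fun a => (hdepth_le a).trans h
  · exact surjective_glue_of_length_eq hu hb hpre h
  · exact surjective_glue_of_lt_branchDepth_lt hu hb (by omega) (by omega) (by omega) (by omega)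
  -- `of b * u` is already coloured by `x`, so compare `u` with a third vertex `of c * u`
  · exact surjective_glue_of_lt_branchDepth_lt hu hc1 (by omega) (by omega)
      (by rw [ha_depth c hcb]; omega) (by rw [ha_depth c hcb]; omega)
  · exact surjective_glue_of_forall_le_branchDepth hx fun a => h.trans (hdepth_ge a)

lemma surjective_glue_of_forall_not_prefix (hx : IsProperColoring x) (hy : IsProperColoring y)
    (hG : ∀ i, 3 ≤ Cardinal.mk (G i)) (hu : (Word.equiv u).fstIdx ≠ some i)
    (h : ∀ a : G i, a ≠ 1 → ¬ revWord u ++ [⟨i, a⟩] <+: revWord p) :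
    Function.Surjective fun a : G i => glue x y p t (of a * u) := by
  have hdepth : ∀ a : G i, branchDepth p (of a * u) = branchDepth p u := by
    intro a
    by_cases ha : a = 1
    · simp [ha]
    · rw [branchDepth_of_mul p hu ha, if_neg (h a ha)]
  obtain ⟨c, hc1, -⟩ := Cardinal.exists_ne_ne_of_three_le (hG i) 1 1
  rcases (by omega : branchDepth p u ≤ t ∨ t + 3 ≤ branchDepth p u ∨
    (t < branchDepth p u ∧ branchDepth p u < t + 3)) with h | h | ⟨h, h'⟩
  · exact surjective_glue_of_forall_branchDepth_le hy fun a => (hdepth a).trans_le h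
  · exact surjective_glue_of_forall_le_branchDepth hx fun a => h.trans (hdepth a).ge
  · exact surjective_glue_of_lt_branchDepth_lt hu hc1 h h' (hdepth c ▸ h) (hdepth c ▸ h')

end Glue

theorem IsProperColoring.glue {x y : CoprodI G → Bool} (hx : IsProperColoring x)
    (hy : IsProperColoring y) (hG : ∀ i, 3 ≤ Cardinal.mk (G i)) (p : CoprodI G) (t : ℕ) :
    IsProperColoring (glue x y p t) := by
  refine isProperColoring_of_fstIdx_ne fun i u hu => ?_
  by_cases h : ∃ b : G i, b ≠ 1 ∧ revWord u ++ [⟨i, b⟩] <+: revWord p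
  · obtain ⟨b, hb, hpre⟩ := h
    exact surjective_glue_of_prefix hx hy hG hu hb hpre
  · push Not at h
    exact surjective_glue_of_forall_not_prefix hx hy hG hu h

end Monoid.CoprodI

open Monoid.CoprodI

section CyclicFactors

variable {d k : ℕ}

abbrev CyclicFreeProduct (d k : ℕ) := Monoid.CoprodI fun _ : Fin d => Multiplicative (ZMod k)

abbrev cyclicGen (i : Fin d) : CyclicFreeProduct d k :=
  of (M := fun _ : Fin d => Multiplicative (ZMod k)) (i := i) (Multiplicative.ofAdd 1)

lemma cyclicGen_pow (i : Fin d) (j : ℕ) :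
    cyclicGen i ^ j = of (M := fun _ : Fin d => Multiplicative (ZMod k)) (i := i)
      (Multiplicative.ofAdd (j : ZMod k)) := by
  rw [← map_pow, ← ofAdd_nsmul, nsmul_eq_mul, mul_one]

lemma exists_cyclicGen_pow_eq [NeZero k] (i : Fin d) (a : Multiplicative (ZMod k)) :
    ∃ j < k, cyclicGen i ^ j = of (M := fun _ : Fin d => Multiplicative (ZMod k)) (i := i) a :=
  ⟨a.toAdd.val, ZMod.val_lt _, by rw [cyclicGen_pow, ZMod.natCast_zmod_val, ofAdd_toAdd]⟩

lemma isProperColoring_inv_iff [NeZero k] (z : CyclicFreeProduct d k → Bool) :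
    (∀ (g : CyclicFreeProduct d k) (i : Fin d), ∃ j₁ j₂ : ℕ,
      z (g * cyclicGen i ^ j₁) = true ∧ z (g * cyclicGen i ^ j₂) = false) ↔
    IsProperColoring fun v => z v⁻¹ := by
  constructor
  · intro h i u
    obtain ⟨j₁, j₂, h₁, h₂⟩ := h u⁻¹ i
    refine Bool.surjective_of_apply_ne (a := (Multiplicative.ofAdd (j₁ : ZMod k))⁻¹)
      (b := (Multiplicative.ofAdd (j₂ : ZMod k))⁻¹) ?_
    simp_all [cyclicGen_pow]
  · intro h g i
    obtain ⟨a₁, h₁⟩ := h i g⁻¹ true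
    obtain ⟨a₂, h₂⟩ := h i g⁻¹ false
    obtain ⟨j₁, -, hj₁⟩ := exists_cyclicGen_pow_eq i a₁⁻¹
    obtain ⟨j₂, -, hj₂⟩ := exists_cyclicGen_pow_eq i a₂⁻¹
    exact ⟨j₁, j₂, by simpa [hj₁] using h₁, by simpa [hj₂] using h₂⟩

lemma exists_cyclicGen_list_prod_eq [NeZero k] (g : CyclicFreeProduct d k) :
    ∃ W : List (Fin d),
      (W.map cyclicGen).prod = g ∧ W.length ≤ (k - 1) * (revWord g⁻¹).length := by
  suffices h : ∀ L : List (Σ _ : Fin d, Multiplicative (ZMod k)), ∃ W : List (Fin d),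
      (W.map cyclicGen).prod =
        ((L.map fun l => of (M := fun _ : Fin d => Multiplicative (ZMod k)) (i := l.1) l.2).prod)⁻¹
      ∧ W.length ≤ (k - 1) * L.length by
    have := h (revWord g⁻¹).reverse
    rwa [prod_revWord_reverse, inv_inv, List.length_reverse] at this
  intro L
  induction L with
  | nil => exact ⟨[], by simp, by simp⟩
  | cons l L ih =>
    obtain ⟨W, hW, hlen⟩ := ih
    obtain ⟨j, hjk, hj⟩ := exists_cyclicGen_pow_eq l.1 l.2⁻¹
    refine ⟨W ++ List.replicate j l.1, ?_, ?_⟩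
    · simp [hW, hj, mul_inv_rev]
    · rw [List.length_append, List.length_replicate, List.length_cons, Nat.mul_succ]
      omega

lemma lt_length_revWord_inv [NeZero k] {g : CyclicFreeProduct d k} {N : ℕ}
    (hg : ∀ (m : ℕ) (w : Fin m → Fin d),
      (List.ofFn fun idx => cyclicGen (w idx)).prod = g → (k - 1) * N < m) :
    N < (revWord g⁻¹).length := by
  obtain ⟨W, hW, hlen⟩ := exists_cyclicGen_list_prod_eq g
  have := hg W.length (fun idx => W[(idx : ℕ)]) (by rw [List.ofFn_getElem_eq_map, hW])
  exact Nat.lt_of_mul_lt_mul_left (this.trans_le hlen)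

end CyclicFactors

theorem stmt18_general (d k : ℕ) (hk : 3 ≤ k) :
    let Γ := Monoid.CoprodI fun _ : Fin d => Multiplicative (ZMod k)
    let s : Fin d → Γ := fun i =>
      Monoid.CoprodI.of (M := fun _ : Fin d => Multiplicative (ZMod k)) (i := i)
        (Multiplicative.ofAdd (1 : ZMod k))
    let X : Set (Γ → Bool) := {x | ∀ g : Γ, ∀ i : Fin d,
      ∃ j₁ j₂ : ℕ, x (g * s i ^ j₁) = true ∧ x (g * s i ^ j₂) = false}
    ∀ A B : Set (Γ → Bool), IsOpen A → IsOpen B →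
      (A ∩ X).Nonempty → (B ∩ X).Nonempty →
      ∃ N : ℕ, ∀ g : Γ,
        (∀ (m : ℕ) (w : Fin m → Fin d),
          (List.ofFn fun idx : Fin m => s (w idx)).prod = g → N < m) →
        (((fun x : Γ → Bool => fun h : Γ => x (g⁻¹ * h)) '' (A ∩ X))
            ∩ (B ∩ X)).Nonempty := by
  intro Γ s X A B hA hB ⟨x, hxA, hxX⟩ ⟨y, hyB, hyX⟩
  have : NeZero k := ⟨by omega⟩
  have hG : ∀ _ : Fin d, 3 ≤ Cardinal.mk (Multiplicative (ZMod k)) := fun _ => by simpa using hk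
  obtain ⟨Rx, hRx⟩ := hA.exists_radius_of_mem hxA fun a : Γ => (revWord a⁻¹).length
  obtain ⟨Ry, hRy⟩ := hB.exists_radius_of_mem hyB fun a : Γ => (revWord a⁻¹).length
  set R := max Rx Ry
  refine ⟨(k - 1) * (2 * R + 3), fun g hg => ?_⟩
  have hlen : 2 * R + 3 < (revWord g⁻¹).length := lt_length_revWord_inv hg
  have hxP := (isProperColoring_inv_iff x).1 hxX
  have hyP := (isProperColoring_inv_iff y).1 hyX
  set w := glue (fun v => x (v * g)⁻¹) (fun v => y v⁻¹) g⁻¹ R with hw_def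
  have hw : IsProperColoring w := (hxP.comp_mul_right g).glue hyP hG g⁻¹ R
  refine ⟨fun h => w h⁻¹, ⟨fun h => w (g * h)⁻¹, ⟨?_, ?_⟩, ?_⟩, ?_, ?_⟩
  · refine hRx _ fun a ha => ?_
    rw [mul_inv_rev, hw_def, glue_mul_of_length_add_le (by omega), inv_mul_cancel_right, inv_inv]
  · exact (isProperColoring_inv_iff fun h => w (g * h)⁻¹).2
      (by simpa [mul_inv_rev] using hw.comp_mul_right g⁻¹)
  · funext h
    simp
  · refine hRy _ fun a ha => ?_
    rw [hw_def, glue_of_length_le (by omega), inv_inv]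
  · exact (isProperColoring_inv_iff fun h => w h⁻¹).2 (by simpa using hw)

/-- Topological mixing of the shift action of `Γ = (ℤ/kℤ)^{*d}` (free product of `d`
copies of `ℤ/kℤ`) on the space `X` of proper 2-colorings of its Cayley hyper-tree:
for any open `A, B` meeting `X` there is `N` such that whenever every expression of
`g` as a product of the generators `s i` has length `> N` (i.e. `|g| > N`),
`gA ∩ B ≠ ∅` within `X`. -/
theorem stmt18 (d k : ℕ) (hd : 2 ≤ d) (hk : 3 ≤ k) :
    let Γ := Monoid.CoprodI fun _ : Fin d => Multiplicative (ZMod k)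
    let s : Fin d → Γ := fun i =>
      Monoid.CoprodI.of (M := fun _ : Fin d => Multiplicative (ZMod k)) (i := i)
        (Multiplicative.ofAdd (1 : ZMod k))
    let X : Set (Γ → Bool) := {x | ∀ g : Γ, ∀ i : Fin d,
      ∃ j₁ j₂ : ℕ, x (g * s i ^ j₁) = true ∧ x (g * s i ^ j₂) = false}
    ∀ A B : Set (Γ → Bool), IsOpen A → IsOpen B →
      (A ∩ X).Nonempty → (B ∩ X).Nonempty →
      ∃ N : ℕ, ∀ g : Γ,
        (∀ (m : ℕ) (w : Fin m → Fin d),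
          (List.ofFn fun idx : Fin m => s (w idx)).prod = g → N < m) →
        (((fun x : Γ → Bool => fun h : Γ => x (g⁻¹ * h)) '' (A ∩ X))
            ∩ (B ∩ X)).Nonempty :=
  stmt18_general d k hk
end
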